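/- arXiv:1507.02015 — 8 statements merged into one kernel-verified Lean document; each statement's English description precedes it below -/
import Mathlib

section
/- On ℝ_d[X] define the symmetric bilinear form ⟨g,f⟩ = Σ_{k=0}^d f_k g_{d−k} / C(d,k), where f_k and g_k denote the coefficients of x^k in f and g and C(d,k) is the binomial coefficient. Then for every g ∈ ℝ_d[X], every a ∈ ℝ and every 0 ≤ k ≤ d, one has g^{(k)}(a) = (d!/(d−k)!) · ⟨g, (x+a)^{d−k}⟩. In particular, ⟨g,(x+a)^d⟩ = g(a), and the orthogonal of (x+a)^{d−k} with respect to this form is {g ∈ ℝ_d[X] : g^{(k)}(a) = 0}. -/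
open Polynomial Finset

lemma nat_id (d k n : ℕ) (hk : k ≤ d) (hn : n ≤ d - k) :
    ((n + k).descFactorial k : ℝ) * (d.choose (n + k)) * ((d - k).factorial)
      = (d.factorial) * ((d - k).choose n) := by
  have h1 : n + k ≤ d := by omega
  have h2 : d - (n + k) = d - k - n := by omega
  rw [Nat.descFactorial_eq_factorial_mul_choose]
  push_cast
  rw [Nat.cast_choose ℝ h1, Nat.cast_choose ℝ hn, Nat.cast_choose ℝ (le_add_self : k ≤ n + k), h2, Nat.add_sub_cancel]
  have f0 : ∀ m : ℕ, (m.factorial : ℝ) ≠ 0 := fun m => by positivity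
  field_simp

lemma aux (d k : ℕ) (hk : k ≤ d) (a : ℝ) (g : Polynomial ℝ) (hg : g.natDegree ≤ d) :
    Polynomial.eval a (Polynomial.derivative^[k] g)
      = ((d.factorial : ℝ) / ((d - k).factorial : ℝ)) *
          ∑ j ∈ Finset.range (d + 1),
            ((Polynomial.X + Polynomial.C a) ^ (d - k)).coeff j * g.coeff (d - j)
              / (d.choose j) := by
  set m := d - k with hm
  have hdd : (derivative^[k] g).natDegree < d + 1 := by
    have := natDegree_iterate_derivative g k; omega
  rw [eval_eq_sum_range' hdd]
  have hL : ∑ n ∈ range (d + 1), (derivative^[k] g).coeff n * a ^ n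
      = ∑ n ∈ range (m + 1), (derivative^[k] g).coeff n * a ^ n := by
    refine (Finset.sum_subset (by intro x hx; simp at hx ⊢; omega) ?_).symm
    intro n hn hn'
    simp only [mem_range] at hn hn'
    have : g.coeff (n + k) = 0 := coeff_eq_zero_of_natDegree_lt (by omega)
    rw [coeff_iterate_derivative, this, smul_zero, zero_mul]
  have hR : ∑ j ∈ range (d + 1),
        ((X + C a) ^ m).coeff j * g.coeff (d - j) / (d.choose j)
      = ∑ j ∈ range (m + 1),
        ((X + C a) ^ m).coeff j * g.coeff (d - j) / (d.choose j) := by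
    refine (Finset.sum_subset (by intro x hx; simp at hx ⊢; omega) ?_).symm
    intro j hj hj'
    simp only [mem_range] at hj hj'
    rw [coeff_X_add_C_pow, Nat.choose_eq_zero_of_lt (by omega)]
    simp
  rw [hL, hR, Finset.mul_sum]
  refine Eq.trans ?_ (Finset.sum_range_reflect (fun j => (d.factorial : ℝ) / (m.factorial) *
    (((X + C a) ^ m).coeff j * g.coeff (d - j) / (d.choose j))) (m + 1))
  refine Finset.sum_congr rfl ?_
  intro n hn
  simp only [mem_range] at hn
  have hn' : n ≤ m := by omega
  have h1 : n + k ≤ d := by omega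
  have e1 : m + 1 - 1 - n = m - n := by omega
  simp only [e1, coeff_iterate_derivative, coeff_X_add_C_pow]
  have e2 : m - (m - n) = n := by omega
  have e3 : d - (m - n) = n + k := by omega
  have e4 : m - n = d - (n + k) := by omega
  rw [e2, e3, Nat.choose_symm hn', e4, Nat.choose_symm h1, nsmul_eq_mul]
  have hC : (d.choose (n + k) : ℝ) ≠ 0 := by
    exact_mod_cast (Nat.choose_pos h1).ne'
  have hM : ((m.factorial : ℝ)) ≠ 0 := by positivity
  have key := nat_id d k n hk hn'
  rw [← hm] at key
  field_simp
  linear_combination (g.coeff (n + k) * a ^ n) * key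

/-- **Lemma (the bilinear form and derivatives).**
On `ℝ_d[X]` define `⟨g, f⟩ = ∑_{k=0}^d f_k g_{d-k} / C(d,k)`.  Then for every
`g ∈ ℝ_d[X]`, every `a ∈ ℝ` and every `0 ≤ k ≤ d` one has
`g^(k)(a) = (d! / (d-k)!) * ⟨g, (x+a)^(d-k)⟩`.  In particular
`⟨g, (x+a)^d⟩ = g(a)`, and `⟨g, (x+a)^(d-k)⟩ = 0` iff `g^(k)(a) = 0`
(i.e. the orthogonal of `(x+a)^(d-k)` is `{g ∈ ℝ_d[X] : g^(k)(a) = 0}`). -/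
theorem bilinear_form_derivative (d : ℕ)
    (B : Polynomial ℝ → Polynomial ℝ → ℝ)
    (hB : ∀ g f : Polynomial ℝ,
      B g f = ∑ k ∈ Finset.range (d + 1), f.coeff k * g.coeff (d - k) / (d.choose k)) :
    ∀ g ∈ Polynomial.degreeLT ℝ (d + 1), ∀ a : ℝ, ∀ k ≤ d,
      Polynomial.eval a (Polynomial.derivative^[k] g)
          = ((d.factorial : ℝ) / ((d - k).factorial : ℝ)) *
              B g ((Polynomial.X + Polynomial.C a) ^ (d - k))
      ∧ B g ((Polynomial.X + Polynomial.C a) ^ d) = Polynomial.eval a g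
      ∧ (B g ((Polynomial.X + Polynomial.C a) ^ (d - k)) = 0 ↔
          Polynomial.eval a (Polynomial.derivative^[k] g) = 0) := by
  intro g hg a k hk
  have hdeg : g.natDegree ≤ d := by
    by_cases h0 : g = 0
    · simp [h0]
    · have := mem_degreeLT.mp hg
      rw [← natDegree_lt_iff_degree_lt h0] at this
      omega
  have key : ∀ k ≤ d, Polynomial.eval a (Polynomial.derivative^[k] g)
      = ((d.factorial : ℝ) / ((d - k).factorial : ℝ)) *
          B g ((Polynomial.X + Polynomial.C a) ^ (d - k)) := by
    intro k hk
    rw [hB]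
    exact aux d k hk a g hdeg
  have h1 := key k hk
  refine ⟨h1, ?_, ?_⟩
  · have h0 := key 0 (Nat.zero_le d)
    simp only [Function.iterate_zero, id_eq, Nat.sub_zero, div_self
      (by positivity : (d.factorial : ℝ) ≠ 0), one_mul] at h0
    exact h0.symm
  · have hc : ((d.factorial : ℝ) / ((d - k).factorial : ℝ)) ≠ 0 := by positivity
    constructor
    · intro h; rw [h1, h, mul_zero]
    · intro h; rw [h1] at h
      exact (mul_eq_zero.mp h).resolve_left hc
end

section
/- (Atkinson–Sharma) Let E be an m × (d+1) interpolation matrix with |E| = d+1. If E satisfies the Pólya condition and contains no odd supported sequence, then E is order regular. -/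
/-- `E` is an interpolation matrix of size `m × (d+1)`: it is identified with
the finite set of positions `(i, k)` of its 1-entries, where `i < m` indexes
the rows and `k ≤ d` the columns. -/
def IsInterpolationMatrix (m d : ℕ) (E : Finset (ℕ × ℕ)) : Prop :=
  ∀ p ∈ E, p.1 < m ∧ p.2 ≤ d

/-- The pair `(E, X)` (with `X` given by the knots `x 0, …, x (m-1)`) is
regular: the linear map `ℝ_d[X] → ℝ^{|E|}`, `g ↦ (g^(k)(x i))_{(i,k) ∈ E}`,
is surjective; i.e. every Birkhoff interpolation problem
`g^(k)(x i) = c (i,k)`, `(i,k) ∈ E`, has a solution `g` of degree at most `d`. -/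
def RegularPair (d : ℕ) (E : Finset (ℕ × ℕ)) (x : ℕ → ℝ) : Prop :=
  ∀ c : ℕ × ℕ → ℝ, ∃ g : Polynomial ℝ, g ∈ Polynomial.degreeLT ℝ (d + 1) ∧
    ∀ p ∈ E, Polynomial.eval (x p.1) (Polynomial.derivative^[p.2] g) = c p

/-- The interpolation matrix `E` is regular: `(E, X)` is regular for every
choice of `m` distinct knots. -/
def RegularMatrix (m d : ℕ) (E : Finset (ℕ × ℕ)) : Prop :=
  ∀ x : ℕ → ℝ, Set.InjOn x (Set.Iio m) → RegularPair d E x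

/-- The interpolation matrix `E` is order regular: `(E, X)` is regular for
every choice of ordered knots `x 0 < x 1 < ⋯ < x (m-1)`. -/
def OrderRegularMatrix (m d : ℕ) (E : Finset (ℕ × ℕ)) : Prop :=
  ∀ x : ℕ → ℝ, StrictMonoOn x (Set.Iio m) → RegularPair d E x

/-- `E` satisfies the Pólya condition: for `r = 1, …, d+1` there are at least
`r` 1-entries in the first `r` columns (columns `0, …, r-1`) of `E`. -/
def PolyaCondition (d : ℕ) (E : Finset (ℕ × ℕ)) : Prop :=
  ∀ r, 1 ≤ r → r ≤ d + 1 → r ≤ (E.filter (fun p => p.2 < r)).card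

/-- `(i, k), (i, k+1), …, (i, k+t-1)` is a sequence of row `i` of the
`m × (d+1)` interpolation matrix `E`: a maximal run of `t` consecutive
1-entries in row `i` starting in column `k`. -/
def IsSequence (d : ℕ) (E : Finset (ℕ × ℕ)) (i k t : ℕ) : Prop :=
  1 ≤ t ∧ (∀ j < t, (i, k + j) ∈ E) ∧ (k = 0 ∨ (i, k - 1) ∉ E) ∧
    (k + t = d + 1 ∨ (i, k + t) ∉ E)

/-- A sequence whose first element is `(i, k)` is supported if `E` contains
1-entries in positions `(i₁, k₁)` and `(i₂, k₂)` with `i₁ < i < i₂`,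
`k₁ < k` and `k₂ < k`. -/
def SupportedAt (E : Finset (ℕ × ℕ)) (i k : ℕ) : Prop :=
  ∃ p₁ ∈ E, ∃ p₂ ∈ E, p₁.1 < i ∧ i < p₂.1 ∧ p₁.2 < k ∧ p₂.2 < k

open Polynomial

namespace AS

variable (E : Finset (ℕ × ℕ))

lemma iter_facts (g : ℝ[X]) (hg : g ≠ 0) :
    ∀ k ≤ g.natDegree, derivative^[k] g ≠ 0 ∧ (derivative^[k] g).natDegree = g.natDegree - k := by
  intro k
  induction k with
  | zero => simp [hg]
  | succ k ih =>
    intro hk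
    obtain ⟨h1, h2⟩ := ih (by omega)
    have hpos : 0 < (derivative^[k] g).natDegree := by omega
    have hd := degree_derivative_eq _ hpos
    rw [Function.iterate_succ_apply']
    constructor
    · intro h; rw [h, degree_zero] at hd; exact absurd hd (by simp)
    · have : (derivative (derivative^[k] g)).natDegree = (derivative^[k] g).natDegree - 1 :=
        natDegree_eq_of_degree_eq_some (by rw [hd])
      omega

lemma ord_ge (f : ℝ[X]) (hf : f ≠ 0) (a : ℝ) (t : ℕ)
    (h : ∀ j < t, (derivative^[j] f).eval a = 0) : t ≤ rootMultiplicity a f := by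
  cases t with
  | zero => exact Nat.zero_le _
  | succ s =>
    exact lt_rootMultiplicity_of_isRoot_iterate_derivative hf
      (fun m hm => h m (by omega))
lemma odd_root_between : ∀ (N : ℕ) (p : ℝ[X]), p.natDegree ≤ N → ∀ (u v : ℝ), u < v →
    p.eval u * p.eval v < 0 → ∃ z, u < z ∧ z < v ∧ Odd (rootMultiplicity z p) := by
  intro N
  induction N with
  | zero =>
    intro p hp u v huv hsign
    exfalso
    obtain ⟨a, rfl⟩ := natDegree_eq_zero.mp (Nat.le_zero.mp hp)
    simp only [eval_C] at hsign; nlinarith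
  | succ N ih =>
    intro p hp u v huv hsign
    have hp0 : p ≠ 0 := by rintro rfl; simp at hsign
    have hu0 : p.eval u ≠ 0 := by intro h; rw [h] at hsign; simp at hsign
    have hv0 : p.eval v ≠ 0 := by intro h; rw [h] at hsign; simp at hsign
    -- find a root in the open interval
    have hcont : ContinuousOn (fun t => p.eval t) (Set.Icc u v) := (p.continuous_aeval).continuousOn
    have hroot : ∃ z₀ ∈ Set.Ioo u v, p.eval z₀ = 0 := by
      rcases lt_or_gt_of_ne hu0 with hu | hu
      · have hv : 0 < p.eval v := by nlinarith
        have := intermediate_value_Ioo huv.le hcont (a := u) (b := v)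
        have h0 : (0:ℝ) ∈ Set.Ioo (p.eval u) (p.eval v) := ⟨hu, hv⟩
        obtain ⟨z₀, hz₀, hz⟩ := this h0
        exact ⟨z₀, hz₀, hz⟩
      · have hv : p.eval v < 0 := by nlinarith
        have := intermediate_value_Ioo' huv.le hcont (a := u) (b := v)
        have h0 : (0:ℝ) ∈ Set.Ioo (p.eval v) (p.eval u) := ⟨hv, hu⟩
        obtain ⟨z₀, hz₀, hz⟩ := this h0
        exact ⟨z₀, hz₀, hz⟩
    obtain ⟨z₀, hz₀, hz⟩ := hroot
    set e := rootMultiplicity z₀ p with he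
    have hepos : 0 < e := (rootMultiplicity_pos hp0).mpr hz
    by_cases hodd : Odd e
    · exact ⟨z₀, hz₀.1, hz₀.2, hodd⟩
    · have heven : Even e := Nat.not_odd_iff_even.mp hodd
      set q := p /ₘ (X - C z₀) ^ e with hq
      have hfac : (X - C z₀) ^ e * q = p := p.pow_mul_divByMonic_rootMultiplicity_eq z₀
      have hqz : q.eval z₀ ≠ 0 := eval_divByMonic_pow_rootMultiplicity_ne_zero z₀ hp0
      have hq0 : q ≠ 0 := fun h => hqz (by rw [h]; simp)
      have hqu : p.eval u = (u - z₀) ^ e * q.eval u := by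
        rw [← hfac]; simp [eval_pow]
      have hqv : p.eval v = (v - z₀) ^ e * q.eval v := by
        rw [← hfac]; simp [eval_pow]
      have hupos : (0:ℝ) < (u - z₀) ^ e := heven.pow_pos (by intro h; nlinarith [hz₀.1])
      have hvpos : (0:ℝ) < (v - z₀) ^ e := heven.pow_pos (by intro h; nlinarith [hz₀.2])
      have hsign' : q.eval u * q.eval v < 0 := by
        rw [hqu, hqv] at hsign
        by_contra hcon
        push_neg at hcon
        nlinarith [mul_nonneg (mul_pos hupos hvpos).le hcon]
      have hdeg : q.natDegree ≤ N := by
        have := natDegree_mul (p := (X - C z₀) ^ e) (q := q) (pow_ne_zero _ (X_sub_C_ne_zero z₀)) hq0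
        rw [hfac] at this
        have hXe : ((X - C z₀) ^ e).natDegree = e := by
          simp [natDegree_pow]
        omega
      obtain ⟨z, hz1, hz2, hzodd⟩ := ih q hdeg u v huv hsign'
      refine ⟨z, hz1, hz2, ?_⟩
      have hzq : q.eval z = 0 := by
        have := hzodd.pos
        exact (rootMultiplicity_pos hq0).mp (by omega)
      have hzne : z ≠ z₀ := fun h => hqz (h ▸ hzq)
      have hmul : rootMultiplicity z ((X - C z₀) ^ e * q)
          = rootMultiplicity z ((X - C z₀) ^ e) + rootMultiplicity z q :=
        rootMultiplicity_mul (by rw [hfac]; exact hp0)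
      have h0 : rootMultiplicity z ((X - C z₀) ^ e) = 0 := by
        apply rootMultiplicity_eq_zero
        simp [IsRoot, eval_pow, sub_eq_zero, hzne]
      rw [← hfac, hmul, h0, zero_add]
      exact hzodd

lemma odd_root_betweenI (p : ℝ[X]) (u v : ℝ) (huv : u < v)
    (hsign : p.eval u * p.eval v < 0) : ∃ z, u < z ∧ z < v ∧ Odd (rootMultiplicity z p) :=
  odd_root_between p.natDegree p le_rfl u v huv hsign

lemma poly_deriv_both_signs (f : ℝ[X]) (hf : f ≠ 0) {a b : ℝ} (hab : a < b)
    (ha : f.eval a = 0) (hb : f.eval b = 0) :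
    (∃ u, u ∈ Set.Ioo a b ∧ 0 < (derivative f).eval u) ∧
      (∃ v, v ∈ Set.Ioo a b ∧ (derivative f).eval v < 0) := by
  have hcont : ContinuousOn (fun t => f.eval t) (Set.Icc a b) := (f.continuous_aeval).continuousOn
  have hdiff : DifferentiableOn ℝ (fun t => f.eval t) (interior (Set.Icc a b)) :=
    (f.differentiable_aeval).differentiableOn
  have hderiv : ∀ t, deriv (fun s => f.eval s) t = (derivative f).eval t := fun t =>
    Polynomial.deriv f
  have hinf : ¬ (∀ t ∈ Set.Ioo a b, f.eval t = 0) := by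
    intro hall
    apply hf
    apply f.eq_zero_of_infinite_isRoot
    apply Set.Infinite.mono (s := Set.Ioo a b)
    · intro t ht; exact hall t ht
    · exact Set.Ioo_infinite hab
  constructor
  · by_contra hno
    push_neg at hno
    have hanti : AntitoneOn (fun t => f.eval t) (Set.Icc a b) := by
      apply antitoneOn_of_deriv_nonpos (convex_Icc a b) hcont hdiff
      intro t ht
      rw [interior_Icc] at ht
      rw [hderiv]
      exact hno t ht
    apply hinf
    intro t ht
    have h1 : f.eval t ≤ f.eval a :=
      hanti ⟨le_rfl, hab.le⟩ ⟨ht.1.le, ht.2.le⟩ ht.1.le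
    have h2 : f.eval b ≤ f.eval t :=
      hanti ⟨ht.1.le, ht.2.le⟩ ⟨hab.le, le_rfl⟩ ht.2.le
    rw [ha] at h1; rw [hb] at h2; linarith
  · by_contra hno
    push_neg at hno
    have hmono : MonotoneOn (fun t => f.eval t) (Set.Icc a b) := by
      apply monotoneOn_of_deriv_nonneg (convex_Icc a b) hcont hdiff
      intro t ht
      rw [interior_Icc] at ht
      rw [hderiv]
      exact hno t ht
    apply hinf
    intro t ht
    have h1 : f.eval a ≤ f.eval t :=
      hmono ⟨le_rfl, hab.le⟩ ⟨ht.1.le, ht.2.le⟩ ht.1.le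
    have h2 : f.eval t ≤ f.eval b :=
      hmono ⟨ht.1.le, ht.2.le⟩ ⟨hab.le, le_rfl⟩ ht.2.le
    rw [ha] at h1; rw [hb] at h2; linarith

lemma sign_change (f : ℝ[X]) (hf : f ≠ 0) {a b : ℝ} (hab : a < b)
    (ha : f.eval a = 0) (hb : f.eval b = 0) :
    ∃ z, a < z ∧ z < b ∧ Odd (rootMultiplicity z (derivative f)) := by
  obtain ⟨⟨u, hu, hupos⟩, ⟨v, hv, hvneg⟩⟩ := poly_deriv_both_signs f hf hab ha hb
  have huv : u ≠ v := by intro h; rw [h] at hupos; linarith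
  rcases lt_or_gt_of_ne huv with h | h
  · obtain ⟨z, h1, h2, h3⟩ := odd_root_betweenI (derivative f) u v h (by nlinarith)
    exact ⟨z, lt_trans hu.1 h1, lt_trans h2 hv.2, h3⟩
  · obtain ⟨z, h1, h2, h3⟩ := odd_root_betweenI (derivative f) v u h (by nlinarith)
    exact ⟨z, lt_trans hv.1 h1, lt_trans h2 hu.2, h3⟩

lemma rolle_count (f : ℝ[X]) (hf : f ≠ 0) (P : Finset ℝ) :
    ∀ (c : ℝ → ℕ), (∀ p ∈ P, 1 ≤ c p ∧ c p ≤ rootMultiplicity p f) →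
    ∃ (Q : Finset ℝ) (c' : ℝ → ℕ),
      (∀ q ∈ Q, 1 ≤ c' q ∧ c' q ≤ rootMultiplicity q (derivative f)) ∧
      (∀ q ∈ Q, (q ∈ P ∧ c' q + 1 = c q) ∨
        (c' q = 1 ∧ Odd (rootMultiplicity q (derivative f)) ∧
          ∃ a ∈ P, ∃ b ∈ P, a < q ∧ q < b)) ∧
      ∑ p ∈ P, c p ≤ (∑ q ∈ Q, c' q) + 1 := by
  classical
  induction P using Finset.strongInductionOn with
  | _ P IH =>
  intro c hc
  rcases P.eq_empty_or_nonempty with rfl | hne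
  · exact ⟨∅, fun _ => 0, by simp, by simp, by simp⟩
  set b := P.max' hne with hbdef
  have hbP : b ∈ P := P.max'_mem hne
  have hrootb : f.eval b = 0 :=
    (rootMultiplicity_pos hf).mp (lt_of_lt_of_le (hc b hbP).1 (hc b hbP).2)
  have hcb : 1 ≤ c b := (hc b hbP).1
  have hordb : c b - 1 ≤ rootMultiplicity b (derivative f) := by
    rw [derivative_rootMultiplicity_of_root hrootb]
    exact Nat.sub_le_sub_right (hc b hbP).2 1
  rcases (P.erase b).eq_empty_or_nonempty with h0 | hne0
  · -- singleton
    have hPsing : P = {b} := by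
      apply Finset.eq_singleton_iff_unique_mem.mpr
      refine ⟨hbP, fun y hy => ?_⟩
      by_contra hyb
      exact (Finset.ne_empty_of_mem (Finset.mem_erase.mpr ⟨hyb, hy⟩)) h0
    have hsumP : ∑ p ∈ P, c p = c b := by rw [hPsing]; simp
    by_cases h2 : 2 ≤ c b
    · refine ⟨{b}, fun _ => c b - 1, ?_, ?_, ?_⟩
      · intro q hq; rw [Finset.mem_singleton] at hq; subst hq
        refine ⟨?_, ?_⟩
        · show 1 ≤ c b - 1; omega
        · show c b - 1 ≤ _; exact hordb
      · intro q hq; rw [Finset.mem_singleton] at hq; subst hq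
        refine Or.inl ⟨hbP, ?_⟩
        show c b - 1 + 1 = c b; omega
      · rw [hsumP]; simp; omega
    · refine ⟨∅, fun _ => 0, by simp, by simp, ?_⟩
      rw [hsumP]; simp; omega
  · -- at least two points
    set P₀ := P.erase b with hP0def
    set a := P₀.max' hne0 with hadef
    have haP₀ : a ∈ P₀ := P₀.max'_mem hne0
    have haP : a ∈ P := Finset.mem_of_mem_erase haP₀
    have hab : a < b := by
      have h1 : a ≤ b := P.le_max' a haP
      have h2 : a ≠ b := (Finset.mem_erase.mp haP₀).1
      exact lt_of_le_of_ne h1 h2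
    have hroota : f.eval a = 0 :=
      (rootMultiplicity_pos hf).mp (lt_of_lt_of_le (hc a haP).1 (hc a haP).2)
    obtain ⟨z, hz1, hz2, hzodd⟩ := sign_change f hf hab hroota hrootb
    have hP₀sub : P₀ ⊂ P := Finset.erase_ssubset hbP
    obtain ⟨Q₀, c₀, hQ₀1, hQ₀2, hQ₀3⟩ := IH P₀ hP₀sub c
      (fun p hp => hc p (Finset.mem_of_mem_erase hp))
    have hQ₀le : ∀ q ∈ Q₀, q ≤ a := by
      intro q hq
      rcases hQ₀2 q hq with ⟨hqP₀, _⟩ | ⟨_, _, a', _, b', hb', _, hqb'⟩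
      · exact P₀.le_max' q hqP₀
      · exact le_trans hqb'.le (P₀.le_max' b' hb')
    have hzQ₀ : z ∉ Q₀ := fun h => absurd (hQ₀le z h) (by linarith)
    have hbQ₀ : b ∉ Q₀ := fun h => absurd (hQ₀le b h) (by linarith)
    have hbz : b ≠ z := fun h => by rw [h] at hz2; linarith
    set c' : ℝ → ℕ := fun q => if q = b then c b - 1 else if q = z then 1 else c₀ q with hc'def
    have hc'Q₀ : ∀ q ∈ Q₀, c' q = c₀ q := by
      intro q hq
      have h1 : q ≠ b := fun h => hbQ₀ (h ▸ hq)
      have h2 : q ≠ z := fun h => hzQ₀ (h ▸ hq)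
      simp [hc'def, h1, h2]
    have hzb : z ≠ b := fun h => hbz h.symm
    have hzc : c' z = 1 := by simp [hc'def, hzb]
    have hz_cond : 1 ≤ c' z ∧ c' z ≤ rootMultiplicity z (derivative f) := by
      rw [hzc]
      exact ⟨le_refl 1, hzodd.pos⟩
    have main_cond : ∀ (Q : Finset ℝ), Q = insert z Q₀ ∨ Q = insert b (insert z Q₀) →
        (∀ q ∈ Q₀, (q ∈ P ∧ c' q + 1 = c q) ∨
        (c' q = 1 ∧ Odd (rootMultiplicity q (derivative f)) ∧
          ∃ a' ∈ P, ∃ b' ∈ P, a' < q ∧ q < b')) := by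
      intro _ _ q hq
      rw [hc'Q₀ q hq]
      rcases hQ₀2 q hq with ⟨h1, h2⟩ | ⟨h1, h2, a', ha', b', hb', h3, h4⟩
      · exact Or.inl ⟨Finset.mem_of_mem_erase h1, h2⟩
      · exact Or.inr ⟨h1, h2, a', Finset.mem_of_mem_erase ha', b',
          Finset.mem_of_mem_erase hb', h3, h4⟩
    have hsum₀ : ∑ p ∈ P, c p = (∑ p ∈ P₀, c p) + c b := (Finset.sum_erase_add P c hbP).symm
    have hsumz : ∑ q ∈ insert z Q₀, c' q = 1 + ∑ q ∈ Q₀, c₀ q := by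
      rw [Finset.sum_insert hzQ₀, hzc, Finset.sum_congr rfl hc'Q₀]
    by_cases h2 : 2 ≤ c b
    · refine ⟨insert b (insert z Q₀), c', ?_, ?_, ?_⟩
      · intro q hq
        rcases Finset.mem_insert.mp hq with rfl | hq
        · constructor
          · simp [hc'def]; omega
          · simpa [hc'def] using hordb
        rcases Finset.mem_insert.mp hq with rfl | hq
        · exact hz_cond
        · rw [hc'Q₀ q hq]; exact hQ₀1 q hq
      · intro q hq
        rcases Finset.mem_insert.mp hq with rfl | hq
        · refine Or.inl ⟨hbP, ?_⟩
          simp [hc'def]; omega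
        rcases Finset.mem_insert.mp hq with rfl | hq
        · exact Or.inr ⟨hzc, hzodd, a, haP, b, hbP, hz1, hz2⟩
        · exact main_cond _ (Or.inl rfl) q hq
      · have hbnotin : b ∉ insert z Q₀ := by
          rw [Finset.mem_insert]; push_neg; exact ⟨hbz, hbQ₀⟩
        rw [Finset.sum_insert hbnotin, hsumz]
        have hcb' : c' b = c b - 1 := by simp [hc'def]
        rw [hcb', hsum₀]
        omega
    · refine ⟨insert z Q₀, c', ?_, ?_, ?_⟩
      · intro q hq
        rcases Finset.mem_insert.mp hq with rfl | hq
        · exact hz_cond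
        · rw [hc'Q₀ q hq]; exact hQ₀1 q hq
      · intro q hq
        rcases Finset.mem_insert.mp hq with rfl | hq
        · exact Or.inr ⟨hzc, hzodd, a, haP, b, hbP, hz1, hz2⟩
        · exact main_cond _ (Or.inl rfl) q hq
      · rw [hsumz, hsum₀]
        omega

/-- length of the run of 1-entries in row `i` starting at column `k`. -/
def tail (i k : ℕ) : ℕ :=
  Nat.find (p := fun t => (i, k + t) ∉ E) ⟨E.sup Prod.snd + 1, fun h => by
    have h2 : k + (E.sup Prod.snd + 1) ≤ E.sup Prod.snd := Finset.le_sup (f := Prod.snd) h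
    omega⟩

lemma tail_mem {i k j : ℕ} (h : j < tail E i k) : (i, k + j) ∈ E := by
  have := Nat.find_min (p := fun t => (i, k + t) ∉ E) _ h
  simpa using this

lemma tail_not_mem (i k : ℕ) : (i, k + tail E i k) ∉ E :=
  Nat.find_spec (p := fun t => (i, k + t) ∉ E) _

lemma tail_pos {i k : ℕ} (h : (i, k) ∈ E) : 1 ≤ tail E i k := by
  rcases Nat.eq_zero_or_pos (tail E i k) with h0 | h0
  · exfalso; have := tail_not_mem E i k; rw [h0] at this; simp at this; exact this h
  · exact h0

lemma tail_eq_zero {i k : ℕ} (h : (i, k) ∉ E) : tail E i k = 0 := by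
  by_contra h0
  exact h (by simpa using tail_mem E (Nat.pos_of_ne_zero h0))

lemma tail_succ {i k : ℕ} (h : (i, k) ∈ E) : tail E i k = tail E i (k + 1) + 1 := by
  have h1 : 1 ≤ tail E i k := tail_pos E h
  apply le_antisymm
  · apply Nat.find_le
    show (i, k + (tail E i (k+1) + 1)) ∉ E
    have := tail_not_mem E i (k+1)
    have heq : k + (tail E i (k+1) + 1) = (k+1) + tail E i (k+1) := by ring
    rw [heq]; exact this
  · have h2 : tail E i (k+1) ≤ tail E i k - 1 := by
      apply Nat.find_le
      show (i, (k+1) + (tail E i k - 1)) ∉ E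
      have heq : (k+1) + (tail E i k - 1) = k + tail E i k := by omega
      rw [heq]; exact tail_not_mem E i k
    omega

/-- number of 1-entries in row `i` among columns `0,…,k-1`. -/
def rc (i k : ℕ) : ℕ := ((Finset.range k).filter (fun j => (i, j) ∈ E)).card

lemma rc_succ (i k : ℕ) : rc E i (k + 1) = rc E i k + (if (i, k) ∈ E then 1 else 0) := by
  unfold rc
  rw [Finset.range_add_one, Finset.filter_insert]
  by_cases h : (i, k) ∈ E
  · rw [if_pos h, if_pos h, Finset.card_insert_of_notMem (by simp)]
  · rw [if_neg h, if_neg h, add_zero]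

/-- the counting function. -/
def Cfun (m k : ℕ) : ℕ := ∑ i ∈ Finset.range m, (rc E i k + tail E i k)

lemma Cfun_succ (m k : ℕ) :
    Cfun E m (k + 1) = Cfun E m k +
      ∑ i ∈ Finset.range m, (if (i, k) ∈ E then 0 else tail E i (k + 1)) := by
  unfold Cfun
  rw [← Finset.sum_add_distrib]
  apply Finset.sum_congr rfl
  intro i _
  rw [rc_succ]
  by_cases h : (i, k) ∈ E
  · simp only [if_pos h]
    rw [tail_succ E h]
    omega
  · simp only [if_neg h]
    rw [tail_eq_zero E h]
lemma sum_rc (m k : ℕ) (hrows : ∀ p ∈ E, p.1 < m) :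
    (E.filter (fun p => p.2 < k)).card = ∑ i ∈ Finset.range m, rc E i k := by
  rw [Finset.card_eq_sum_card_fiberwise (f := Prod.fst) (t := Finset.range m)
    (fun p hp => Finset.mem_range.mpr (hrows p (Finset.mem_filter.mp hp).1))]
  apply Finset.sum_congr rfl
  intro i _
  apply Finset.card_nbij' (fun p => p.2) (fun j => (i, j))
  · rintro ⟨p1, p2⟩ hp
    simp only [Finset.mem_coe, Finset.mem_filter, Finset.mem_range] at hp ⊢
    obtain ⟨⟨hpE, hpk⟩, hpi⟩ := hp
    subst hpi
    exact ⟨hpk, hpE⟩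
  · intro j hj
    simp only [Finset.mem_coe, Finset.mem_filter, Finset.mem_range] at hj
    exact Finset.mem_filter.mpr ⟨Finset.mem_filter.mpr ⟨hj.2, hj.1⟩, rfl⟩
  · rintro ⟨p1, p2⟩ hp
    simp only [Finset.mem_coe, Finset.mem_filter] at hp
    simp [← hp.2]
  · intro j hj
    rfl

lemma polya_bound (m d n : ℕ) (hrows : ∀ p ∈ E, p.1 < m) (hpolya : PolyaCondition d E)
    (hn : n ≤ d) : n + 1 ≤ Cfun E m n := by
  have h1 : (E.filter (fun p => p.2 < n + 1)).card ≤ Cfun E m n := by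
    rw [sum_rc E m (n+1) hrows]
    unfold Cfun
    apply Finset.sum_le_sum
    intro i _
    rw [rc_succ]
    by_cases h : (i, n) ∈ E
    · have := tail_pos E h; simp [h]; omega
    · simp [h]
  exact le_trans (hpolya (n+1) (by omega) (by omega)) h1
lemma tail_le_succ (i k : ℕ) : tail E i k ≤ tail E i (k + 1) + 1 := by
  by_cases h : (i, k) ∈ E
  · exact (tail_succ E h).le
  · rw [tail_eq_zero E h]; omega

/-- The invariant carried through the levels. -/
def Inv (m : ℕ) (x : ℕ → ℝ) (g : ℝ[X]) (k : ℕ) (P : Finset ℝ) (c : ℝ → ℕ) : Prop :=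
  (∀ p ∈ P, 1 ≤ c p ∧ c p ≤ rootMultiplicity p (derivative^[k] g)) ∧
  (∀ p ∈ P,
    (∃ i, i < m ∧ p = x i ∧ c p ≤ tail E i k + 1 ∧ ∃ j, j ≤ k ∧ (i, j) ∈ E) ∨
    ((∃ q ∈ E, q.2 ≤ k ∧ x q.1 < p) ∧ (∃ q ∈ E, q.2 ≤ k ∧ p < x q.1) ∧ c p = 1 ∧
      Odd (rootMultiplicity p (derivative^[k] g)))) ∧
  Cfun E m k ≤ (∑ p ∈ P, c p) + k

lemma inv_step (m d : ℕ) (hE : ∀ p ∈ E, p.1 < m ∧ p.2 ≤ d)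
    (hseq : ∀ i k t, IsSequence d E i k t → Odd t → ¬ SupportedAt E i k)
    (x : ℕ → ℝ) (hx : StrictMonoOn x (Set.Iio m))
    (g : ℝ[X]) (k : ℕ)
    (hf : derivative^[k] g ≠ 0)
    (key : ∀ i, tail E i (k + 1) ≤ rootMultiplicity (x i) (derivative^[k + 1] g))
    (P : Finset ℝ) (c : ℝ → ℕ) (hinv : Inv E m x g k P c) :
    ∃ P' c', Inv E m x g (k + 1) P' c' := by
  classical
  obtain ⟨hc1, hc2, hc3⟩ := hinv
  obtain ⟨Q, c₀, hQ1, hQ2, hQ3⟩ := rolle_count (derivative^[k] g) hf P c hc1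
  rw [← Function.iterate_succ_apply' derivative k g] at hQ1 hQ2
  -- rows where a new sequence starts in column k+1
  set S : Finset ℕ := (Finset.range m).filter (fun i => (i, k) ∉ E ∧ (i, k + 1) ∈ E)
    with hSdef
  have hSmem : ∀ i ∈ S, i < m ∧ (i, k) ∉ E ∧ (i, k + 1) ∈ E := by
    intro i hi
    have := Finset.mem_filter.mp hi
    exact ⟨Finset.mem_range.mp this.1, this.2⟩
  set T : Finset ℝ := S.image x with hTdef
  set P' : Finset ℝ := Q ∪ T with hP'def
  set addf : ℝ → ℕ := fun p => ∑ i ∈ S, if x i = p then tail E i (k + 1) else 0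
    with haddfdef
  set c' : ℝ → ℕ := fun p => (if p ∈ Q then c₀ p else 0) + addf p with hc'def
  -- helper facts
  have hxinj : ∀ i₁ i₂, i₁ < m → i₂ < m → x i₁ = x i₂ → i₁ = i₂ := by
    intro i₁ i₂ h1 h2 he
    by_contra hne
    rcases Nat.lt_or_ge i₁ i₂ with h | h
    · have := hx (Set.mem_Iio.mpr h1) (Set.mem_Iio.mpr h2) h; linarith [this, he.le]
    · have h' : i₂ < i₁ := by omega
      have := hx (Set.mem_Iio.mpr h2) (Set.mem_Iio.mpr h1) h'; linarith [this, he.ge]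
  have hxlt : ∀ i₁ i₂, i₁ < m → i₂ < m → x i₁ < x i₂ → i₁ < i₂ := by
    intro i₁ i₂ h1 h2 he
    by_contra hne
    push_neg at hne
    rcases Nat.lt_or_ge i₂ i₁ with h | h
    · have := hx (Set.mem_Iio.mpr h2) (Set.mem_Iio.mpr h1) h; linarith
    · have : i₁ = i₂ := by omega
      subst this; linarith
  have haddf_eq : ∀ i ∈ S, addf (x i) = tail E i (k + 1) := by
    intro i hi
    show (∑ j ∈ S, if x j = x i then tail E j (k + 1) else 0) = tail E i (k + 1)
    rw [Finset.sum_eq_single_of_mem i hi]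
    · simp
    · intro j hj hji
      have hne : x j ≠ x i := fun h => hji (hxinj j i (hSmem j hj).1 (hSmem i hi).1 h)
      simp [hne]
  have haddf_zero : ∀ p, (∀ i ∈ S, x i ≠ p) → addf p = 0 := by
    intro p hp
    rw [haddfdef]
    apply Finset.sum_eq_zero
    intro i hi
    simp [hp i hi]
  -- the supported/merge analysis for collisions
  have hmerge : ∀ i ∈ S, x i ∈ Q →
      c₀ (x i) = 1 ∧ Odd (rootMultiplicity (x i) (derivative^[k + 1] g)) ∧
        Even (tail E i (k + 1)) := by
    intro i hi hiQ
    obtain ⟨him, hikE, hik1E⟩ := hSmem i hi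
    rcases hQ2 (x i) hiQ with ⟨hiP, hcc⟩ | ⟨h1, h2, a, haP, b, hbP, hab1, hab2⟩
    · -- impossible: x i was a point of P with multiplicity ≥ 2
      exfalso
      rcases hc2 (x i) hiP with ⟨i', hi'm, hxi', hle, _⟩ | ⟨_, _, hcp1, _⟩
      · have : i' = i := hxinj i' i hi'm him hxi'.symm
        subst this
        have hc1' : 1 ≤ c₀ (x i') := (hQ1 (x i') hiQ).1
        have : 1 ≤ tail E i' k := by omega
        exact hikE (by simpa using tail_mem E this)
      · have := (hQ1 (x i) hiQ).1; omega
    · -- x i is a located sign change: sequence must be supported, hence even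
      refine ⟨h1, h2, ?_⟩
      -- extract E-entries on both sides
      have hleft : ∃ q ∈ E, q.2 ≤ k ∧ x q.1 < x i := by
        rcases hc2 a haP with ⟨i₁, hi₁m, rfl, _, j₁, hj₁, hj₁E⟩ | ⟨⟨q, hqE, hq2, hqlt⟩, _, _, _⟩
        · exact ⟨(i₁, j₁), hj₁E, hj₁, hab1⟩
        · exact ⟨q, hqE, hq2, lt_trans hqlt hab1⟩
      have hright : ∃ q ∈ E, q.2 ≤ k ∧ x i < x q.1 := by
        rcases hc2 b hbP with ⟨i₂, hi₂m, rfl, _, j₂, hj₂, hj₂E⟩ | ⟨_, ⟨q, hqE, hq2, hqlt⟩, _, _⟩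
        · exact ⟨(i₂, j₂), hj₂E, hj₂, hab2⟩
        · exact ⟨q, hqE, hq2, lt_trans hab2 hqlt⟩
      obtain ⟨q₁, hq₁E, hq₁2, hq₁lt⟩ := hleft
      obtain ⟨q₂, hq₂E, hq₂2, hq₂lt⟩ := hright
      have hsupp : SupportedAt E i (k + 1) := by
        refine ⟨q₁, hq₁E, q₂, hq₂E, ?_, ?_, by omega, by omega⟩
        · exact hxlt q₁.1 i (hE q₁ hq₁E).1 him hq₁lt
        · exact hxlt i q₂.1 him (hE q₂ hq₂E).1 hq₂lt
      have hisseq : IsSequence d E i (k + 1) (tail E i (k + 1)) := by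
        refine ⟨tail_pos E hik1E, fun j hj => tail_mem E hj, Or.inr (by simpa using hikE),
          Or.inr (tail_not_mem E i (k+1))⟩
      by_contra hodd
      rw [Nat.not_even_iff_odd] at hodd
      exact hseq i (k + 1) (tail E i (k + 1)) hisseq hodd hsupp
  -- witnesses extraction (for gap-type points)
  have hwit : ∀ p, (∃ a ∈ P, a < p) →
      ∃ q ∈ E, q.2 ≤ k + 1 ∧ x q.1 < p := by
    rintro p ⟨a, haP, hap⟩
    rcases hc2 a haP with ⟨i₁, hi₁m, rfl, _, j₁, hj₁, hj₁E⟩ | ⟨⟨q, hqE, hq2, hqlt⟩, _, _, _⟩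
    · exact ⟨(i₁, j₁), hj₁E, by omega, hap⟩
    · exact ⟨q, hqE, by omega, lt_trans hqlt hap⟩
  have hwit' : ∀ p, (∃ b ∈ P, p < b) →
      ∃ q ∈ E, q.2 ≤ k + 1 ∧ p < x q.1 := by
    rintro p ⟨b, hbP, hbp⟩
    rcases hc2 b hbP with ⟨i₂, hi₂m, rfl, _, j₂, hj₂, hj₂E⟩ | ⟨_, ⟨q, hqE, hq2, hqlt⟩, _, _⟩
    · exact ⟨(i₂, j₂), hj₂E, by omega, hbp⟩
    · exact ⟨q, hqE, by omega, lt_trans hbp hqlt⟩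
  refine ⟨P', c', ?_, ?_, ?_⟩
  · -- bounds
    intro p hp
    rcases Finset.mem_union.mp hp with hpQ | hpT
    · by_cases hpT : p ∈ T
      · obtain ⟨i, hiS, rfl⟩ := Finset.mem_image.mp hpT
        obtain ⟨hc01, hOdd, hEven⟩ := hmerge i hiS hpQ
        have hcval : c' (x i) = 1 + tail E i (k + 1) := by
          rw [hc'def]; simp only [if_pos hpQ, hc01, haddf_eq i hiS]
        rw [hcval]
        have hν := key i
        have hEo : Odd (rootMultiplicity (x i) (derivative^[k + 1] g)) := hOdd
        have : rootMultiplicity (x i) (derivative^[k + 1] g) ≠ tail E i (k + 1) := by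
          intro h
          rw [h] at hEo
          exact (Nat.not_even_iff_odd.mpr hEo) hEven
        omega
      · have haz : addf p = 0 := haddf_zero p (fun i hi hxi =>
          hpT (Finset.mem_image.mpr ⟨i, hi, hxi⟩))
        have hcval : c' p = c₀ p := by rw [hc'def]; simp only [if_pos hpQ, haz, add_zero]
        rw [hcval]
        exact hQ1 p hpQ
    · obtain ⟨i, hiS, rfl⟩ := Finset.mem_image.mp hpT
      by_cases hpQ : x i ∈ Q
      · obtain ⟨hc01, hOdd, hEven⟩ := hmerge i hiS hpQ
        have hcval : c' (x i) = 1 + tail E i (k + 1) := by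
          rw [hc'def]; simp only [if_pos hpQ, hc01, haddf_eq i hiS]
        rw [hcval]
        have hν := key i
        have : rootMultiplicity (x i) (derivative^[k + 1] g) ≠ tail E i (k + 1) := by
          intro h
          rw [h] at hOdd
          exact (Nat.not_even_iff_odd.mpr hOdd) hEven
        omega
      · have hcval : c' (x i) = tail E i (k + 1) := by
          rw [hc'def]; simp only [if_neg hpQ, haddf_eq i hiS, zero_add]
        rw [hcval]
        exact ⟨tail_pos E (hSmem i hiS).2.2, key i⟩
  · -- types
    intro p hp
    rcases Finset.mem_union.mp hp with hpQ | hpT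
    · by_cases hpT : p ∈ T
      · obtain ⟨i, hiS, rfl⟩ := Finset.mem_image.mp hpT
        obtain ⟨hc01, hOdd, hEven⟩ := hmerge i hiS hpQ
        have hcval : c' (x i) = 1 + tail E i (k + 1) := by
          rw [hc'def]; simp only [if_pos hpQ, hc01, haddf_eq i hiS]
        exact Or.inl ⟨i, (hSmem i hiS).1, rfl, by omega,
          ⟨k + 1, le_refl _, (hSmem i hiS).2.2⟩⟩
      · have haz : addf p = 0 := haddf_zero p (fun i hi hxi =>
          hpT (Finset.mem_image.mpr ⟨i, hi, hxi⟩))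
        have hcval : c' p = c₀ p := by rw [hc'def]; simp only [if_pos hpQ, haz, add_zero]
        rcases hQ2 p hpQ with ⟨hpP, hcc⟩ | ⟨h1, h2, a, haP, b, hbP, hab1, hab2⟩
        · -- decremented point
          rcases hc2 p hpP with ⟨i', hi'm, hpx, hle, j, hj, hjE⟩ | ⟨_, _, hcp1, _⟩
          · refine Or.inl ⟨i', hi'm, hpx, ?_, ⟨j, by omega, hjE⟩⟩
            have := tail_le_succ E i' k
            rw [hcval]
            omega
          · have := (hQ1 p hpQ).1; omega
        · -- gap point
          exact Or.inr ⟨hwit p ⟨a, haP, hab1⟩, hwit' p ⟨b, hbP, hab2⟩, by omega, h2⟩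
    · obtain ⟨i, hiS, rfl⟩ := Finset.mem_image.mp hpT
      by_cases hpQ : x i ∈ Q
      · obtain ⟨hc01, hOdd, hEven⟩ := hmerge i hiS hpQ
        have hcval : c' (x i) = 1 + tail E i (k + 1) := by
          rw [hc'def]; simp only [if_pos hpQ, hc01, haddf_eq i hiS]
        exact Or.inl ⟨i, (hSmem i hiS).1, rfl, by omega,
          ⟨k + 1, le_refl _, (hSmem i hiS).2.2⟩⟩
      · have hcval : c' (x i) = tail E i (k + 1) := by
          rw [hc'def]; simp only [if_neg hpQ, haddf_eq i hiS, zero_add]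
        exact Or.inl ⟨i, (hSmem i hiS).1, rfl, by omega,
          ⟨k + 1, le_refl _, (hSmem i hiS).2.2⟩⟩
  · -- sum bound
    have hsum1 : ∑ p ∈ P', (if p ∈ Q then c₀ p else 0) = ∑ q ∈ Q, c₀ q := by
      rw [Finset.sum_ite_mem, Finset.union_inter_cancel_left]
    have hsum2 : ∑ p ∈ P', addf p = ∑ i ∈ S, tail E i (k + 1) := by
      rw [haddfdef, Finset.sum_comm]
      apply Finset.sum_congr rfl
      intro i hi
      rw [Finset.sum_ite_eq P' (x i) (fun _ => tail E i (k + 1))]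
      rw [if_pos (Finset.mem_union.mpr (Or.inr (Finset.mem_image.mpr ⟨i, hi, rfl⟩)))]
    have hsum3 : ∑ p ∈ P', c' p = (∑ q ∈ Q, c₀ q) + ∑ i ∈ S, tail E i (k + 1) := by
      rw [hc'def]
      rw [Finset.sum_add_distrib, hsum1, hsum2]
    have hstep : ∑ i ∈ Finset.range m, (if (i, k) ∈ E then 0 else tail E i (k + 1))
        = ∑ i ∈ S, tail E i (k + 1) := by
      have hvanish : ∀ i ∈ Finset.range m, i ∉ S →
          (if (i, k) ∈ E then 0 else tail E i (k + 1)) = 0 := by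
        intro i hi hiS
        by_cases h : (i, k) ∈ E
        · simp [h]
        · have hnm : (i, k + 1) ∉ E := by
            by_contra h1
            exact hiS (Finset.mem_filter.mpr ⟨hi, h, h1⟩)
          simp [h, tail_eq_zero E hnm]
      rw [← Finset.sum_subset (Finset.filter_subset _ _) hvanish]
      apply Finset.sum_congr rfl
      intro i hi
      rw [if_neg (Finset.mem_filter.mp hi).2.1]
    rw [hsum3, Cfun_succ]
    rw [hstep]
    omega

lemma inv_base (m : ℕ) (x : ℕ → ℝ) (hx : StrictMonoOn x (Set.Iio m)) (g : ℝ[X])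
    (key : ∀ i, tail E i 0 ≤ rootMultiplicity (x i) g) :
    ∃ P c, Inv E m x g 0 P c := by
  classical
  set S : Finset ℕ := (Finset.range m).filter (fun i => (i, 0) ∈ E) with hSdef
  set P : Finset ℝ := S.image x with hPdef
  set c : ℝ → ℕ := fun p => ∑ i ∈ S, if x i = p then tail E i 0 else 0 with hcdef
  have hxinj : ∀ i₁ i₂, i₁ < m → i₂ < m → x i₁ = x i₂ → i₁ = i₂ := by
    intro i₁ i₂ h1 h2 he
    by_contra hne
    rcases Nat.lt_or_ge i₁ i₂ with h | h
    · have := hx (Set.mem_Iio.mpr h1) (Set.mem_Iio.mpr h2) h; linarith [this, he.le]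
    · have h' : i₂ < i₁ := by omega
      have := hx (Set.mem_Iio.mpr h2) (Set.mem_Iio.mpr h1) h'; linarith [this, he.ge]
  have hSmem : ∀ i ∈ S, i < m ∧ (i, 0) ∈ E := by
    intro i hi
    have := Finset.mem_filter.mp hi
    exact ⟨Finset.mem_range.mp this.1, this.2⟩
  have hceq : ∀ i ∈ S, c (x i) = tail E i 0 := by
    intro i hi
    show (∑ j ∈ S, if x j = x i then tail E j 0 else 0) = tail E i 0
    rw [Finset.sum_eq_single_of_mem i hi]
    · simp
    · intro j hj hji
      have hne : x j ≠ x i := fun h => hji (hxinj j i (hSmem j hj).1 (hSmem i hi).1 h)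
      simp [hne]
  refine ⟨P, c, ?_, ?_, ?_⟩
  · intro p hp
    obtain ⟨i, hiS, rfl⟩ := Finset.mem_image.mp hp
    rw [hceq i hiS]
    exact ⟨tail_pos E (hSmem i hiS).2, key i⟩
  · intro p hp
    obtain ⟨i, hiS, rfl⟩ := Finset.mem_image.mp hp
    exact Or.inl ⟨i, (hSmem i hiS).1, rfl, by rw [hceq i hiS]; omega,
      ⟨0, le_refl _, (hSmem i hiS).2⟩⟩
  · have hsum : ∑ p ∈ P, c p = ∑ i ∈ S, tail E i 0 := by
      rw [hcdef]
      rw [Finset.sum_comm]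
      apply Finset.sum_congr rfl
      intro i hi
      rw [Finset.sum_ite_eq P (x i) (fun _ => tail E i 0)]
      rw [if_pos (Finset.mem_image.mpr ⟨i, hi, rfl⟩)]
    have hC : Cfun E m 0 = ∑ i ∈ S, tail E i 0 := by
      unfold Cfun
      have hrc : ∀ i, rc E i 0 = 0 := by
        intro i; unfold rc; simp
      have hvanish : ∀ i ∈ Finset.range m, i ∉ S → rc E i 0 + tail E i 0 = 0 := by
        intro i hi hiS
        have : (i, 0) ∉ E := fun h => hiS (Finset.mem_filter.mpr ⟨hi, h⟩)
        rw [hrc, tail_eq_zero E this]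
      rw [← Finset.sum_subset (Finset.filter_subset _ _) hvanish]
      apply Finset.sum_congr rfl
      intro i _
      rw [hrc]; omega
    rw [hsum, hC]
    omega

theorem core (m d : ℕ) (hE : IsInterpolationMatrix m d E)
    (hpolya : PolyaCondition d E)
    (hseq : ∀ i k t, IsSequence d E i k t → Odd t → ¬ SupportedAt E i k)
    (x : ℕ → ℝ) (hx : StrictMonoOn x (Set.Iio m))
    (g : ℝ[X]) (hdeg : g ∈ degreeLT ℝ (d + 1))
    (h0 : ∀ p ∈ E, (derivative^[p.2] g).eval (x p.1) = 0) : g = 0 := by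
  by_contra hg
  set n := g.natDegree with hndef
  have hdeg' : g.degree < ((d + 1 : ℕ) : WithBot ℕ) := mem_degreeLT.mp hdeg
  have hnd : n ≤ d := by
    have := (natDegree_lt_iff_degree_lt hg).mpr hdeg'
    omega
  have hiter := iter_facts g hg
  have key : ∀ k, k ≤ n → ∀ i, tail E i k ≤ rootMultiplicity (x i) (derivative^[k] g) := by
    intro k hk i
    apply ord_ge _ (hiter k hk).1
    intro j hj
    have hmem : (i, k + j) ∈ E := tail_mem E hj
    have h := h0 _ hmem
    rw [← Function.iterate_add_apply derivative j k g]
    rw [show j + k = k + j by omega]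
    exact h
  have main : ∀ k, k ≤ n → ∃ P c, Inv E m x g k P c := by
    intro k
    induction k with
    | zero => intro _; exact inv_base E m x hx g (key 0 (by omega))
    | succ k ih =>
      intro hk
      obtain ⟨P, c, hinv⟩ := ih (by omega)
      exact inv_step E m d hE hseq x hx g k (hiter k (by omega)).1 (key (k+1) hk) P c hinv
  obtain ⟨P, c, h1, h2, h3⟩ := main n le_rfl
  have hpol : n + 1 ≤ Cfun E m n := polya_bound E m d n (fun p hp => (hE p hp).1) hpolya hnd
  have hsumpos : 1 ≤ ∑ p ∈ P, c p := by omega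
  obtain ⟨p, hp⟩ : P.Nonempty := by
    by_contra h
    rw [Finset.not_nonempty_iff_eq_empty] at h
    rw [h] at hsumpos
    simp at hsumpos
  obtain ⟨hp1, hp2⟩ := h1 p hp
  have hfn : derivative^[n] g ≠ 0 := (hiter n le_rfl).1
  have hfdeg : (derivative^[n] g).natDegree = 0 := by
    have := (hiter n le_rfl).2; omega
  obtain ⟨a, ha⟩ := natDegree_eq_zero.mp hfdeg
  have hroot : (derivative^[n] g).IsRoot p :=
    (rootMultiplicity_pos hfn).mp (by omega)
  rw [← ha] at hroot
  have : a = 0 := by simpa [IsRoot] using hroot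
  rw [this] at ha
  simp at ha
  exact hfn ha.symm


end AS

/-- **Theorem (Atkinson–Sharma).** Let `E` be an `m × (d+1)` interpolation
matrix with `|E| = d+1`.  If `E` satisfies the Pólya condition and contains
no odd supported sequence, then `E` is order regular. -/
theorem atkinson_sharma (m d : ℕ) (hm : 1 ≤ m)
    (E : Finset (ℕ × ℕ))
    (hE : IsInterpolationMatrix m d E) (hcard : E.card = d + 1)
    (hpolya : PolyaCondition d E)
    (hseq : ∀ i k t, IsSequence d E i k t → Odd t → ¬ SupportedAt E i k) :
    OrderRegularMatrix m d E := by
  classical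
  intro x hx c
  set V := degreeLT ℝ (d + 1) with hVdef
  set L : V →ₗ[ℝ] (↥E → ℝ) :=
    LinearMap.pi (fun p : ↥E => (Polynomial.leval (x (p : ℕ × ℕ).1)).comp
      (((derivative : ℝ[X] →ₗ[ℝ] ℝ[X]) ^ (p : ℕ × ℕ).2).comp V.subtype)) with hLdef
  have hLapp : ∀ (g : V) (p : ↥E),
      L g p = eval (x (p : ℕ × ℕ).1) (derivative^[(p : ℕ × ℕ).2] (g : ℝ[X])) := by
    intro g p
    rw [hLdef]
    simp [LinearMap.pi_apply, Polynomial.leval_apply, Module.End.pow_apply]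
  have hfinV : FiniteDimensional ℝ V := Module.Finite.equiv (degreeLTEquiv ℝ (d + 1)).symm
  have hinj : Function.Injective L := by
    rw [← LinearMap.ker_eq_bot]
    apply (Submodule.eq_bot_iff _).mpr
    intro g hgker
    rw [LinearMap.mem_ker] at hgker
    have hz : ∀ p ∈ E, (derivative^[p.2] (g : ℝ[X])).eval (x p.1) = 0 := by
      intro p hp
      have := congrFun hgker ⟨p, hp⟩
      rw [hLapp g ⟨p, hp⟩] at this
      simpa using this
    have := AS.core E m d hE hpolya hseq x hx (g : ℝ[X]) g.2 hz
    exact Subtype.ext this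
  have hfin1 : Module.finrank ℝ V = d + 1 := by
    rw [(Polynomial.degreeLTEquiv ℝ (d + 1)).finrank_eq]
    simp [Module.finrank_fin_fun]
  have hfin2 : Module.finrank ℝ (↥E → ℝ) = d + 1 := by
    rw [Module.finrank_pi]
    simp [hcard]
  have hsurj : Function.Surjective L := by
    have h := (LinearMap.injective_iff_surjective_of_finrank_eq_finrank
      (by rw [hfin1, hfin2])).mp hinj
    exact h
  obtain ⟨g, hg⟩ := hsurj (fun p => c (p : ℕ × ℕ))
  refine ⟨(g : ℝ[X]), g.2, ?_⟩
  intro p hp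
  have := congrFun hg ⟨p, hp⟩
  rw [hLapp g ⟨p, hp⟩] at this
  simpa using this
end

section
/- Let E be an m × (d+1) interpolation matrix with |E| = d+1 satisfying the Pólya condition. If every odd sequence of E belongs to the first row, to the last row, or begins in the first column, then E is order regular. -/
open Polynomial Set in
section
open Polynomial Set
namespace BirkhoffAS



lemma rootMult_le_natDegree {p : ℝ[X]} (hp : p ≠ 0) (z : ℝ) :
    rootMultiplicity z p ≤ p.natDegree := by
  have h := Polynomial.pow_rootMultiplicity_dvd p z
  have h2 := Polynomial.natDegree_le_of_dvd h hp
  simpa [Polynomial.natDegree_pow, Polynomial.natDegree_X_sub_C] using h2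

lemma eval_iterate_deriv_eq_zero :
    ∀ (j : ℕ) (p : ℝ[X]) (z : ℝ), j < rootMultiplicity z p →
      (Polynomial.derivative^[j] p).eval z = 0 := by
  intro j
  induction j with
  | zero =>
    intro p z h
    have hp : p ≠ 0 := by rintro rfl; simp [Polynomial.rootMultiplicity_zero] at h
    exact (Polynomial.rootMultiplicity_pos hp).mp h
  | succ j ih =>
    intro p z h
    have hp : p ≠ 0 := by rintro rfl; simp [Polynomial.rootMultiplicity_zero] at h
    have hroot : p.IsRoot z := (Polynomial.rootMultiplicity_pos hp).mp (by omega)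
    have hd := Polynomial.derivative_rootMultiplicity_of_root hroot
    have h2 : j < rootMultiplicity z (Polynomial.derivative p) := by omega
    have := ih (Polynomial.derivative p) z h2
    rwa [Function.iterate_succ_apply]

lemma le_rootMult_of_derivs :
    ∀ (s : ℕ) (p : ℝ[X]) (z : ℝ), p ≠ 0 →
      (∀ j < s, (Polynomial.derivative^[j] p).eval z = 0) →
      s ≤ rootMultiplicity z p := by
  intro s
  induction s with
  | zero => intro p z _ _; omega
  | succ s ih =>
    intro p z hp h
    have h0 : p.eval z = 0 := by simpa using h 0 (by omega)
    have hroot : p.IsRoot z := h0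
    have hmult1 : 0 < rootMultiplicity z p := (Polynomial.rootMultiplicity_pos hp).mpr hroot
    have hp' : Polynomial.derivative p ≠ 0 := by
      intro hd
      have hn := Polynomial.natDegree_eq_zero_of_derivative_eq_zero hd
      have := Polynomial.eq_C_of_natDegree_le_zero hn.le
      rw [this] at h0
      simp at h0
      apply hp
      rw [this, h0]; simp
    have hIH : s ≤ rootMultiplicity z (Polynomial.derivative p) := by
      apply ih _ _ hp'
      intro j hj
      have := h (j+1) (by omega)
      rwa [Function.iterate_succ_apply] at this
    have hd := Polynomial.derivative_rootMultiplicity_of_root hroot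
    omega



lemma exists_odd_rootMult :
    ∀ (n : ℕ) (h : ℝ[X]), h.natDegree ≤ n → h ≠ 0 → ∀ (p q : ℝ), p < q →
      h.eval p * h.eval q < 0 →
      ∃ z ∈ Set.Ioo p q, Odd (rootMultiplicity z h) := by
  intro n
  induction n with
  | zero =>
    intro h hdeg hh p q hpq hsign
    exfalso
    have := Polynomial.eq_C_of_natDegree_le_zero hdeg
    rw [this] at hsign
    simp at hsign
    nlinarith [hsign]
  | succ n ih =>
    intro h hdeg hh p q hpq hsign
    have hcont : ContinuousOn (fun w => h.eval w) (Set.Icc p q) :=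
      (Polynomial.continuous_aeval h).continuousOn
    have hp0 : h.eval p ≠ 0 := by intro h0; rw [h0] at hsign; simp at hsign
    have hq0 : h.eval q ≠ 0 := by intro h0; rw [h0] at hsign; simp at hsign
    have hz0 : ∃ z0 ∈ Set.Ioo p q, h.eval z0 = 0 := by
      rcases lt_or_gt_of_ne hp0 with hneg | hpos
      · have hqpos : 0 < h.eval q := by nlinarith
        have := intermediate_value_Ioo hpq.le hcont
        have h0 : (0:ℝ) ∈ Set.Ioo (h.eval p) (h.eval q) := ⟨hneg, hqpos⟩
        obtain ⟨z0, hz0m, hz0e⟩ := this h0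
        exact ⟨z0, hz0m, hz0e⟩
      · have hqneg : h.eval q < 0 := by nlinarith
        have := intermediate_value_Ioo' hpq.le hcont
        have h0 : (0:ℝ) ∈ Set.Ioo (h.eval q) (h.eval p) := ⟨hqneg, hpos⟩
        obtain ⟨z0, hz0m, hz0e⟩ := this h0
        exact ⟨z0, hz0m, hz0e⟩
    obtain ⟨z0, hz0m, hz0e⟩ := hz0
    set e := rootMultiplicity z0 h with he_def
    have he : 0 < e := (Polynomial.rootMultiplicity_pos hh).mpr hz0e
    rcases Nat.even_or_odd e with heven | hodd
    swap
    · exact ⟨z0, hz0m, hodd⟩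
    · set h1 := h /ₘ (X - C z0) ^ e with h1_def
      have heq : (X - C z0) ^ e * h1 = h := Polynomial.pow_mul_divByMonic_rootMultiplicity_eq h z0
      have h1ne : h1 ≠ 0 := by
        intro h0; rw [h0, mul_zero] at heq; exact hh heq.symm
      have hne : h1.eval z0 ≠ 0 :=
        Polynomial.eval_divByMonic_pow_rootMultiplicity_ne_zero z0 hh
      have hevalp : h.eval p = (p - z0) ^ e * h1.eval p := by
        rw [← heq]; simp [Polynomial.eval_mul, Polynomial.eval_pow]
      have hevalq : h.eval q = (q - z0) ^ e * h1.eval q := by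
        rw [← heq]; simp [Polynomial.eval_mul, Polynomial.eval_pow]
      have hppos : 0 < (p - z0) ^ e := heven.pow_pos (sub_ne_zero.mpr (ne_of_lt hz0m.1))
      have hqpos : 0 < (q - z0) ^ e := heven.pow_pos (sub_ne_zero.mpr (ne_of_gt hz0m.2))
      have hsign1 : h1.eval p * h1.eval q < 0 := by
        by_contra hge
        push_neg at hge
        have : 0 ≤ h.eval p * h.eval q := by
          rw [hevalp, hevalq]
          calc (0:ℝ) ≤ ((p - z0)^e * (q - z0)^e) * (h1.eval p * h1.eval q) :=
                mul_nonneg (mul_pos hppos hqpos).le hge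
            _ = (p - z0)^e * h1.eval p * ((q - z0)^e * h1.eval q) := by ring
        linarith
      have hdeg1 : h1.natDegree ≤ n := by
        have hpow : ((X - C z0) ^ e : ℝ[X]) ≠ 0 := pow_ne_zero _ (Polynomial.X_sub_C_ne_zero z0)
        have := Polynomial.natDegree_mul hpow h1ne
        rw [heq] at this
        rw [Polynomial.natDegree_pow, Polynomial.natDegree_X_sub_C] at this
        omega
      obtain ⟨z, hzm, hzodd⟩ := ih h1 hdeg1 h1ne p q hpq hsign1
      refine ⟨z, hzm, ?_⟩
      have hzroot : h1.IsRoot z := by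
        by_contra hroot
        rw [Polynomial.rootMultiplicity_eq_zero hroot] at hzodd
        simp at hzodd
      have hzne : z ≠ z0 := by intro h0; rw [h0] at hzroot; exact hne hzroot
      have hmul : rootMultiplicity z h
          = rootMultiplicity z ((X - C z0) ^ e) + rootMultiplicity z h1 := by
        rw [← heq]
        exact Polynomial.rootMultiplicity_mul (heq.symm ▸ hh)
      have hzero : rootMultiplicity z ((X - C z0) ^ e) = 0 := by
        apply Polynomial.rootMultiplicity_eq_zero
        simp only [Polynomial.IsRoot, Polynomial.eval_pow, Polynomial.eval_sub,
          Polynomial.eval_X, Polynomial.eval_C]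
        exact pow_ne_zero _ (sub_ne_zero.mpr hzne)
      rw [hmul, hzero, zero_add]
      exact hzodd




lemma exists_odd_rootMult_deriv {g : ℝ[X]} (hg' : Polynomial.derivative g ≠ 0) {u v : ℝ}
    (huv : u < v) (hu : g.eval u = 0) (hv : g.eval v = 0) :
    ∃ z ∈ Set.Ioo u v, Odd (rootMultiplicity z (Polynomial.derivative g)) := by
  have hg : g ≠ 0 := by rintro rfl; simp at hg'
  -- find c in Ioo u v where g.eval c ≠ 0
  have hfin : {w : ℝ | g.IsRoot w}.Finite := Polynomial.finite_setOf_isRoot hg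
  have hinf : (Set.Ioo u v).Infinite := Set.Ioo_infinite huv
  have hne : ((Set.Ioo u v) \ {w : ℝ | g.IsRoot w}).Nonempty := (hinf.diff hfin).nonempty
  obtain ⟨c, hcm, hcr⟩ := hne
  have hc : g.eval c ≠ 0 := hcr
  have hcont : ∀ a b : ℝ, ContinuousOn (fun w => g.eval w) (Set.Icc a b) :=
    fun a b => (Polynomial.continuous_aeval g).continuousOn
  have hderiv : ∀ w : ℝ, HasDerivAt (fun w => g.eval w) ((Polynomial.derivative g).eval w) w := by
    intro w
    simpa using Polynomial.hasDerivAt g w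
  obtain ⟨p1, hp1m, hp1⟩ := exists_hasDerivAt_eq_slope (fun w => g.eval w)
    (fun w => (Polynomial.derivative g).eval w) hcm.1 (hcont u c)
    (fun w _ => hderiv w)
  obtain ⟨q1, hq1m, hq1⟩ := exists_hasDerivAt_eq_slope (fun w => g.eval w)
    (fun w => (Polynomial.derivative g).eval w) hcm.2 (hcont c v)
    (fun w _ => hderiv w)
  have hpq : p1 < q1 := lt_trans hp1m.2 hq1m.1
  have hsign : (Polynomial.derivative g).eval p1 * (Polynomial.derivative g).eval q1 < 0 := by
    rw [hp1, hq1, hu, hv]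
    have h1 : 0 < c - u := by linarith [hcm.1]
    have h2 : 0 < v - c := by linarith [hcm.2]
    have h3 : (0:ℝ) < (g.eval c) ^ 2 := by positivity
    rw [div_mul_div_comm]
    apply div_neg_of_neg_of_pos
    · nlinarith
    · positivity
  obtain ⟨z, hzm, hzodd⟩ := exists_odd_rootMult (Polynomial.derivative g).natDegree
    (Polynomial.derivative g) le_rfl hg' p1 q1 hpq hsign
  exact ⟨z, ⟨lt_trans hp1m.1 hzm.1, lt_trans hzm.2 hq1m.2⟩, hzodd⟩



def SeqS (d : ℕ) (S : Finset (ℝ × ℕ)) (y : ℝ) (k t : ℕ) : Prop :=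
  1 ≤ t ∧ (∀ j < t, (y, k + j) ∈ S) ∧ (k = 0 ∨ (y, k - 1) ∉ S) ∧
    (k + t = d + 1 ∨ (y, k + t) ∉ S)

lemma core : ∀ (d : ℕ) (S : Finset (ℝ × ℕ)),
    (∀ p ∈ S, p.2 ≤ d) → (d + 1 ≤ S.card) →
    (∀ r, 1 ≤ r → r ≤ d + 1 → r ≤ (S.filter (fun p => p.2 < r)).card) →
    (∀ y k t, SeqS d S y k t → Odd t → 1 ≤ k →
      (∀ p ∈ S, y ≤ p.1) ∨ (∀ p ∈ S, p.1 ≤ y)) →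
    ∀ g : ℝ[X], g.natDegree ≤ d →
    (∀ p ∈ S, (Polynomial.derivative^[p.2] g).eval p.1 = 0) → g = 0 := by
  intro d
  induction d with
  | zero =>
    intro S hcol hcard hpolya hseq g hdeg hann
    have hne : S.Nonempty := Finset.card_pos.mp (by omega)
    obtain ⟨p, hp⟩ := hne
    have hp2 : p.2 = 0 := by have := hcol p hp; omega
    have h0 := hann p hp
    rw [hp2] at h0
    simp only [Function.iterate_zero, id_eq] at h0
    have := Polynomial.eq_C_of_natDegree_le_zero hdeg
    rw [this] at h0 ⊢
    simp only [Polynomial.eval_C] at h0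
    rw [h0]; simp
  | succ n IH =>
    intro S hcol hcard hpolya hseq g hdeg hann
    classical
    by_cases hg : g = 0
    · exact hg
    have hfilter0 : ∀ (y : ℝ),
        (y ∈ (S.filter fun p => p.2 = 0).image Prod.fst) ↔ (y, 0) ∈ S := by
      intro y
      simp only [Finset.mem_image, Finset.mem_filter]
      constructor
      · rintro ⟨⟨a, b⟩, ⟨hpS, hb⟩, rfl⟩
        simp only at hb
        subst hb
        exact hpS
      · intro hmem
        exact ⟨(y, 0), ⟨hmem, rfl⟩, rfl⟩
    set A := (S.filter fun p => p.2 = 0).image Prod.fst with hA_def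
    have hAmem : ∀ y ∈ A, (y, 0) ∈ S := fun y hy => (hfilter0 y).mp hy
    have hAmem' : ∀ y : ℝ, (y, 0) ∈ S → y ∈ A := fun y hy => (hfilter0 y).mpr hy
    have hA0 : A.Nonempty := by
      have h1 := hpolya 1 le_rfl (by omega)
      have h2 : (S.filter fun p => p.2 < 1).Nonempty := Finset.card_pos.mp (by omega)
      obtain ⟨p, hp⟩ := h2
      rw [Finset.mem_filter] at hp
      refine ⟨p.1, hAmem' p.1 ?_⟩
      have : p.2 = 0 := by omega
      rw [← this]
      exact hp.1
    by_cases hg' : Polynomial.derivative g = 0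
    · exfalso
      have hn0 := Polynomial.natDegree_eq_zero_of_derivative_eq_zero hg'
      have hC := Polynomial.eq_C_of_natDegree_le_zero hn0.le
      obtain ⟨y, hy⟩ := hA0
      have h0 := hann (y, 0) (hAmem y hy)
      simp only [Function.iterate_zero, id_eq] at h0
      rw [hC] at h0
      simp only [Polynomial.eval_C] at h0
      exact hg (by rw [hC, h0]; simp)
    -- main construction
    set vmax := A.max' hA0 with hvmax_def
    set A' := A.erase vmax with hA'_def
    have hA'sub : A' ⊆ A := Finset.erase_subset _ _
    have key : ∀ u ∈ A', ∃ zz vv, vv ∈ A ∧ u < zz ∧ zz < vv ∧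
        (∀ w ∈ A, u < w → vv ≤ w) ∧
        Odd (rootMultiplicity zz (Polynomial.derivative g)) := by
      intro u hu
      have huA : u ∈ A := hA'sub hu
      have hune : u ≠ vmax := Finset.ne_of_mem_erase hu
      have hult : u < vmax := lt_of_le_of_ne (Finset.le_max' A u huA) hune
      have hBne : (A.filter fun w => u < w).Nonempty :=
        ⟨vmax, Finset.mem_filter.mpr ⟨Finset.max'_mem A hA0, hult⟩⟩
      set vv := (A.filter fun w => u < w).min' hBne with hvv
      have hvmem := Finset.min'_mem (A.filter fun w => u < w) hBne
      rw [Finset.mem_filter] at hvmem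
      have hvmin : ∀ w ∈ A, u < w → vv ≤ w := fun w hw hlt =>
        Finset.min'_le _ w (Finset.mem_filter.mpr ⟨hw, hlt⟩)
      have hu0 : g.eval u = 0 := by
        have := hann (u, 0) (hAmem u huA)
        simpa using this
      have hv0 : g.eval vv = 0 := by
        have := hann (vv, 0) (hAmem vv hvmem.1)
        simpa using this
      obtain ⟨zz, hzm, hzodd⟩ := exists_odd_rootMult_deriv hg' hvmem.2 hu0 hv0
      exact ⟨zz, vv, hvmem.1, hzm.1, hzm.2, hvmin, hzodd⟩
    choose! z v hvA huz hzv hvmin hodd using key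
    have hex : ∀ u : ℝ, ∃ j, (z u, j + 1) ∉ S := by
      intro u
      refine ⟨n + 1, fun hmem => ?_⟩
      have := hcol _ hmem
      simp only at this
      omega
    set sfun : ℝ → ℕ := fun u => Nat.find (hex u) with hsfun_def
    have hs_mem : ∀ u : ℝ, ∀ j < sfun u, (z u, j + 1) ∈ S := by
      intro u j hj
      exact not_not.mp (Nat.find_min (hex u) hj)
    have hs_not : ∀ u : ℝ, (z u, sfun u + 1) ∉ S := fun u => Nat.find_spec (hex u)
    have hzA : ∀ u ∈ A', z u ∉ A := fun u hu hzin =>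
      absurd (hvmin u hu _ hzin (huz u hu)) (not_le.mpr (hzv u hu))
    have hznotS : ∀ u ∈ A', (z u, 0) ∉ S := fun u hu hmem => hzA u hu (hAmem' _ hmem)
    have hmu_ge : ∀ u ∈ A', sfun u ≤ rootMultiplicity (z u) (Polynomial.derivative g) := by
      intro u hu
      apply le_rootMult_of_derivs _ _ _ hg'
      intro j hj
      have hm := hann (z u, j + 1) (hs_mem u j hj)
      rwa [Function.iterate_succ_apply] at hm
    have hmu_ne : ∀ u ∈ A', rootMultiplicity (z u) (Polynomial.derivative g) ≠ sfun u := by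
      intro u hu heq
      have hodd' : Odd (sfun u) := heq ▸ hodd u hu
      have hpos : 1 ≤ sfun u := hodd'.pos
      have hseqS : SeqS (n + 1) S (z u) 1 (sfun u) := by
        refine ⟨hpos, ?_, Or.inr ?_, Or.inr ?_⟩
        · intro j hj
          have := hs_mem u j hj
          rwa [add_comm 1 j]
        · exact hznotS u hu
        · rw [add_comm 1 (sfun u)]
          exact hs_not u
      rcases hseq _ _ _ hseqS hodd' le_rfl with hL | hR
      · exact absurd (hL (u, 0) (hAmem u (hA'sub hu))) (not_le.mpr (huz u hu))
      · exact absurd (hR (v u, 0) (hAmem _ (hvA u hu))) (not_le.mpr (hzv u hu))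
    have hmu_le : ∀ u ∈ A', rootMultiplicity (z u) (Polynomial.derivative g) ≤ n := by
      intro u hu
      have h1 := rootMult_le_natDegree hg' (z u)
      have h2 := Polynomial.natDegree_derivative_le g
      omega
    set Sshift := (S.filter fun p => 1 ≤ p.2).image (fun p => (p.1, p.2 - 1)) with hSsh
    set Snew := A'.image (fun u => (z u, sfun u)) with hSnew
    set S' := Sshift ∪ Snew with hS'
    have hshift_mem : ∀ (y : ℝ) (k : ℕ), (y, k) ∈ Sshift ↔ (y, k + 1) ∈ S := by
      intro y k
      simp only [hSsh, Finset.mem_image, Finset.mem_filter]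
      constructor
      · rintro ⟨⟨a, b⟩, ⟨hmem, hb⟩, heq⟩
        simp only [Prod.mk.injEq] at heq hb
        obtain ⟨rfl, hk⟩ := heq
        have hbk : b = k + 1 := by omega
        rwa [← hbk]
      · intro hmem
        exact ⟨(y, k + 1), ⟨hmem, by omega⟩, by simp⟩
    have hnew_mem : ∀ (y : ℝ) (k : ℕ),
        (y, k) ∈ Snew ↔ ∃ u ∈ A', z u = y ∧ sfun u = k := by
      intro y k
      simp only [hSnew, Finset.mem_image, Prod.mk.injEq]
    have hzlt : ∀ u ∈ A', ∀ u' ∈ A', u < u' → z u < z u' := by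
      intro u hu u' hu' hlt
      have h1 : v u ≤ u' := hvmin u hu u' (hA'sub hu') hlt
      exact lt_trans (lt_of_lt_of_le (hzv u hu) h1) (huz u' hu')
    have hzinj : ∀ u ∈ A', ∀ u' ∈ A', z u = z u' → u = u' := by
      intro u hu u' hu' heq
      rcases lt_trichotomy u u' with h | h | h
      · exact absurd (hzlt u hu u' hu' h) (by rw [heq]; exact lt_irrefl _)
      · exact h
      · exact absurd (hzlt u' hu' u hu h) (by rw [heq]; exact lt_irrefl _)
    have hdisj : Disjoint Sshift Snew := by
      rw [Finset.disjoint_left]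
      rintro ⟨y, k⟩ hsh hnew
      rw [hshift_mem] at hsh
      rw [hnew_mem] at hnew
      obtain ⟨u, hu, rfl, rfl⟩ := hnew
      exact hs_not u hsh
    have hcard_shift : Sshift.card = (S.filter fun p => 1 ≤ p.2).card := by
      apply Finset.card_image_of_injOn
      rintro ⟨a, b⟩ ha ⟨a', b'⟩ ha' heq
      simp only [Finset.coe_filter, Set.mem_setOf_eq] at ha ha'
      simp only [Prod.mk.injEq] at heq ⊢
      exact ⟨heq.1, by omega⟩
    have hcard_new : Snew.card = A'.card := by
      apply Finset.card_image_of_injOn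
      intro u hu u' hu' heq
      simp only [Prod.mk.injEq] at heq
      exact hzinj u (by simpa using hu) u' (by simpa using hu') heq.1
    have hsplit : (S.filter fun p => p.2 = 0).card + (S.filter fun p => 1 ≤ p.2).card
        = S.card := by
      have h1 := Finset.card_filter_add_card_filter_not (s := S)
        (p := fun p => p.2 = 0)
      have h2 : (S.filter fun p => ¬ p.2 = 0) = (S.filter fun p => 1 ≤ p.2) := by
        apply Finset.filter_congr
        intro p _
        constructor <;> (intro h; omega)
      rw [h2] at h1
      exact h1
    have hcardA : A.card = (S.filter fun p => p.2 = 0).card := by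
      rw [hA_def]
      apply Finset.card_image_of_injOn
      rintro ⟨a, b⟩ ha ⟨a', b'⟩ ha' heq
      simp only [Finset.coe_filter, Set.mem_setOf_eq] at ha ha'
      simp only [Prod.mk.injEq]
      exact ⟨heq, by omega⟩
    have hcardA' : A'.card + 1 = A.card := by
      rw [hA'_def, Finset.card_erase_of_mem (Finset.max'_mem A hA0)]
      have : 1 ≤ A.card := Finset.card_pos.mpr hA0
      omega
    have hcardS' : S'.card + 1 = S.card := by
      rw [hS', Finset.card_union_of_disjoint hdisj, hcard_shift, hcard_new]
      omega
    have hcol' : ∀ p ∈ S', p.2 ≤ n := by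
      rintro ⟨y, k⟩ hp
      rw [hS', Finset.mem_union] at hp
      rcases hp with hsh | hnew
      · rw [hshift_mem] at hsh
        have h0 : k + 1 ≤ n + 1 := hcol _ hsh
        show k ≤ n
        omega
      · rw [hnew_mem] at hnew
        obtain ⟨u, hu, rfl, rfl⟩ := hnew
        have h1 := hmu_ge u hu
        have h2 := hmu_ne u hu
        have h3 := hmu_le u hu
        show sfun u ≤ n
        omega
    have hann' : ∀ p ∈ S',
        (Polynomial.derivative^[p.2] (Polynomial.derivative g)).eval p.1 = 0 := by
      rintro ⟨y, k⟩ hp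
      rw [hS', Finset.mem_union] at hp
      rcases hp with hsh | hnew
      · rw [hshift_mem] at hsh
        have := hann (y, k + 1) hsh
        rwa [Function.iterate_succ_apply] at this
      · rw [hnew_mem] at hnew
        obtain ⟨u, hu, rfl, rfl⟩ := hnew
        apply eval_iterate_deriv_eq_zero
        show sfun u < rootMultiplicity (z u) (Polynomial.derivative g)
        have h1 := hmu_ge u hu
        have h2 := hmu_ne u hu
        omega
    have hpolya' : ∀ r, 1 ≤ r → r ≤ n + 1 → r ≤ (S'.filter fun p => p.2 < r).card := by
      intro r hr1 hr2
      have hfilterU : (S'.filter fun p => p.2 < r).card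
          = (Sshift.filter fun p => p.2 < r).card + (Snew.filter fun p => p.2 < r).card := by
        rw [hS', Finset.filter_union]
        exact Finset.card_union_of_disjoint
          (hdisj.mono (Finset.filter_subset _ _) (Finset.filter_subset _ _))
      have hcsh : (Sshift.filter fun p => p.2 < r).card
          = (S.filter fun p => 1 ≤ p.2 ∧ p.2 < r + 1).card := by
        rw [hSsh, Finset.filter_image]
        rw [Finset.card_image_of_injOn]
        · congr 1
          rw [Finset.filter_filter]
          apply Finset.filter_congr
          intro p _
          constructor <;> (intro h; constructor <;> omega)
        · rintro ⟨a, b⟩ ha ⟨a', b'⟩ ha' heq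
          simp only [Finset.coe_filter, Set.mem_setOf_eq, Finset.mem_filter] at ha ha'
          simp only [Prod.mk.injEq] at heq ⊢
          exact ⟨heq.1, by omega⟩
      have hcnew : (Snew.filter fun p => p.2 < r).card
          = (A'.filter fun u => sfun u < r).card := by
        rw [hSnew, Finset.filter_image]
        rw [Finset.card_image_of_injOn]
        · intro u hu u' hu' heq
          simp only [Finset.coe_filter, Set.mem_setOf_eq, Finset.mem_filter] at hu hu'
          simp only [Prod.mk.injEq] at heq
          exact hzinj u hu.1 u' hu'.1 heq.1
      have hbig : (S.filter fun p => p.2 < r + 1).card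
          = (S.filter fun p => p.2 = 0).card
            + (S.filter fun p => 1 ≤ p.2 ∧ p.2 < r + 1).card := by
        have h1 := Finset.card_filter_add_card_filter_not
          (s := S.filter fun p => p.2 < r + 1) (p := fun p => p.2 = 0)
        rw [Finset.filter_filter, Finset.filter_filter] at h1
        have e1 : (S.filter fun p => p.2 < r + 1 ∧ p.2 = 0)
            = (S.filter fun p => p.2 = 0) := by
          apply Finset.filter_congr
          intro p _
          constructor <;> (intro h; try constructor) <;> omega
        have e2 : (S.filter fun p => p.2 < r + 1 ∧ ¬ p.2 = 0)
            = (S.filter fun p => 1 ≤ p.2 ∧ p.2 < r + 1) := by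
          apply Finset.filter_congr
          intro p _
          constructor <;> (intro h; constructor <;> omega)
        rw [e1, e2] at h1
        omega
      have hpol := hpolya (r + 1) (by omega) (by omega)
      set M := A'.filter (fun u => ¬ sfun u < r) with hM
      have hMsplit : (A'.filter fun u => sfun u < r).card + M.card = A'.card := by
        rw [hM]
        exact Finset.card_filter_add_card_filter_not _
      by_cases hMe : M.card = 0
      · omega
      · have hMne : M.Nonempty := Finset.card_pos.mp (by omega)
        have hMsub : M ⊆ A' := Finset.filter_subset _ _
        have ha2 : 2 ≤ A.card := by
          obtain ⟨u, hu⟩ := hMne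
          have : A'.Nonempty := ⟨u, hMsub hu⟩
          have := Finset.card_pos.mpr this
          omega
        have hinj2 : r * M.card ≤ (S.filter fun p => 1 ≤ p.2 ∧ p.2 < r + 1).card := by
          have hmaps : ∀ w ∈ M ×ˢ Finset.Icc 1 r,
              (z w.1, w.2) ∈ S.filter fun p => 1 ≤ p.2 ∧ p.2 < r + 1 := by
            rintro ⟨u, j⟩ hw
            rw [Finset.mem_product, Finset.mem_Icc] at hw
            have huM : u ∈ M := hw.1
            have hj1 : 1 ≤ j := hw.2.1
            have hjr : j ≤ r := hw.2.2
            rw [hM, Finset.mem_filter] at huM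
            have hjs : j - 1 < sfun u := by omega
            have := hs_mem u (j - 1) hjs
            rw [Nat.sub_add_cancel hj1] at this
            exact Finset.mem_filter.mpr ⟨this, hj1, by omega⟩
          have hinjOn : Set.InjOn (fun w : ℝ × ℕ => (z w.1, w.2))
              ↑(M ×ˢ Finset.Icc 1 r) := by
            rintro ⟨u, j⟩ hu ⟨u', j'⟩ hu' heq
            simp only [Finset.coe_product, Set.mem_prod, Finset.mem_coe,
              Finset.mem_Icc] at hu hu'
            rw [hM, Finset.mem_filter] at hu hu'
            simp only [Prod.mk.injEq] at heq ⊢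
            exact ⟨hzinj u hu.1.1 u' hu'.1.1 heq.1, heq.2⟩
          have := Finset.card_le_card_of_injOn _ hmaps hinjOn
          rw [Finset.card_product, Nat.card_Icc] at this
          have hicc : r + 1 - 1 = r := by omega
          rw [hicc] at this
          calc r * M.card = M.card * r := Nat.mul_comm _ _
            _ ≤ _ := this
        have hMge1 : 1 ≤ M.card := by omega
        have hrM : r + (M.card - 1) ≤ r * M.card := by
          obtain ⟨mc, hmc⟩ := Nat.exists_eq_add_of_le hMge1
          have hle : mc ≤ r * mc := Nat.le_mul_of_pos_left mc (by omega)
          have : r * M.card = r + r * mc := by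
            rw [hmc]
            ring
          omega
        omega
    have hseq' : ∀ y k t, SeqS n S' y k t → Odd t → 1 ≤ k →
        (∀ p ∈ S', y ≤ p.1) ∨ (∀ p ∈ S', p.1 ≤ y) := by
      rintro y k t ⟨ht1, hmem, hleft, hright⟩ hodd' hk1
      have hleft' : (y, k - 1) ∉ S' := by
        rcases hleft with h | h
        · omega
        · exact h
      by_cases hy : ∃ u ∈ A', z u = y
      · obtain ⟨u, hu, rfl⟩ := hy
        exfalso
        have hks : sfun u + 2 ≤ k := by
          by_contra hlt
          push_neg at hlt
          rcases Nat.lt_or_ge (k - 1) (sfun u) with h1 | h1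
          · apply hleft'
            rw [hS', Finset.mem_union]
            left
            rw [hshift_mem]
            exact hs_mem u (k - 1) h1
          · have hk1e : k - 1 = sfun u := by omega
            apply hleft'
            rw [hS', Finset.mem_union]
            right
            rw [hnew_mem]
            exact ⟨u, hu, rfl, hk1e.symm⟩
        have hmemS : ∀ j < t, (z u, (k + 1) + j) ∈ S := by
          intro j hj
          have hj' := hmem j hj
          rw [hS', Finset.mem_union] at hj'
          rcases hj' with hsh | hnew
          · rw [hshift_mem] at hsh
            rwa [show k + 1 + j = (k + j) + 1 from by omega]
          · rw [hnew_mem] at hnew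
            obtain ⟨u', hu', hzz, hss⟩ := hnew
            have heq : u' = u := hzinj u' hu' u hu hzz
            rw [heq] at hss
            omega
        have hSeqS : SeqS (n + 1) S (z u) (k + 1) t := by
          refine ⟨ht1, hmemS, Or.inr ?_, ?_⟩
          · intro hin
            apply hleft'
            rw [hS', Finset.mem_union]
            left
            rw [hshift_mem]
            rw [show k - 1 + 1 = k from by omega]
            exact hin
          · rcases hright with h | h
            · left
              omega
            · right
              intro hin
              apply h
              rw [hS', Finset.mem_union]
              left
              rw [hshift_mem]
              rwa [show k + t + 1 = k + 1 + t from by omega]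
        rcases hseq _ _ _ hSeqS hodd' (by omega) with hL | hR
        · exact absurd (hL (u, 0) (hAmem u (hA'sub hu))) (not_le.mpr (huz u hu))
        · exact absurd (hR (v u, 0) (hAmem _ (hvA u hu))) (not_le.mpr (hzv u hu))
      · push_neg at hy
        have hmemS : ∀ j < t, (y, (k + 1) + j) ∈ S := by
          intro j hj
          have hj' := hmem j hj
          rw [hS', Finset.mem_union] at hj'
          rcases hj' with hsh | hnew
          · rw [hshift_mem] at hsh
            rwa [show k + 1 + j = (k + j) + 1 from by omega]
          · rw [hnew_mem] at hnew
            obtain ⟨u', hu', hzz, _⟩ := hnew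
            exact absurd hzz (hy u' hu')
        have hSeqS : SeqS (n + 1) S y (k + 1) t := by
          refine ⟨ht1, hmemS, Or.inr ?_, ?_⟩
          · intro hin
            apply hleft'
            rw [hS', Finset.mem_union]
            left
            rw [hshift_mem]
            rw [show k - 1 + 1 = k from by omega]
            exact hin
          · rcases hright with h | h
            · left
              omega
            · right
              intro hin
              apply h
              rw [hS', Finset.mem_union]
              left
              rw [hshift_mem]
              rwa [show k + t + 1 = k + 1 + t from by omega]
        rcases hseq _ _ _ hSeqS hodd' (by omega) with hL | hR
        · left
          rintro ⟨w, kk⟩ hp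
          rw [hS', Finset.mem_union] at hp
          rcases hp with hsh | hnew
          · rw [hshift_mem] at hsh
            exact hL (w, kk + 1) hsh
          · rw [hnew_mem] at hnew
            obtain ⟨u', hu', rfl, _⟩ := hnew
            show y ≤ z u'
            calc y ≤ u' := hL (u', 0) (hAmem _ (hA'sub hu'))
              _ ≤ z u' := (huz u' hu').le
        · right
          rintro ⟨w, kk⟩ hp
          rw [hS', Finset.mem_union] at hp
          rcases hp with hsh | hnew
          · rw [hshift_mem] at hsh
            exact hR (w, kk + 1) hsh
          · rw [hnew_mem] at hnew
            obtain ⟨u', hu', rfl, _⟩ := hnew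
            show z u' ≤ y
            calc z u' ≤ v u' := (hzv u' hu').le
              _ ≤ y := hR (v u', 0) (hAmem _ (hvA u' hu'))
    have hdeg' : (Polynomial.derivative g).natDegree ≤ n := by
      have := Polynomial.natDegree_derivative_le g
      omega
    exact absurd (IH S' hcol' (by omega) hpolya' hseq' (Polynomial.derivative g) hdeg' hann') hg'



lemma core_inj (m d : ℕ) (hm : 1 ≤ m) (E : Finset (ℕ × ℕ))
    (hE : IsInterpolationMatrix m d E) (hcard : E.card = d + 1)
    (hpolya : PolyaCondition d E)
    (hseq : ∀ i k t, IsSequence d E i k t → Odd t → i = 0 ∨ i = m - 1 ∨ k = 0)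
    (x : ℕ → ℝ) (hx : StrictMonoOn x (Set.Iio m))
    (g : ℝ[X]) (hdeg : g.natDegree ≤ d)
    (hann : ∀ p ∈ E, (Polynomial.derivative^[p.2] g).eval (x p.1) = 0) : g = 0 := by
  classical
  set f : ℕ × ℕ → ℝ × ℕ := fun p => (x p.1, p.2) with hf
  have hxinj : Set.InjOn x (Set.Iio m) := hx.injOn
  have hinjE : Set.InjOn f ↑E := by
    rintro ⟨i, k⟩ hp ⟨i', k'⟩ hp' heq
    simp only [hf, Prod.mk.injEq] at heq
    have h1 : i < m := (hE _ hp).1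
    have h2 : i' < m := (hE _ hp').1
    have hii : i = i' := hxinj (Set.mem_Iio.mpr h1) (Set.mem_Iio.mpr h2) heq.1
    simp [Prod.mk.injEq, hii, heq.2]
  set S := E.image f with hS
  have hrow : ∀ (i c : ℕ), i < m → ((x i, c) ∈ S ↔ (i, c) ∈ E) := by
    intro i c him
    constructor
    · intro hmem
      rw [hS, Finset.mem_image] at hmem
      obtain ⟨q, hq, heq⟩ := hmem
      simp only [hf, Prod.mk.injEq] at heq
      have hqm : q.1 < m := (hE _ hq).1
      have h1 : q.1 = i := hxinj (Set.mem_Iio.mpr hqm) (Set.mem_Iio.mpr him) heq.1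
      have h2 : q.2 = c := heq.2
      rw [← h1, ← h2]
      exact hq
    · intro hmem
      rw [hS, Finset.mem_image]
      exact ⟨(i, c), hmem, rfl⟩
  apply core d S ?_ ?_ ?_ ?_ g hdeg ?_
  · intro p hp
    rw [hS, Finset.mem_image] at hp
    obtain ⟨q, hq, rfl⟩ := hp
    exact (hE _ hq).2
  · rw [hS, Finset.card_image_of_injOn hinjE, hcard]
  · intro r h1 h2
    rw [hS, Finset.filter_image]
    rw [Finset.card_image_of_injOn (hinjE.mono (Finset.coe_subset.mpr (Finset.filter_subset _ _)))]
    have he : (E.filter fun a => (f a).2 < r) = E.filter fun p => p.2 < r :=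
      Finset.filter_congr (fun p _ => by simp [hf])
    rw [he]
    exact hpolya r h1 h2
  · rintro y k t ⟨ht1, hmem, hleft, hright⟩ hodd hk1
    have h0 := hmem 0 (by omega)
    rw [hS, Finset.mem_image] at h0
    obtain ⟨q, hq, heq⟩ := h0
    simp only [hf, Prod.mk.injEq] at heq
    have him : q.1 < m := (hE _ hq).1
    have hyx : x q.1 = y := heq.1
    have hE_seq : IsSequence d E q.1 k t := by
      refine ⟨ht1, ?_, ?_, ?_⟩
      · intro j hj
        have hmj := hmem j hj
        rw [← hyx] at hmj
        exact (hrow q.1 (k + j) him).mp hmj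
      · rcases hleft with h | h
        · exact Or.inl h
        · refine Or.inr fun hc => h ?_
          rw [← hyx]
          exact (hrow q.1 (k - 1) him).mpr hc
      · rcases hright with h | h
        · exact Or.inl h
        · refine Or.inr fun hc => h ?_
          rw [← hyx]
          exact (hrow q.1 (k + t) him).mpr hc
    rcases hseq q.1 k t hE_seq hodd with h0 | h0 | h0
    · left
      intro p' hp'
      rw [hS, Finset.mem_image] at hp'
      obtain ⟨q', hq', rfl⟩ := hp'
      have hq'm : q'.1 < m := (hE _ hq').1
      show y ≤ x q'.1
      rw [← hyx, h0]
      rcases Nat.eq_zero_or_pos q'.1 with h | h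
      · rw [h]
      · exact (hx (Set.mem_Iio.mpr (by omega)) (Set.mem_Iio.mpr hq'm) h).le
    · right
      intro p' hp'
      rw [hS, Finset.mem_image] at hp'
      obtain ⟨q', hq', rfl⟩ := hp'
      have hq'm : q'.1 < m := (hE _ hq').1
      show x q'.1 ≤ y
      rw [← hyx, h0]
      rcases Nat.lt_or_ge q'.1 (m - 1) with h | h
      · exact (hx (Set.mem_Iio.mpr hq'm) (Set.mem_Iio.mpr (by omega)) h).le
      · have : q'.1 = m - 1 := by omega
        rw [this]
    · omega
  · intro p' hp'
    rw [hS, Finset.mem_image] at hp'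
    obtain ⟨q, hq, rfl⟩ := hp'
    exact hann q hq


end BirkhoffAS
end
open Polynomial Set

/-- **Corollary, part (i).** Let `E` be an `m × (d+1)` interpolation matrix
with `|E| = d+1` satisfying the Pólya condition.  If every odd sequence of
`E` belongs to the first row, to the last row, or begins in the first
column, then `E` is order regular. -/
theorem order_regular_of_odd_sequences_first_last_row_or_first_column
    (m d : ℕ) (hm : 1 ≤ m)
    (E : Finset (ℕ × ℕ))
    (hE : IsInterpolationMatrix m d E) (hcard : E.card = d + 1)
    (hpolya : PolyaCondition d E)
    (hseq : ∀ i k t, IsSequence d E i k t → Odd t → i = 0 ∨ i = m - 1 ∨ k = 0) :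
    OrderRegularMatrix m d E := by
  intro x hx c
  classical
  have hinj0 : ∀ g : ℝ[X], g ∈ Polynomial.degreeLT ℝ (d + 1) →
      (∀ p ∈ E, (Polynomial.derivative^[p.2] g).eval (x p.1) = 0) → g = 0 := by
    intro g hgmem hgann
    have hdeg : g.natDegree ≤ d := by
      rw [Polynomial.mem_degreeLT] at hgmem
      by_cases h0 : g = 0
      · rw [h0]; simp
      · rw [Polynomial.degree_eq_natDegree h0] at hgmem
        exact_mod_cast Nat.lt_succ_iff.mp (by exact_mod_cast hgmem)
    exact BirkhoffAS.core_inj m d hm E hE hcard hpolya hseq x hx g hdeg hgann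
  set V := Polynomial.degreeLT ℝ (d + 1) with hV
  set L : V →ₗ[ℝ] (↥E → ℝ) := LinearMap.pi fun p =>
    (Polynomial.leval (x (p : ℕ × ℕ).1)).comp
      ((((Polynomial.derivative : ℝ[X] →ₗ[ℝ] ℝ[X]) ^ ((p : ℕ × ℕ).2))).comp V.subtype)
    with hL
  have hLapp : ∀ (gv : V) (p : ↥E),
      L gv p = (Polynomial.derivative^[(p : ℕ × ℕ).2] (gv : ℝ[X])).eval
        (x (p : ℕ × ℕ).1) := by
    intro gv p
    simp [hL, LinearMap.pi_apply, Module.End.pow_apply]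
  have hfdV : FiniteDimensional ℝ V :=
    LinearEquiv.finiteDimensional (Polynomial.degreeLTEquiv ℝ (d + 1)).symm
  have hfr : Module.finrank ℝ V = Module.finrank ℝ (↥E → ℝ) := by
    rw [(Polynomial.degreeLTEquiv ℝ (d + 1)).finrank_eq]
    rw [Module.finrank_pi, Module.finrank_pi]
    rw [Fintype.card_fin, Fintype.card_coe, hcard]
  have hLinj : Function.Injective L := by
    rw [← LinearMap.ker_eq_bot, LinearMap.ker_eq_bot']
    intro gv hgv
    have h0 : (gv : ℝ[X]) = 0 := by
      apply hinj0 _ gv.2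
      intro p hp
      have h1 : L gv ⟨p, hp⟩ = 0 := by rw [hgv]; rfl
      rw [hLapp] at h1
      exact h1
    exact Subtype.ext h0
  have hLsurj := (LinearMap.injective_iff_surjective_of_finrank_eq_finrank hfr).mp hLinj
  obtain ⟨gv, hgv⟩ := hLsurj (fun p => c (p : ℕ × ℕ))
  refine ⟨gv, gv.2, ?_⟩
  intro p hp
  have h1 := congrFun hgv ⟨p, hp⟩
  rw [hLapp] at h1
  exact h1
end

section
/- Let E be an m × (d+1) interpolation matrix with |E| = d+1 satisfying the Pólya condition. If every odd sequence of E begins in the first column, then E is regular. -/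
open Polynomial Finset Set
open scoped Classical

noncomputable section AuxBirkhoffSection

theorem pos_prod_of_no_root (h : ℝ[X]) (u v : ℝ) (huv : u < v)
    (hu : eval u h ≠ 0) (hv : eval v h ≠ 0)
    (hno : ∀ z, u < z → z < v → eval z h ≠ 0) :
    0 < eval u h * eval v h := by
  rcases lt_trichotomy (eval u h * eval v h) 0 with hlt | heq | hgt
  · exfalso
    have hcont : ContinuousOn (fun z => eval z h) (Set.Icc u v) := h.continuousOn
    rcases mul_neg_iff.mp hlt with ⟨hu', hv'⟩ | ⟨hu', hv'⟩
    · have : (0:ℝ) ∈ Set.Ioo (eval v h) (eval u h) := ⟨hv', hu'⟩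
      obtain ⟨z, hz, hz0⟩ := intermediate_value_Ioo' huv.le hcont this
      exact hno z hz.1 hz.2 hz0
    · have : (0:ℝ) ∈ Set.Ioo (eval u h) (eval v h) := ⟨hu', hv'⟩
      obtain ⟨z, hz, hz0⟩ := intermediate_value_Ioo huv.le hcont this
      exact hno z hz.1 hz.2 hz0
  · exact absurd heq (mul_ne_zero hu hv)
  · exact hgt

theorem parity_lemma :
    ∀ (N : ℕ) (h : ℝ[X]), h.natDegree ≤ N → h ≠ 0 → ∀ u v : ℝ, u < v →
      eval u h ≠ 0 → eval v h ≠ 0 →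
      (0 < eval u h * eval v h ↔
        Even (Multiset.card (h.roots.filter (fun z => u < z ∧ z < v)))) := by
  intro N
  induction N with
  | zero =>
    intro h hdeg hh u v huv hu hv
    have hroots : h.roots = 0 := by
      rw [← Multiset.card_eq_zero]
      have := card_roots' h
      omega
    rw [hroots]
    simp only [Multiset.filter_zero, Multiset.card_zero, Even.zero, iff_true]
    refine pos_prod_of_no_root h u v huv hu hv (fun z hz1 hz2 hz0 => ?_)
    have : z ∈ h.roots := by rw [mem_roots']; exact ⟨hh, hz0⟩
    rw [hroots] at this; exact absurd this (Multiset.notMem_zero z)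
  | succ n ih =>
    intro h hdeg hh u v huv hu hv
    by_cases hex : ∃ r, u < r ∧ r < v ∧ eval r h = 0
    · obtain ⟨r, hur, hrv, hr0⟩ := hex
      set μ := rootMultiplicity r h with hμ
      have hμpos : 0 < μ := (rootMultiplicity_pos hh).mpr hr0
      set q := h /ₘ (X - C r) ^ μ with hq
      have hfac : (X - C r) ^ μ * q = h := pow_mul_divByMonic_rootMultiplicity_eq h r
      have hq0 : q ≠ 0 := by
        intro hcon; rw [hcon, mul_zero] at hfac; exact hh hfac.symm
      have hqr : eval r q ≠ 0 := eval_divByMonic_pow_rootMultiplicity_ne_zero r hh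
      have hdegq : q.natDegree ≤ n := by
        have h1 : ((X - C r) ^ μ * q).natDegree = μ * 1 + q.natDegree := by
          rw [natDegree_mul (pow_ne_zero μ (X_sub_C_ne_zero r)) hq0, natDegree_pow, natDegree_X_sub_C]
        rw [hfac] at h1
        omega
      have hevu : eval u h = (u - r) ^ μ * eval u q := by
        rw [← hfac]; simp [eval_pow]
      have hevv : eval v h = (v - r) ^ μ * eval v q := by
        rw [← hfac]; simp [eval_pow]
      have hqu : eval u q ≠ 0 := fun hcon => hu (by rw [hevu, hcon, mul_zero])
      have hqv : eval v q ≠ 0 := fun hcon => hv (by rw [hevv, hcon, mul_zero])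
      have hroots : h.roots = μ • {r} + q.roots := by
        rw [← hfac, roots_mul (hfac.symm ▸ hh), roots_pow, roots_X_sub_C]
      have hcount : Multiset.card (h.roots.filter (fun z => u < z ∧ z < v)) =
          μ + Multiset.card (q.roots.filter (fun z => u < z ∧ z < v)) := by
        rw [hroots, Multiset.filter_add, Multiset.card_add]
        congr 1
        rw [Multiset.filter_eq_self.mpr, Multiset.card_nsmul, Multiset.card_singleton, mul_one]
        intro a ha
        have : a = r := by
          have := Multiset.mem_of_mem_nsmul ha
          simpa using this
        subst this; exact ⟨hur, hrv⟩
      have hprod : eval u h * eval v h = ((u - r) * (v - r)) ^ μ * (eval u q * eval v q) := by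
        rw [hevu, hevv, mul_pow]; ring
      have hA : (u - r) * (v - r) < 0 :=
        mul_neg_of_neg_of_pos (by linarith) (by linarith)
      have ihq := ih q hdegq hq0 u v huv hqu hqv
      rw [hcount, hprod]
      rcases Nat.even_or_odd μ with hev | hodd
      · have hApos : 0 < ((u - r) * (v - r)) ^ μ := hev.pow_pos hA.ne
        have hsign : (0 < ((u - r) * (v - r)) ^ μ * (eval u q * eval v q)) ↔
            0 < eval u q * eval v q := by
          constructor
          · intro hx; by_contra hy; push_neg at hy
            rcases hy.lt_or_eq with h1 | h1
            · nlinarith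
            · exact (mul_ne_zero hqu hqv) h1
          · intro hx; exact mul_pos hApos hx
        rw [hsign, ihq, Nat.even_iff, Nat.even_iff]
        have := Nat.even_iff.mp hev
        omega
      · have hAneg : ((u - r) * (v - r)) ^ μ < 0 := hodd.pow_neg hA
        have hsign : (0 < ((u - r) * (v - r)) ^ μ * (eval u q * eval v q)) ↔
            ¬ (0 < eval u q * eval v q) := by
          constructor
          · intro hx hy; nlinarith
          · intro hx
            have hne : eval u q * eval v q ≠ 0 := mul_ne_zero hqu hqv
            have : eval u q * eval v q < 0 := by
              rcases lt_trichotomy (eval u q * eval v q) 0 with h1|h1|h1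
              · exact h1
              · exact absurd h1 hne
              · exact absurd h1 hx
            nlinarith
        rw [hsign, ihq, Nat.even_iff, Nat.even_iff]
        have := Nat.odd_iff.mp hodd
        omega
    · push_neg at hex
      have hfilt : h.roots.filter (fun z => u < z ∧ z < v) = 0 := by
        rw [Multiset.filter_eq_nil]
        intro a ha hcon
        exact hex a hcon.1 hcon.2 ((mem_roots'.mp ha).2)
      rw [hfilt]
      simp only [Multiset.card_zero, Even.zero, iff_true]
      exact pos_prod_of_no_root h u v huv hu hv (fun z h1 h2 h3 => hex z h1 h2 h3)

theorem odd_lemma_pos (h : ℝ[X]) (hh : h ≠ 0) (hdh : derivative h ≠ 0)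
    (α β : ℝ) (hab : α < β) (ha : eval α h = 0) (hb : eval β h = 0)
    (hpos : ∀ z, α < z → z < β → 0 < eval z h) :
    Odd (Multiset.card ((derivative h).roots.filter (fun z => α < z ∧ z < β))) := by
  set dh := derivative h with hdhdef
  set Z : Finset ℝ := dh.roots.toFinset.filter (fun z => α < z ∧ z < β) with hZ
  have hZmem : ∀ z, eval z dh = 0 → α < z → z < β → z ∈ Z := by
    intro z hz h1 h2
    rw [hZ, Finset.mem_filter, Multiset.mem_toFinset, mem_roots']
    exact ⟨⟨hdh, hz⟩, h1, h2⟩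
  have hZgt : ∀ z ∈ Z, α < z := fun z hz => (Finset.mem_filter.mp hz).2.1
  have hZlt : ∀ z ∈ Z, z < β := fun z hz => (Finset.mem_filter.mp hz).2.2
  -- choose u close to α
  set S₁ : Finset ℝ := insert β Z with hS₁
  have hS₁ne : S₁.Nonempty := ⟨β, Finset.mem_insert_self _ _⟩
  set u₀ := S₁.min' hS₁ne with hu₀
  have hu₀gt : α < u₀ := by
    have := S₁.min'_mem hS₁ne
    rw [← hu₀] at this
    rcases Finset.mem_insert.mp this with h1 | h1
    · rw [h1]; exact hab
    · exact hZgt _ h1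
  have hu₀le : u₀ ≤ β := Finset.min'_le _ _ (Finset.mem_insert_self _ _)
  set u := (α + u₀) / 2 with hu
  have hαu : α < u := by rw [hu]; linarith
  have huu₀ : u < u₀ := by rw [hu]; linarith
  have huβ : u < β := lt_of_lt_of_le huu₀ hu₀le
  have hunr : ∀ z, α < z → z ≤ u → eval z dh ≠ 0 := by
    intro z h1 h2 hz
    have hzZ : z ∈ Z := hZmem z hz h1 (lt_of_le_of_lt h2 huβ)
    have : u₀ ≤ z := Finset.min'_le _ _ (Finset.mem_insert_of_mem hzZ)
    linarith
  -- choose v close to β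
  set S₂ : Finset ℝ := insert α Z with hS₂
  have hS₂ne : S₂.Nonempty := ⟨α, Finset.mem_insert_self _ _⟩
  set v₀ := S₂.max' hS₂ne with hv₀
  have hv₀lt : v₀ < β := by
    have := S₂.max'_mem hS₂ne
    rw [← hv₀] at this
    rcases Finset.mem_insert.mp this with h1 | h1
    · rw [h1]; exact hab
    · exact hZlt _ h1
  have hv₀ge : α ≤ v₀ := Finset.le_max' _ _ (Finset.mem_insert_self _ _)
  set v := (v₀ + β) / 2 with hv
  have hvβ : v < β := by rw [hv]; linarith
  have hv₀v : v₀ < v := by rw [hv]; linarith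
  have hαv : α < v := lt_of_le_of_lt hv₀ge hv₀v
  have hvnr : ∀ z, v ≤ z → z < β → eval z dh ≠ 0 := by
    intro z h1 h2 hz
    have hzZ : z ∈ Z := hZmem z hz (lt_of_lt_of_le hαv h1) h2
    have : z ≤ v₀ := Finset.le_max' _ _ (Finset.mem_insert_of_mem hzZ)
    linarith
  have hcont : ∀ a b : ℝ, ContinuousOn (fun y => eval y h) (Set.Icc a b) := fun a b => h.continuousOn
  have hderiv : ∀ y : ℝ, HasDerivAt (fun y => eval y h) (eval y dh) y := fun y => h.hasDerivAt y
  have hdhcont : ∀ a b : ℝ, ContinuousOn (fun y => eval y dh) (Set.Icc a b) := fun a b => dh.continuousOn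
  -- dh(u) > 0
  have hdu : 0 < eval u dh := by
    obtain ⟨ξ, hξ, hξval⟩ := exists_hasDerivAt_eq_slope (fun y => eval y h) (fun y => eval y dh)
      hαu (hcont α u) (fun y _ => hderiv y)
    have hξpos : 0 < eval ξ dh := by
      rw [hξval, ha]
      have h1 : 0 < eval u h := hpos u hαu huβ
      have h2 : 0 < u - α := by linarith
      exact div_pos (by linarith) h2
    rcases lt_trichotomy (eval u dh) 0 with h1 | h1 | h1
    · exfalso
      have hξu : ξ < u := hξ.2
      obtain ⟨w, hw, hw0⟩ := intermediate_value_Ioo' hξu.le (hdhcont ξ u) ⟨h1, hξpos⟩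
      exact hunr w (lt_trans hξ.1 hw.1) hw.2.le hw0
    · exact absurd h1 (hunr u hαu le_rfl)
    · exact h1
  -- dh(v) < 0
  have hdv : eval v dh < 0 := by
    obtain ⟨η, hη, hηval⟩ := exists_hasDerivAt_eq_slope (fun y => eval y h) (fun y => eval y dh)
      hvβ (hcont v β) (fun y _ => hderiv y)
    have hηneg : eval η dh < 0 := by
      rw [hηval, hb]
      have h0 : 0 < eval v h := hpos v hαv hvβ
      have h2 : 0 < β - v := by linarith
      have : (0 - eval v h) / (β - v) < 0 := by
        apply div_neg_of_neg_of_pos _ h2; linarith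
      exact this
    rcases lt_trichotomy (eval v dh) 0 with h1 | h1 | h1
    · exact h1
    · exact absurd h1 (hvnr v le_rfl hvβ)
    · exfalso
      have hvη : v < η := hη.1
      obtain ⟨w, hw, hw0⟩ := intermediate_value_Ioo' hvη.le (hdhcont v η) ⟨hηneg, h1⟩
      exact hvnr w hw.1.le (lt_trans hw.2 hη.2) hw0
  -- u < v
  have huv : u < v := by
    rcases lt_trichotomy u v with h1 | h1 | h1
    · exact h1
    · exfalso; rw [h1] at hdu; linarith
    · exfalso
      obtain ⟨w, hw, hw0⟩ := intermediate_value_Ioo h1.le (hdhcont v u) ⟨hdv, hdu⟩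
      exact hvnr w hw.1.le (lt_trans hw.2 (lt_of_lt_of_le huu₀ hu₀le)) hw0
  -- apply parity
  have hprodneg : eval u dh * eval v dh < 0 := mul_neg_of_pos_of_neg hdu hdv
  have hpar := parity_lemma dh.natDegree dh le_rfl hdh u v huv
    (hunr u hαu le_rfl) (hvnr v le_rfl hvβ)
  have hnoteven : ¬ Even (Multiset.card (dh.roots.filter (fun z => u < z ∧ z < v))) := by
    rw [← hpar]; intro hcon; linarith
  have hfilteq : dh.roots.filter (fun z => u < z ∧ z < v)
      = dh.roots.filter (fun z => α < z ∧ z < β) := by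
    apply Multiset.filter_congr
    intro z hz
    constructor
    · rintro ⟨h1, h2⟩; exact ⟨lt_trans hαu h1, lt_trans h2 hvβ⟩
    · rintro ⟨h1, h2⟩
      have hzZ : z ∈ Z := hZmem z ((mem_roots'.mp hz).2) h1 h2
      constructor
      · exact lt_of_lt_of_le huu₀ (Finset.min'_le _ _ (Finset.mem_insert_of_mem hzZ))
      · exact lt_of_le_of_lt (Finset.le_max' _ _ (Finset.mem_insert_of_mem hzZ)) hv₀v
  rw [← hfilteq, ← Nat.not_even_iff_odd]
  exact hnoteven

theorem odd_lemma (h : ℝ[X]) (hh : h ≠ 0) (hdh : derivative h ≠ 0)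
    (α β : ℝ) (hab : α < β) (ha : eval α h = 0) (hb : eval β h = 0)
    (hgap : ∀ z, α < z → z < β → eval z h ≠ 0) :
    Odd (Multiset.card ((derivative h).roots.filter (fun z => α < z ∧ z < β))) := by
  have hmid : α < (α + β) / 2 ∧ (α + β) / 2 < β := by constructor <;> linarith
  have hsign : (∀ z, α < z → z < β → 0 < eval z h) ∨ (∀ z, α < z → z < β → eval z h < 0) := by
    rcases lt_trichotomy (eval ((α + β)/2) h) 0 with hmneg | hm0 | hmpos
    · right
      intro z h1 h2
      rcases lt_trichotomy (eval z h) 0 with g1 | g1 | g1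
      · exact g1
      · exact absurd g1 (hgap z h1 h2)
      · exfalso
        rcases lt_trichotomy z ((α + β)/2) with o1 | o1 | o1
        · obtain ⟨w, hw, hw0⟩ := intermediate_value_Ioo' o1.le h.continuousOn ⟨hmneg, g1⟩
          exact hgap w (lt_trans h1 hw.1) (lt_trans hw.2 hmid.2) hw0
        · rw [o1] at g1; linarith
        · obtain ⟨w, hw, hw0⟩ := intermediate_value_Ioo o1.le h.continuousOn ⟨hmneg, g1⟩
          exact hgap w (lt_trans hmid.1 hw.1) (lt_trans hw.2 h2) hw0
    · exact absurd hm0 (hgap _ hmid.1 hmid.2)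
    · left
      intro z h1 h2
      rcases lt_trichotomy (eval z h) 0 with g1 | g1 | g1
      · exfalso
        rcases lt_trichotomy z ((α + β)/2) with o1 | o1 | o1
        · obtain ⟨w, hw, hw0⟩ := intermediate_value_Ioo o1.le h.continuousOn ⟨g1, hmpos⟩
          exact hgap w (lt_trans h1 hw.1) (lt_trans hw.2 hmid.2) hw0
        · rw [o1] at g1; linarith
        · obtain ⟨w, hw, hw0⟩ := intermediate_value_Ioo' o1.le h.continuousOn ⟨g1, hmpos⟩
          exact hgap w (lt_trans hmid.1 hw.1) (lt_trans hw.2 h2) hw0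
      · exact absurd g1 (hgap z h1 h2)
      · exact g1
  rcases hsign with hsp | hsn
  · exact odd_lemma_pos h hh hdh α β hab ha hb hsp
  · have hneg : derivative (-h) = -(derivative h) := by simp
    have hroots : (derivative (-h)).roots = (derivative h).roots := by
      rw [hneg]
      have h2 : -(derivative h) = C (-1 : ℝ) * derivative h := by
        rw [map_neg C (1:ℝ), map_one]; ring
      rw [h2, roots_C_mul _ (by norm_num)]
    have := odd_lemma_pos (-h) (neg_ne_zero.mpr hh) (by rw [hneg]; exact neg_ne_zero.mpr hdh)
      α β hab (by simp [ha]) (by simp [hb])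
      (fun z h1 h2 => by simp only [eval_neg]; linarith [hsn z h1 h2])
    rwa [hroots] at this


namespace AuxBirkhoff

variable (E : Finset (ℕ × ℕ)) (x : ℕ → ℝ) (g : ℝ[X])

def ff (k : ℕ) : ℝ[X] := derivative^[k] g

def muu (k : ℕ) (y : ℝ) : ℕ := rootMultiplicity y (ff g k)

def Phi (k : ℕ) (y : ℝ) : ℕ :=
  (E.filter (fun p => x p.1 = y ∧ k < p.2 ∧ p.2 < k + muu g k y)).card

def rho (k : ℕ) (y : ℝ) : ℕ := muu g k y - Phi E x g k y

def TT (k : ℕ) : ℕ := ∑ y ∈ (ff g k).roots.toFinset, rho E x g k y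

def ee (k : ℕ) (z : ℝ) : ℕ := (E.filter (fun p => p.2 = k + 1 ∧ x p.1 = z)).card

def AA (k : ℕ) : ℕ := (E.filter (fun p => p.2 ≤ k)).card

variable {E x g}

theorem ff_succ (k : ℕ) : ff g (k + 1) = derivative (ff g k) :=
  Function.iterate_succ_apply' _ _ _

theorem ff_add (k j : ℕ) : ff g (k + j) = derivative^[j] (ff g k) := by
  rw [ff, ff, add_comm, Function.iterate_add_apply]

section WithHyp

variable {m d : ℕ}
variable (hE : ∀ p ∈ E, p.1 < m ∧ p.2 ≤ d) (hx : Set.InjOn x (Set.Iio m))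

include hE hx

theorem row_eq {p q : ℕ × ℕ} (hp : p ∈ E) (hq : q ∈ E) (hxy : x p.1 = x q.1) :
    p.1 = q.1 :=
  hx (Set.mem_Iio.mpr (hE p hp).1) (Set.mem_Iio.mpr (hE q hq).1) hxy

theorem ee_le_one (k : ℕ) (z : ℝ) : ee E x k z ≤ 1 := by
  rw [ee, Finset.card_le_one]
  intro p hp q hq
  rw [Finset.mem_filter] at hp hq
  have h1 : p.1 = q.1 := row_eq hE hx hp.1 hq.1 (by rw [hp.2.2, hq.2.2])
  exact Prod.ext h1 (by rw [hp.2.1, hq.2.1])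

theorem Phi_le (k : ℕ) (y : ℝ) : Phi E x g k y ≤ muu g k y - 1 := by
  rw [Phi]
  have := Finset.card_le_card_of_injOn (fun p => p.2)
    (s := E.filter (fun p => x p.1 = y ∧ k < p.2 ∧ p.2 < k + muu g k y))
    (t := Finset.Ioo k (k + muu g k y)) ?_ ?_
  · rwa [Nat.card_Ioo, Nat.add_sub_cancel_left] at this
  · intro p hp
    rw [Finset.mem_coe, Finset.mem_filter] at hp
    exact Finset.mem_Ioo.mpr ⟨hp.2.2.1, hp.2.2.2⟩
  · intro p hp q hq hpq
    simp only [Finset.coe_filter, Set.mem_setOf_eq] at hp hq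
    have h1 : p.1 = q.1 := row_eq hE hx hp.1 hq.1 (by rw [hp.2.1, hq.2.1])
    exact Prod.ext h1 hpq

theorem rho_pos {k : ℕ} {y : ℝ} (hmu : 0 < muu g k y) : 1 ≤ rho E x g k y := by
  have h1 := Phi_le hE hx (g := g) k y
  rw [rho]; omega

end WithHyp

theorem rho_eq_zero_of_not_root {k : ℕ} {y : ℝ} (hk : ff g k ≠ 0)
    (h : eval y (ff g k) ≠ 0) : rho E x g k y = 0 := by
  have : muu g k y = 0 := rootMultiplicity_eq_zero h
  rw [rho, this]; omega

theorem iterate_deriv_rootMultiplicity_ne_zero (h : ℝ[X]) (hh : h ≠ 0) (a : ℝ) :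
    eval a (derivative^[rootMultiplicity a h] h) ≠ 0 := by
  intro hcon
  have : (rootMultiplicity a h) < rootMultiplicity a h := by
    refine lt_rootMultiplicity_of_isRoot_iterate_derivative hh (fun mm hmm => ?_)
    rcases eq_or_lt_of_le hmm with rfl | hlt
    · exact hcon
    · exact isRoot_iterate_derivative_of_lt_rootMultiplicity hlt
  omega


theorem deriv_ne_zero_of_root {p : ℝ[X]} (hp : p ≠ 0) {z : ℝ} (hz : eval z p = 0) :
    derivative p ≠ 0 := by
  intro hcon
  have h1 := Polynomial.eq_C_of_derivative_eq_zero hcon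
  rw [h1, eval_C] at hz
  rw [h1, hz, map_zero] at hp
  exact hp rfl

section Steps

variable {m d : ℕ}
variable (hE : ∀ p ∈ E, p.1 < m ∧ p.2 ≤ d) (hx : Set.InjOn x (Set.Iio m))
variable (hz : ∀ p ∈ E, eval (x p.1) (ff g p.2) = 0)

include hE hx hz

theorem rho_step {k : ℕ} {z : ℝ} (hk : ff g k ≠ 0) (hroot : eval z (ff g k) = 0) :
    (rho E x g k z - 1) + ee E x k z ≤ rho E x g (k + 1) z := by
  have hmu : 0 < muu g k z := (rootMultiplicity_pos hk).mpr hroot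
  have hmu' : muu g (k+1) z = muu g k z - 1 := by
    rw [muu, muu, ff_succ]
    exact derivative_rootMultiplicity_of_root hroot
  have hPhile := Phi_le hE hx (g := g) k z
  have hsub : E.filter (fun p => x p.1 = z ∧ k+1 < p.2 ∧ p.2 < (k+1) + muu g (k+1) z)
      ⊆ E.filter (fun p => x p.1 = z ∧ k < p.2 ∧ p.2 < k + muu g k z) := by
    intro p hp
    rw [Finset.mem_filter] at hp ⊢
    refine ⟨hp.1, hp.2.1, by omega, ?_⟩
    have := hp.2.2.2
    omega
  by_cases hne : (E.filter (fun p => p.2 = k + 1 ∧ x p.1 = z)).Nonempty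
  · obtain ⟨p₀, hp₀⟩ := hne
    rw [Finset.mem_filter] at hp₀
    have hee : ee E x k z ≤ 1 := ee_le_one hE hx k z
    have hroot' : eval z (ff g (k+1)) = 0 := by
      have := hz p₀ hp₀.1
      rwa [hp₀.2.1, hp₀.2.2] at this
    have hk1 : ff g (k+1) ≠ 0 := by
      rw [ff_succ]; exact deriv_ne_zero_of_root hk hroot
    have hmu1' : 0 < muu g (k+1) z := (rootMultiplicity_pos hk1).mpr hroot'
    have hmu2 : 2 ≤ muu g k z := by omega
    have hp₀mem : p₀ ∈ E.filter (fun p => x p.1 = z ∧ k < p.2 ∧ p.2 < k + muu g k z) := by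
      rw [Finset.mem_filter]
      exact ⟨hp₀.1, hp₀.2.2, by omega, by omega⟩
    have hp₀notmem : p₀ ∉ E.filter
        (fun p => x p.1 = z ∧ k+1 < p.2 ∧ p.2 < (k+1) + muu g (k+1) z) := by
      rw [Finset.mem_filter]
      rintro ⟨-, -, h2, -⟩
      omega
    have hins : insert p₀ (E.filter
        (fun p => x p.1 = z ∧ k+1 < p.2 ∧ p.2 < (k+1) + muu g (k+1) z))
        ⊆ E.filter (fun p => x p.1 = z ∧ k < p.2 ∧ p.2 < k + muu g k z) := by
      intro p hp
      rcases Finset.mem_insert.mp hp with rfl | hp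
      · exact hp₀mem
      · exact hsub hp
    have hcard := Finset.card_le_card hins
    rw [Finset.card_insert_of_notMem hp₀notmem] at hcard
    have hA : Phi E x g (k+1) z + 1 ≤ Phi E x g k z := hcard
    rw [rho, rho, hmu']
    omega
  · have hee : ee E x k z = 0 := by
      rw [ee, Finset.card_eq_zero, ← Finset.not_nonempty_iff_eq_empty]
      exact hne
    have hcard := Finset.card_le_card hsub
    have hA : Phi E x g (k+1) z ≤ Phi E x g k z := hcard
    rw [rho, rho, hee, hmu']
    omega

theorem rho_new {k : ℕ} {z : ℝ} (hk1 : ff g (k+1) ≠ 0) (hent : 0 < ee E x k z) :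
    1 ≤ rho E x g (k+1) z := by
  obtain ⟨p₀, hp₀⟩ := Finset.card_pos.mp hent
  rw [Finset.mem_filter] at hp₀
  have hroot' : eval z (ff g (k+1)) = 0 := by
    have := hz p₀ hp₀.1
    rwa [hp₀.2.1, hp₀.2.2] at this
  exact rho_pos hE hx ((rootMultiplicity_pos hk1).mpr hroot')

theorem rho_two (hseqh : ∀ i k t, IsSequence d E i k t → Odd t → k = 0)
    {k : ℕ} {z : ℝ} (hk1 : ff g (k+1) ≠ 0) (hnr : eval z (ff g k) ≠ 0)
    (hent : 0 < ee E x k z) (hodd : Odd (muu g (k+1) z)) :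
    2 ≤ rho E x g (k+1) z := by
  obtain ⟨p₀, hp₀⟩ := Finset.card_pos.mp hent
  rw [Finset.mem_filter] at hp₀
  have hroot' : eval z (ff g (k+1)) = 0 := by
    have := hz p₀ hp₀.1
    rwa [hp₀.2.1, hp₀.2.2] at this
  have hl1 : 0 < muu g (k+1) z := (rootMultiplicity_pos hk1).mpr hroot'
  by_contra hcon
  push_neg at hcon
  have hPhile := Phi_le hE hx (g := g) (k+1) z
  have hPhige : muu g (k+1) z - 1 ≤ Phi E x g (k+1) z := by
    rw [rho] at hcon; omega
  have hPhieq : Phi E x g (k+1) z = muu g (k+1) z - 1 := by omega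
  -- the filter has full card, so its column image is all of Ioo
  set F := E.filter (fun p => x p.1 = z ∧ k+1 < p.2 ∧ p.2 < (k+1) + muu g (k+1) z) with hF
  have hFcard : F.card = muu g (k+1) z - 1 := hPhieq
  have himsub : F.image (fun p => p.2) ⊆ Finset.Ioo (k+1) (k+1 + muu g (k+1) z) := by
    intro c hc
    obtain ⟨p, hp, rfl⟩ := Finset.mem_image.mp hc
    rw [hF, Finset.mem_filter] at hp
    exact Finset.mem_Ioo.mpr ⟨hp.2.2.1, hp.2.2.2⟩
  have himcard : (F.image (fun p => p.2)).card = muu g (k+1) z - 1 := by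
    rw [Finset.card_image_of_injOn, hFcard]
    intro p hp q hq hpq
    simp only [hF, Finset.coe_filter, Set.mem_setOf_eq] at hp hq
    have h1 : p.1 = q.1 := row_eq hE hx hp.1 hq.1 (by rw [hp.2.1, hq.2.1])
    exact Prod.ext h1 hpq
  have himeq : F.image (fun p => p.2) = Finset.Ioo (k+1) (k+1 + muu g (k+1) z) := by
    apply Finset.eq_of_subset_of_card_le himsub
    rw [himcard, Nat.card_Ioo]
    omega
  have hallcols : ∀ c ∈ Finset.Ioo (k+1) (k+1 + muu g (k+1) z), (p₀.1, c) ∈ E := by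
    intro c hc
    rw [← himeq] at hc
    obtain ⟨p, hp, rfl⟩ := Finset.mem_image.mp hc
    have hpF := hp
    rw [hF, Finset.mem_filter] at hpF
    have h1 : p.1 = p₀.1 := row_eq hE hx hpF.1 hp₀.1 (by rw [hpF.2.1, hp₀.2.2])
    have : (p₀.1, p.2) = p := Prod.ext h1.symm rfl
    rw [this]
    exact hpF.1
  have hseqfull : ∀ j < muu g (k+1) z, (p₀.1, (k+1) + j) ∈ E := by
    intro j hj
    rcases Nat.eq_zero_or_pos j with rfl | hjpos
    · have : (p₀.1, k+1) = p₀ := Prod.ext rfl hp₀.2.1.symm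
      rw [add_zero, this]
      exact hp₀.1
    · exact hallcols _ (Finset.mem_Ioo.mpr ⟨by omega, by omega⟩)
  have hleft : (p₀.1, k) ∉ E := by
    intro hcon2
    have := hz _ hcon2
    rw [hp₀.2.2] at this
    exact hnr this
  have hright : (p₀.1, (k+1) + muu g (k+1) z) ∉ E := by
    intro hcon2
    have h1 := hz _ hcon2
    rw [hp₀.2.2] at h1
    have h2 : ff g ((k+1) + muu g (k+1) z) = derivative^[muu g (k+1) z] (ff g (k+1)) :=
      ff_add _ _
    rw [h2] at h1
    exact iterate_deriv_rootMultiplicity_ne_zero (ff g (k+1)) hk1 z h1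
  have hisseq : IsSequence d E p₀.1 (k+1) (muu g (k+1) z) := by
    refine ⟨hl1, hseqfull, Or.inr ?_, Or.inr hright⟩
    simpa using hleft
  have := hseqh _ _ _ hisseq hodd
  omega

theorem gap_witness (hseqh : ∀ i k t, IsSequence d E i k t → Odd t → k = 0)
    {k : ℕ} (hk : ff g k ≠ 0) (hk1 : ff g (k+1) ≠ 0)
    {u v : ℝ} (huv : u < v) (hu : eval u (ff g k) = 0) (hv : eval v (ff g k) = 0)
    (hgap : ∀ z, u < z → z < v → eval z (ff g k) ≠ 0) :
    ∃ w, eval w (ff g (k+1)) = 0 ∧ u < w ∧ w < v ∧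
      ee E x k w + 1 ≤ rho E x g (k+1) w := by
  have hoddtot : Odd (Multiset.card
      ((ff g (k+1)).roots.filter (fun z => u < z ∧ z < v))) := by
    rw [ff_succ]
    exact odd_lemma (ff g k) hk (ff_succ k ▸ hk1) u v huv hu hv hgap
  by_cases hcase : ∃ w, eval w (ff g (k+1)) = 0 ∧ u < w ∧ w < v ∧ ee E x k w = 0
  · obtain ⟨w, hw1, hw2, hw3, hw4⟩ := hcase
    refine ⟨w, hw1, hw2, hw3, ?_⟩
    rw [hw4]
    exact rho_pos hE hx ((rootMultiplicity_pos hk1).mpr hw1)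
  · push_neg at hcase
    by_cases hcase2 : ∃ w, eval w (ff g (k+1)) = 0 ∧ u < w ∧ w < v ∧ Odd (muu g (k+1) w)
    · obtain ⟨w, hw1, hw2, hw3, hw4⟩ := hcase2
      refine ⟨w, hw1, hw2, hw3, ?_⟩
      have hee1 : ee E x k w ≤ 1 := ee_le_one hE hx k w
      have hee0 : ee E x k w ≠ 0 := hcase w hw1 hw2 hw3
      have := rho_two hE hx hz hseqh hk1 (hgap w hw2 hw3) (by omega) hw4
      omega
    · exfalso
      push_neg at hcase2
      -- every root of ff (k+1) in the interval has even multiplicity, total is even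
      have heven : Even (Multiset.card
          ((ff g (k+1)).roots.filter (fun z => u < z ∧ z < v))) := by
        set M := (ff g (k+1)).roots.filter (fun z => u < z ∧ z < v) with hM
        rw [← Multiset.toFinset_sum_count_eq M]
        apply Finset.even_sum
        intro z hzM
        have hzM' := hzM
        rw [hM, Multiset.toFinset_filter, Finset.mem_filter, Multiset.mem_toFinset] at hzM'
        obtain ⟨hzroots, hz1, hz2⟩ := hzM'
        have hzeval : eval z (ff g (k+1)) = 0 := (mem_roots'.mp hzroots).2
        have hcount : M.count z = muu g (k+1) z := by
          rw [hM, Multiset.count_filter, if_pos ⟨hz1, hz2⟩, count_roots]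
          rfl
        rw [hcount]
        rcases Nat.even_or_odd (muu g (k+1) z) with he | ho
        · exact he
        · exact absurd ho (by simpa using hcase2 z hzeval hz1 hz2)
      rw [Nat.even_iff] at heven
      rw [Nat.odd_iff] at hoddtot
      omega

theorem step_main (hseqh : ∀ i k t, IsSequence d E i k t → Odd t → k = 0)
    {k : ℕ} (hk : ff g k ≠ 0) (hk1 : ff g (k+1) ≠ 0)
    (hne : (ff g k).roots.toFinset.Nonempty) :
    TT E x g k + (E.filter (fun p => p.2 = k+1)).card ≤ TT E x g (k+1) + 1 := by
  classical
  set R : Finset ℝ := (ff g k).roots.toFinset with hR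
  set R' : Finset ℝ := (ff g (k+1)).roots.toFinset with hR'
  set S : Finset ℝ := R ∪ R' with hS
  have hmemR : ∀ z, z ∈ R ↔ eval z (ff g k) = 0 := by
    intro z
    rw [hR, Multiset.mem_toFinset, mem_roots']
    constructor
    · exact fun h => h.2
    · exact fun h => ⟨hk, h⟩
  have hmemR' : ∀ z, z ∈ R' ↔ eval z (ff g (k+1)) = 0 := by
    intro z
    rw [hR', Multiset.mem_toFinset, mem_roots']
    constructor
    · exact fun h => h.2
    · exact fun h => ⟨hk1, h⟩
  set base : ℝ → ℕ :=
    fun z => (if eval z (ff g k) = 0 then rho E x g k z - 1 else 0) + ee E x k z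
    with hbase
  -- pointwise bound
  have hpt : ∀ z ∈ S, base z ≤ rho E x g (k+1) z := by
    intro z _
    simp only [hbase]
    by_cases hzr : eval z (ff g k) = 0
    · rw [if_pos hzr]
      exact rho_step hE hx hz hk hzr
    · rw [if_neg hzr, zero_add]
      rcases Nat.eq_zero_or_pos (ee E x k z) with h0 | hpos
      · rw [h0]; omega
      · have h1 := rho_new hE hx hz hk1 hpos
        have h2 := ee_le_one hE hx k z
        omega
  -- total as sum over S
  have hT1 : TT E x g (k+1) = ∑ z ∈ S, rho E x g (k+1) z := by
    rw [TT]
    apply Finset.sum_subset (Finset.subset_union_right)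
    intro z hzS hznR
    exact rho_eq_zero_of_not_root hk1 (fun hcon => hznR ((hmemR' z).mpr hcon))
  -- split off the surplus
  have hsplit : ∑ z ∈ S, rho E x g (k+1) z
      = (∑ z ∈ S, base z) + ∑ z ∈ S, (rho E x g (k+1) z - base z) := by
    rw [← Finset.sum_add_distrib]
    apply Finset.sum_congr rfl
    intro z hzS
    have := hpt z hzS
    omega
  -- the base sum
  have hbasesplit : ∑ z ∈ S, base z
      = (∑ z ∈ S, if eval z (ff g k) = 0 then rho E x g k z - 1 else 0)
        + ∑ z ∈ S, ee E x k z := by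
    rw [← Finset.sum_add_distrib]
  have hifsum : (∑ z ∈ S, if eval z (ff g k) = 0 then rho E x g k z - 1 else 0)
      = ∑ z ∈ R, (rho E x g k z - 1) := by
    rw [← Finset.sum_subset (Finset.subset_union_left (s₂ := R'))]
    · apply Finset.sum_congr rfl
      intro z hzR
      rw [if_pos ((hmemR z).mp hzR)]
    · intro z hzS hznR
      rw [if_neg (fun hcon => hznR ((hmemR z).mpr hcon))]
  have hrpos : ∀ z ∈ R, 1 ≤ rho E x g k z := by
    intro z hzR
    exact rho_pos hE hx ((rootMultiplicity_pos hk).mpr ((hmemR z).mp hzR))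
  have hTk : TT E x g k = (∑ z ∈ R, (rho E x g k z - 1)) + R.card := by
    rw [TT, ← hR]
    have hcg : ∀ z ∈ R, rho E x g k z = (rho E x g k z - 1) + 1 := by
      intro z hzz
      have := hrpos z hzz
      omega
    rw [Finset.sum_congr rfl hcg, Finset.sum_add_distrib, Finset.sum_const, smul_eq_mul, mul_one]
  -- column k+1 entries sum
  have heesum : ∑ z ∈ S, ee E x k z = (E.filter (fun p => p.2 = k+1)).card := by
    rw [Finset.card_eq_sum_card_fiberwise
      (f := fun p => x p.1) (t := S) ?_]
    · apply Finset.sum_congr rfl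
      intro z _
      rw [ee, Finset.filter_filter]
    · intro p hp
      rw [Finset.mem_coe, Finset.mem_filter] at hp
      have : eval (x p.1) (ff g (k+1)) = 0 := by
        have := hz p hp.1
        rwa [hp.2] at this
      exact Finset.mem_union_right _ ((hmemR' _).mpr this)
  -- surplus bound via gap witnesses
  have hsurp : R.card - 1 ≤ ∑ z ∈ S, (rho E x g (k+1) z - base z) := by
    rcases Nat.lt_or_ge R.card 2 with hsmall | hbig
    · omega
    · set m₀ := R.min' hne with hm₀
      set P := R.erase m₀ with hP
      have hPcard : P.card = R.card - 1 := by
        rw [hP, Finset.card_erase_of_mem (R.min'_mem hne)]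
      have hblspec : ∀ v ∈ P, ∃ b, b ∈ R ∧ b < v ∧ ∀ z ∈ R, z < v → z ≤ b := by
        intro v hv
        have hvR : v ∈ R := Finset.mem_of_mem_erase hv
        have hvne : v ≠ m₀ := Finset.ne_of_mem_erase hv
        have hm₀lt : m₀ < v := lt_of_le_of_ne (R.min'_le v hvR) (Ne.symm hvne)
        have hfne : (R.filter (fun y => y < v)).Nonempty :=
          ⟨m₀, Finset.mem_filter.mpr ⟨R.min'_mem hne, hm₀lt⟩⟩
        refine ⟨(R.filter (fun y => y < v)).max' hfne, ?_, ?_, ?_⟩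
        · have := (R.filter (fun y => y < v)).max'_mem hfne
          exact (Finset.mem_filter.mp this).1
        · have := (R.filter (fun y => y < v)).max'_mem hfne
          exact (Finset.mem_filter.mp this).2
        · intro z hzR hzv
          exact Finset.le_max' (R.filter (fun y => y < v)) z (Finset.mem_filter.mpr ⟨hzR, hzv⟩)
      choose! bl hbl1 hbl2 hbl3 using hblspec
      have hwitspec : ∀ v ∈ P, ∃ w, eval w (ff g (k+1)) = 0 ∧ bl v < w ∧ w < v ∧
          ee E x k w + 1 ≤ rho E x g (k+1) w := by
        intro v hv
        have hvR : v ∈ R := Finset.mem_of_mem_erase hv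
        refine gap_witness hE hx hz hseqh hk hk1 (hbl2 v hv) ?_ ?_ ?_
        · exact (hmemR _).mp (hbl1 v hv)
        · exact (hmemR _).mp hvR
        · intro z h1 h2 hcon
          have := hbl3 v hv z ((hmemR z).mpr hcon) h2
          linarith
      choose! w hw1 hw2 hw3 hw4 using hwitspec
      have hinj : Set.InjOn w ↑P := by
        intro v₁ hv₁ v₂ hv₂ heq
        by_contra hnev
        rcases lt_trichotomy v₁ v₂ with hlt | he | hgt
        · have h1 : v₁ ≤ bl v₂ := hbl3 v₂ hv₂ v₁
            (Finset.mem_of_mem_erase hv₁) hlt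
          have := hw3 v₁ hv₁
          have := hw2 v₂ hv₂
          rw [heq] at *
          linarith
        · exact hnev he
        · have h1 : v₂ ≤ bl v₁ := hbl3 v₁ hv₁ v₂
            (Finset.mem_of_mem_erase hv₂) hgt
          have := hw3 v₂ hv₂
          have := hw2 v₁ hv₁
          rw [heq] at *
          linarith
      have himsub : P.image w ⊆ S := by
        intro z hzim
        obtain ⟨v, hv, rfl⟩ := Finset.mem_image.mp hzim
        exact Finset.mem_union_right _ ((hmemR' _).mpr (hw1 v hv))
      have himcard : (P.image w).card = P.card := Finset.card_image_of_injOn hinj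
      have himlb : ∀ z ∈ P.image w, 1 ≤ rho E x g (k+1) z - base z := by
        intro z hzim
        obtain ⟨v, hv, rfl⟩ := Finset.mem_image.mp hzim
        have hnr : eval (w v) (ff g k) ≠ 0 := by
          intro hcon
          have := hbl3 v hv (w v) ((hmemR _).mpr hcon) (hw3 v hv)
          have := hw2 v hv
          linarith
        have hbasev : base (w v) = ee E x k (w v) := by
          simp only [hbase, if_neg hnr, zero_add]
        rw [hbasev]
        have := hw4 v hv
        omega
      calc R.card - 1 = (P.image w).card := by omega
        _ ≤ ∑ z ∈ P.image w, (rho E x g (k+1) z - base z) := by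
            have h9 := Finset.card_nsmul_le_sum (P.image w)
              (fun z => rho E x g (k+1) z - base z) 1 himlb
            simpa using h9
        _ ≤ ∑ z ∈ S, (rho E x g (k+1) z - base z) :=
            Finset.sum_le_sum_of_subset himsub
  have hRpos : 1 ≤ R.card := Finset.card_pos.mpr hne
  rw [hT1, hsplit, hbasesplit, hifsum, heesum]
  omega

end Steps

theorem deriv_facts {p : ℝ[X]} (hp : p ≠ 0) (h0 : p.natDegree ≠ 0) :
    derivative p ≠ 0 ∧ (derivative p).natDegree = p.natDegree - 1 := by
  have hcne : (derivative p).coeff (p.natDegree - 1) ≠ 0 := by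
    rw [coeff_derivative]
    apply mul_ne_zero
    · have h1 : p.natDegree - 1 + 1 = p.natDegree := by omega
      rw [h1]
      exact mt leadingCoeff_eq_zero.mp hp
    · have : (0:ℝ) < ((p.natDegree - 1 : ℕ) : ℝ) + 1 := by positivity
      linarith
  have hne : derivative p ≠ 0 := by
    intro hcon
    rw [hcon, coeff_zero] at hcne
    exact hcne rfl
  refine ⟨hne, le_antisymm (natDegree_derivative_le p) (le_natDegree_of_ne_zero hcne)⟩

theorem ff_facts (hg0 : g ≠ 0) :
    ∀ k ≤ g.natDegree, ff g k ≠ 0 ∧ (ff g k).natDegree = g.natDegree - k := by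
  intro k
  induction k with
  | zero => exact fun _ => ⟨hg0, rfl⟩
  | succ k ihk =>
    intro hk1
    obtain ⟨h1, h2⟩ := ihk (by omega)
    have hndpos : (ff g k).natDegree ≠ 0 := by omega
    obtain ⟨h3, h4⟩ := deriv_facts h1 hndpos
    constructor
    · rw [ff_succ]; exact h3
    · rw [ff_succ, h4, h2]
      omega

theorem main_zero {m d : ℕ} (hE : ∀ p ∈ E, p.1 < m ∧ p.2 ≤ d)
    (hpolya : ∀ r, 1 ≤ r → r ≤ d + 1 → r ≤ (E.filter (fun p => p.2 < r)).card)
    (hseqh : ∀ i k t, IsSequence d E i k t → Odd t → k = 0)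
    (hx : Set.InjOn x (Set.Iio m))
    (hg : g ∈ Polynomial.degreeLT ℝ (d + 1))
    (hz : ∀ p ∈ E, eval (x p.1) (derivative^[p.2] g) = 0) :
    g = 0 := by
  by_contra hg0
  have hz' : ∀ p ∈ E, eval (x p.1) (ff g p.2) = 0 := hz
  set n := g.natDegree with hn
  have hnd : n ≤ d := by
    have h1 := Polynomial.mem_degreeLT.mp hg
    have h2 := Polynomial.degree_eq_natDegree hg0
    rw [h2] at h1
    exact_mod_cast Nat.lt_succ_iff.mp (by exact_mod_cast h1)
  have hinv : ∀ k ≤ n, AA E k ≤ TT E x g k + k := by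
    intro k
    induction k with
    | zero =>
      intro _
      have hg0' : ff g 0 ≠ 0 := hg0
      rw [Nat.add_zero, AA, TT]
      rw [Finset.card_eq_sum_card_fiberwise (f := fun p => x p.1)
        (t := (ff g 0).roots.toFinset) ?_]
      · apply Finset.sum_le_sum
        intro z hzR
        have hfib : (Finset.filter (fun p => x p.1 = z) (E.filter (fun p => p.2 ≤ 0))).card ≤ 1 := by
          rw [Finset.card_le_one]
          intro p hp q hq
          rw [Finset.mem_filter, Finset.mem_filter] at hp hq
          have h1 : p.1 = q.1 := row_eq hE hx hp.1.1 hq.1.1 (by rw [hp.2, hq.2])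
          have h2 : p.2 = q.2 := by omega
          exact Prod.ext h1 h2
        have hrpos : 1 ≤ rho E x g 0 z := by
          apply rho_pos hE hx
          apply (rootMultiplicity_pos hg0').mpr
          exact (mem_roots'.mp (Multiset.mem_toFinset.mp hzR)).2
        omega
      · intro p hp
        rw [Finset.mem_coe, Finset.mem_filter] at hp
        have hp2 : p.2 = 0 := by omega
        have := hz' p hp.1
        rw [hp2] at this
        rw [Finset.mem_coe, Multiset.mem_toFinset, mem_roots']
        exact ⟨hg0', this⟩
    | succ k ihk =>
      intro hk1
      have hkn : k ≤ n := by omega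
      have ⟨hfk, _⟩ := ff_facts (g := g) hg0 k hkn
      have ⟨hfk1, _⟩ := ff_facts (g := g) hg0 (k+1) hk1
      have hAsplit : AA E (k+1) = AA E k + (E.filter (fun p => p.2 = k+1)).card := by
        rw [AA, AA]
        rw [← Finset.card_union_of_disjoint]
        · congr 1
          rw [← Finset.filter_or]
          apply Finset.filter_congr
          intro p _
          constructor
          · intro h; omega
          · intro h; omega
        · rw [Finset.disjoint_filter]
          intro p _ h1 h2
          omega
      have hAk : k + 1 ≤ AA E k := by
        have := hpolya (k+1) (by omega) (by omega)
        have heq : E.filter (fun p => p.2 < k+1) = E.filter (fun p => p.2 ≤ k) := by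
          apply Finset.filter_congr
          intro p _
          constructor
          · intro h; omega
          · intro h; omega
        rw [heq] at this
        exact this
      have hTpos : 1 ≤ TT E x g k := by
        have := ihk hkn
        omega
      have hne : (ff g k).roots.toFinset.Nonempty := by
        by_contra hcon
        rw [Finset.not_nonempty_iff_eq_empty] at hcon
        rw [TT, hcon, Finset.sum_empty] at hTpos
        omega
      have hstep := step_main hE hx hz' hseqh hfk hfk1 hne
      have := ihk hkn
      omega
  have hih := hinv n le_rfl
  have hTn : TT E x g n = 0 := by
    have ⟨hfn, hfnd⟩ := ff_facts (g := g) hg0 n le_rfl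
    have : (ff g n).roots = 0 := by
      rw [← Multiset.card_eq_zero]
      have := card_roots' (ff g n)
      omega
    rw [TT, this]
    simp
  have hAn : n + 1 ≤ AA E n := by
    have := hpolya (n+1) (by omega) (by omega)
    have heq : E.filter (fun p => p.2 < n+1) = E.filter (fun p => p.2 ≤ n) := by
      apply Finset.filter_congr
      intro p _
      constructor
      · intro h; omega
      · intro h; omega
    rw [heq] at this
    exact this
  rw [hTn] at hih
  omega




end AuxBirkhoff

end AuxBirkhoffSection


/-- **Corollary, part (ii).** Let `E` be an `m × (d+1)` interpolation matrix
with `|E| = d+1` satisfying the Pólya condition.  If every odd sequence of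
`E` begins in the first column, then `E` is regular. -/
theorem regular_of_odd_sequences_begin_first_column
    (m d : ℕ) (hm : 1 ≤ m)
    (E : Finset (ℕ × ℕ))
    (hE : IsInterpolationMatrix m d E) (hcard : E.card = d + 1)
    (hpolya : PolyaCondition d E)
    (hseq : ∀ i k t, IsSequence d E i k t → Odd t → k = 0) :
    RegularMatrix m d E := by
  classical
  intro x hx c
  -- the evaluation linear map
  set φ : Polynomial.degreeLT ℝ (d+1) →ₗ[ℝ] (↥E → ℝ) :=
    LinearMap.pi (fun p => (Polynomial.leval (x (p : ℕ × ℕ).1)) ∘ₗ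
      (((Polynomial.derivative : ℝ[X] →ₗ[ℝ] ℝ[X]) ^ (p : ℕ × ℕ).2) ∘ₗ
        (Polynomial.degreeLT ℝ (d+1)).subtype)) with hφ
  have hφapply : ∀ (a : Polynomial.degreeLT ℝ (d+1)) (p : ↥E),
      φ a p = Polynomial.eval (x (p : ℕ × ℕ).1)
        (Polynomial.derivative^[(p : ℕ × ℕ).2] (a : ℝ[X])) := by
    intro a p
    rw [hφ]
    simp only [LinearMap.pi_apply, LinearMap.coe_comp, Function.comp_apply,
      Submodule.coe_subtype, Polynomial.leval_apply, Module.End.pow_apply]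
  haveI : FiniteDimensional ℝ (Polynomial.degreeLT ℝ (d+1)) :=
    (Polynomial.degreeLTEquiv ℝ (d+1)).symm.finiteDimensional
  have hfr : Module.finrank ℝ (Polynomial.degreeLT ℝ (d+1))
      = Module.finrank ℝ (↥E → ℝ) := by
    rw [(Polynomial.degreeLTEquiv ℝ (d+1)).finrank_eq, Module.finrank_pi, Module.finrank_pi]
    rw [Fintype.card_fin, Fintype.card_coe, hcard]
  have hinj : Function.Injective φ := by
    rw [injective_iff_map_eq_zero]
    intro a ha
    have hz : ∀ p ∈ E, Polynomial.eval (x p.1)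
        (Polynomial.derivative^[p.2] (a : ℝ[X])) = 0 := by
      intro p hp
      have := congr_fun ha ⟨p, hp⟩
      rw [hφapply] at this
      exact this
    have := AuxBirkhoff.main_zero (E := E) (x := x) (g := (a : ℝ[X]))
      hE hpolya hseq hx a.2 hz
    exact Subtype.ext this
  have hsurj : Function.Surjective φ :=
    (LinearMap.injective_iff_surjective_of_finrank_eq_finrank hfr).mp hinj
  obtain ⟨a, ha⟩ := hsurj (fun p => c (p : ℕ × ℕ))
  refine ⟨(a : ℝ[X]), a.2, ?_⟩
  intro p hp
  have := congr_fun ha ⟨p, hp⟩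
  rw [hφapply] at this
  exact this
end

section
/- Let E be an m × (d+1) interpolation matrix, X a set of m distinct real knots, and 0 ≤ r ≤ d−1. Let E_1 = {(i,k) ∈ E : k ≤ r}, viewed as an m × (r+1) interpolation matrix, and let E_2 = {(i, k−(r+1)) : (i,k) ∈ E, k ≥ r+1}, viewed as an m × (d−r) interpolation matrix. Suppose |E_1| ≤ r+1 and |E_2| ≤ d−r. If the pair (E_1,X) is regular (as an interpolation problem on polynomials of degree at most r) and the pair (E_2,X) is regular (as an interpolation problem on polynomials of degree at most d−r−1), then the pair (E,X) is regular (on polynomials of degree at most d). -/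
open Polynomial

noncomputable def antider (p : Polynomial ℝ) : Polynomial ℝ :=
  ∑ n ∈ Finset.range (p.natDegree + 1), C (p.coeff n / (n + 1)) * X ^ (n + 1)

lemma deriv_antider (p : Polynomial ℝ) : derivative (antider p) = p := by
  rw [antider, map_sum]
  conv_rhs => rw [p.as_sum_range]
  refine Finset.sum_congr rfl fun n _ => ?_
  have hne : ((n : ℝ) + 1) ≠ 0 := by positivity
  rw [derivative_C_mul, derivative_X_pow]
  push_cast
  rw [← mul_assoc, ← C_mul, div_mul_cancel₀ _ hne,
    C_mul_X_pow_eq_monomial]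

lemma degree_antider_lt (p : Polynomial ℝ) (n : ℕ) (h : p.degree < (n : ℕ∞)) :
    (antider p).degree < ((n + 1 : ℕ) : ℕ∞) := by
  by_cases hp : p = 0
  · have : antider p = 0 := by simp [antider, hp]
    rw [this, degree_zero]
    exact_mod_cast WithBot.bot_lt_coe _
  · have hn : p.natDegree < n := (natDegree_lt_iff_degree_lt hp).mpr h
    refine lt_of_le_of_lt (degree_sum_le _ _) ?_
    change _ < ((n + 1 : ℕ) : WithBot ℕ)
    rw [Finset.sup_lt_iff (WithBot.bot_lt_coe _)]
    intro i hi
    rw [Finset.mem_range] at hi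
    refine lt_of_le_of_lt (degree_C_mul_X_pow_le _ _) ?_
    exact_mod_cast (by omega : i + 1 < n + 1)

lemma deriv_iter_antider (j : ℕ) (p : Polynomial ℝ) :
    derivative^[j] (antider^[j] p) = p := by
  induction j with
  | zero => rfl
  | succ j ih =>
    rw [Function.iterate_succ_apply' antider, Function.iterate_succ_apply derivative,
      deriv_antider, ih]

lemma degree_iter_antider_lt (j : ℕ) (p : Polynomial ℝ) (n : ℕ)
    (h : p.degree < (n : ℕ∞)) :
    (antider^[j] p).degree < ((n + j : ℕ) : ℕ∞) := by
  induction j with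
  | zero => simpa using h
  | succ j ih =>
    rw [Function.iterate_succ_apply' antider]
    have := degree_antider_lt _ (n + j) ih
    simpa [Nat.add_assoc] using this

lemma iter_derivative_add (k : ℕ) (p q : Polynomial ℝ) :
    derivative^[k] (p + q) = derivative^[k] p + derivative^[k] q := by
  induction k with
  | zero => rfl
  | succ k ih => rw [Function.iterate_succ_apply', ih, derivative_add,
      Function.iterate_succ_apply', Function.iterate_succ_apply']

/-- **Proposition (splitting).** Let `E` be an `m × (d+1)` interpolation
matrix, `X` a set of `m` distinct knots and `0 ≤ r ≤ d-1`.  Let `E₁` consist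
of the first `r+1` columns of `E` (an `m × (r+1)` interpolation matrix) and
`E₂` of the remaining `d-r` columns, shifted so as to form an `m × (d-r)`
interpolation matrix.  Suppose `|E₁| ≤ r+1` and `|E₂| ≤ d-r`.  If the pair
`(E₁, X)` is regular (for polynomials of degree at most `r`) and the pair
`(E₂, X)` is regular (for polynomials of degree at most `d-r-1`), then the
pair `(E, X)` is regular (for polynomials of degree at most `d`). -/
theorem regular_pair_split (m d r : ℕ) (hm : 1 ≤ m) (hr : r + 1 ≤ d)
    (E : Finset (ℕ × ℕ)) (hE : IsInterpolationMatrix m d E)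
    (x : ℕ → ℝ) (hx : Set.InjOn x (Set.Iio m))
    (E₁ E₂ : Finset (ℕ × ℕ))
    (hE₁ : E₁ = E.filter (fun p => p.2 ≤ r))
    (hE₂ : E₂ = (E.filter (fun p => r + 1 ≤ p.2)).image
      (fun p => (p.1, p.2 - (r + 1))))
    (hcard₁ : E₁.card ≤ r + 1) (hcard₂ : E₂.card ≤ d - r)
    (hreg₁ : RegularPair r E₁ x)
    (hreg₂ : RegularPair (d - r - 1) E₂ x) :
    RegularPair d E x := by
  intro c
  -- Step 1: solve the E₂ problem
  obtain ⟨h, hhdeg, hh⟩ := hreg₂ (fun p => c (p.1, p.2 + (r + 1)))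
  rw [Polynomial.mem_degreeLT] at hhdeg
  have hdr : d - r - 1 + 1 = d - r := by omega
  -- Step 2: antiderivative r+1 times
  set H := antider^[r + 1] h with hHdef
  have hHd : derivative^[r + 1] H = h := deriv_iter_antider _ _
  have hHdeg : H.degree < ((d + 1 : ℕ) : ℕ∞) := by
    have := degree_iter_antider_lt (r + 1) h (d - r - 1 + 1) hhdeg
    have he : d - r - 1 + 1 + (r + 1) = d + 1 := by omega
    rwa [he] at this
  -- Step 3: solve the E₁ problem with correction
  obtain ⟨g₁, hg₁deg, hg₁⟩ := hreg₁
    (fun p => c p - Polynomial.eval (x p.1) (derivative^[p.2] H))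
  rw [Polynomial.mem_degreeLT] at hg₁deg
  refine ⟨g₁ + H, ?_, ?_⟩
  · rw [Polynomial.mem_degreeLT]
    refine lt_of_le_of_lt (degree_add_le _ _) (max_lt ?_ hHdeg)
    exact lt_of_lt_of_le hg₁deg (by exact_mod_cast (by omega : r + 1 ≤ d + 1))
  · rintro ⟨i, k⟩ hik
    have hadd := iter_derivative_add k g₁ H
    rw [hadd, Polynomial.eval_add]
    by_cases hk : k ≤ r
    · have h1 : (i, k) ∈ E₁ := by
        rw [hE₁, Finset.mem_filter]; exact ⟨hik, hk⟩
      have := hg₁ (i, k) h1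
      simp only at this
      rw [this]; ring
    · push_neg at hk
      -- g₁ part vanishes
      have hz : derivative^[k] g₁ = 0 := by
        by_cases hg0 : g₁ = 0
        · simp [hg0]
        · refine Polynomial.iterate_derivative_eq_zero ?_
          have := (natDegree_lt_iff_degree_lt hg0).mpr hg₁deg
          omega
      rw [hz, Polynomial.eval_zero, zero_add]
      have h2 : (i, k - (r + 1)) ∈ E₂ := by
        rw [hE₂, Finset.mem_image]
        exact ⟨(i, k), Finset.mem_filter.mpr ⟨hik, by omega⟩, rfl⟩
      have hsplit : derivative^[k] H = derivative^[k - (r + 1)] h := by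
        conv_lhs => rw [show k = (k - (r + 1)) + (r + 1) from by omega]
        rw [Function.iterate_add_apply, hHd]
      rw [hsplit]
      have := hh (i, k - (r + 1)) h2
      simp only at this
      rw [this]
      congr 2
      omega
end

section
/- For any finite sequence (u_i)_{0 ≤ i ≤ n} of real numbers with n ≥ 1, there exists an index s ∈ {0,…,n−1} such that (u_{s+t} − u_s)/t ≤ (u_n − u_0)/n for every t = 1,…,n−s. -/
/-- **Lemma (slope lemma).** For any finite sequence `u 0, …, u n` of real
numbers with `n ≥ 1` there is an index `s ∈ {0, …, n-1}` such that
`(u (s+t) - u s) / t ≤ (u n - u 0) / n` for every `t = 1, …, n - s`. -/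
theorem slope_lemma (n : ℕ) (hn : 1 ≤ n) (u : ℕ → ℝ) :
    ∃ s < n, ∀ t, 1 ≤ t → t ≤ n - s →
      (u (s + t) - u s) / (t : ℝ) ≤ (u n - u 0) / (n : ℝ) := by
  set c : ℝ := (u n - u 0) / (n : ℝ) with hc
  set v : ℕ → ℝ := fun i => u i - (i : ℝ) * c with hv
  have hn0 : (n : ℝ) ≠ 0 := by positivity
  have hvn : v n = v 0 := by
    simp only [hv, hc]
    field_simp
    rw [Nat.cast_zero]; ring
  -- existence of a maximizer
  have hex : ∃ k, k ≤ n ∧ ∀ j ≤ n, v j ≤ v k := by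
    obtain ⟨k, hk, hmax⟩ := Finset.exists_max_image (Finset.range (n+1)) v
      ⟨0, Finset.mem_range.mpr (Nat.succ_pos n)⟩
    exact ⟨k, Nat.lt_succ_iff.mp (Finset.mem_range.mp hk),
      fun j hj => hmax j (Finset.mem_range.mpr (Nat.lt_succ_iff.mpr hj))⟩
  classical
  set s := Nat.find hex with hs
  obtain ⟨hsn, hsmax⟩ := Nat.find_spec hex
  have hslt : s < n := by
    rcases lt_or_eq_of_le hsn with h | h
    · exact h
    · exfalso
      have h0 : 0 ≤ n ∧ ∀ j ≤ n, v j ≤ v 0 := by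
        refine ⟨Nat.zero_le n, fun j hj => ?_⟩
        calc v j ≤ v s := hsmax j hj
        _ = v 0 := by rw [hs, h, hvn]
      have : Nat.find hex ≤ 0 := Nat.find_le h0
      omega
  refine ⟨s, hslt, fun t ht1 ht2 => ?_⟩
  have hle : v (s + t) ≤ v s := hsmax (s + t) (by omega)
  have ht0 : (0 : ℝ) < t := by exact_mod_cast ht1
  rw [div_le_iff₀ ht0]
  have : u (s + t) - ((s : ℝ) + t) * c ≤ u s - (s : ℝ) * c := by
    simpa [hv, Nat.cast_add] using hle
  linarith
end

section
/- (Second lower bound) Let d ≥ 1 and let H_2(x) = (x+1)^{d+1} − x^{d+1}, a polynomial of degree d. If H_2(x) = Σ_{i=1}^l β_i (x+y_i)^{e_i} for some real constants β_i, y_i and natural-number exponents e_i with e_i ≤ d for every i, then l > (d−1)/2, i.e., 2l > d−1. -/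
open Set

noncomputable section

namespace SLB

open scoped Classical


/-- truncated power -/
def tp (τ : ℝ) (m : ℕ) (x : ℝ) : ℝ := if τ ≤ x then (x - τ)^m else 0

lemma tp_of_le {τ x : ℝ} (h : τ ≤ x) (m : ℕ) : tp τ m x = (x - τ)^m := if_pos h
lemma tp_of_lt {τ x : ℝ} (h : x < τ) (m : ℕ) : tp τ m x = 0 := if_neg (not_le.2 h)

lemma tp_cont (τ : ℝ) (m : ℕ) (hm : m ≠ 0) : Continuous (tp τ m) := by
  have h : tp τ m = fun x => (max (x - τ) 0)^m := by
    funext x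
    by_cases h : τ ≤ x
    · rw [tp_of_le h, max_eq_left (by linarith)]
    · push_neg at h
      rw [tp_of_lt h, max_eq_right (by linarith), zero_pow hm]
  rw [h]
  exact ((continuous_id.sub continuous_const).max continuous_const).pow m

lemma tp_contAt_ne {τ x : ℝ} (m : ℕ) (h : x ≠ τ) : ContinuousAt (tp τ m) x := by
  rcases lt_or_gt_of_ne h with hlt | hgt
  · apply ContinuousAt.congr (continuousAt_const (y := (0:ℝ)))
    filter_upwards [Iio_mem_nhds hlt] with z hz
    exact (tp_of_lt hz m).symm
  · apply ContinuousAt.congr (f := fun z : ℝ => (z - τ)^m)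
      (((continuous_id.sub continuous_const).pow m).continuousAt)
    filter_upwards [Ioi_mem_nhds hgt] with z hz
    exact (tp_of_le hz.le m).symm

lemma tp_hasDerivAt_ne {τ x : ℝ} (hx : x ≠ τ) (m : ℕ) :
    HasDerivAt (tp τ m) ((m : ℝ) * tp τ (m - 1) x) x := by
  rcases lt_or_gt_of_ne hx with hlt | hgt
  · have hv : (m : ℝ) * tp τ (m - 1) x = 0 := by rw [tp_of_lt hlt]; ring
    rw [hv]
    apply (hasDerivAt_const x (0:ℝ)).congr_of_eventuallyEq
    filter_upwards [Iio_mem_nhds hlt] with z hz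
    exact tp_of_lt hz m
  · have base : HasDerivAt (fun z : ℝ => (z - τ)^m) ((m:ℝ) * (x - τ)^(m-1) * 1) x :=
      HasDerivAt.fun_pow ((hasDerivAt_id x).sub_const τ) m
    have hv : (m : ℝ) * tp τ (m - 1) x = (m:ℝ) * (x - τ)^(m-1) * 1 := by
      rw [tp_of_le hgt.le]; ring
    rw [hv]
    apply base.congr_of_eventuallyEq
    filter_upwards [Ioi_mem_nhds hgt] with z hz
    exact tp_of_le hz.le m

def G (T : Finset (ℝ × ℕ)) (c : ℝ × ℕ → ℝ) (k : ℕ) (x : ℝ) : ℝ :=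
  ∑ p ∈ T, c p * (p.2.descFactorial k : ℝ) * tp p.1 (p.2 - k) x

def F (T : Finset (ℝ × ℕ)) (c : ℝ × ℕ → ℝ) (k : ℕ) (x : ℝ) : ℝ :=
  ∑ p ∈ T, c p * (p.2.descFactorial k : ℝ) * (x - p.1)^(p.2 - k)

lemma term_hasDerivAt (c₀ τ : ℝ) (s k : ℕ) {x : ℝ} (hx : x ≠ τ) :
    HasDerivAt (fun z => c₀ * (s.descFactorial k : ℝ) * tp τ (s - k) z)
      (c₀ * (s.descFactorial (k+1) : ℝ) * tp τ (s - (k+1)) x) x := by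
  have h := (tp_hasDerivAt_ne hx (s - k)).const_mul (c₀ * (s.descFactorial k : ℝ))
  have e1 : s - k - 1 = s - (k+1) := by omega
  rw [e1] at h
  refine h.congr_deriv ?_
  rw [Nat.descFactorial_succ]
  push_cast
  ring

lemma termF_hasDerivAt (c₀ τ : ℝ) (s k : ℕ) (x : ℝ) :
    HasDerivAt (fun z => c₀ * (s.descFactorial k : ℝ) * (z - τ)^(s - k))
      (c₀ * (s.descFactorial (k+1) : ℝ) * (x - τ)^(s - (k+1))) x := by
  have base : HasDerivAt (fun z : ℝ => (z - τ)^(s-k)) (((s - k : ℕ):ℝ) * (x - τ)^(s-k-1) * 1) x :=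
    HasDerivAt.fun_pow ((hasDerivAt_id x).sub_const τ) _
  have h := base.const_mul (c₀ * (s.descFactorial k : ℝ))
  have e1 : s - k - 1 = s - (k+1) := by omega
  rw [e1] at h
  refine h.congr_deriv ?_
  rw [Nat.descFactorial_succ]
  push_cast
  ring

lemma G_hasDerivAt (T : Finset (ℝ × ℕ)) (c : ℝ × ℕ → ℝ) (k : ℕ) {x : ℝ}
    (hx : ∀ p ∈ T, p.1 ≠ x) :
    HasDerivAt (G T c k) (G T c (k+1) x) x := by
  have : HasDerivAt (fun z => ∑ p ∈ T, c p * (p.2.descFactorial k : ℝ) * tp p.1 (p.2 - k) z)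
      (∑ p ∈ T, c p * (p.2.descFactorial (k+1) : ℝ) * tp p.1 (p.2 - (k+1)) x) x :=
    HasDerivAt.fun_sum (fun p hp => term_hasDerivAt (c p) p.1 p.2 k (Ne.symm (hx p hp)))
  exact this

lemma F_hasDerivAt (T : Finset (ℝ × ℕ)) (c : ℝ × ℕ → ℝ) (k : ℕ) (x : ℝ) :
    HasDerivAt (F T c k) (F T c (k+1) x) x := by
  have : HasDerivAt (fun z => ∑ p ∈ T, c p * (p.2.descFactorial k : ℝ) * (z - p.1)^(p.2 - k))
      (∑ p ∈ T, c p * (p.2.descFactorial (k+1) : ℝ) * (x - p.1)^(p.2 - (k+1))) x :=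
    HasDerivAt.fun_sum (fun p _ => termF_hasDerivAt (c p) p.1 p.2 k x)
  exact this

lemma F_zero (T : Finset (ℝ × ℕ)) (c : ℝ × ℕ → ℝ) (h0 : ∀ x, F T c 0 x = 0) :
    ∀ k x, F T c k x = 0 := by
  intro k
  induction k with
  | zero => exact h0
  | succ k ih =>
    intro x
    have h1 : HasDerivAt (F T c k) (F T c (k+1) x) x := F_hasDerivAt T c k x
    have h2 : HasDerivAt (F T c k) 0 x := by
      have hF : F T c k = fun _ => (0:ℝ) := funext ih
      rw [hF]; exact hasDerivAt_const x 0
    exact h1.unique h2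

lemma G_eq_F (T : Finset (ℝ × ℕ)) (c : ℝ × ℕ → ℝ) (k : ℕ) {x : ℝ}
    (hx : ∀ p ∈ T, p.1 ≤ x) : G T c k x = F T c k x :=
  Finset.sum_congr rfl fun p hp => by rw [tp_of_le (hx p hp)]

lemma G_zero_left (T : Finset (ℝ × ℕ)) (c : ℝ × ℕ → ℝ) (k : ℕ) {x : ℝ}
    (hx : ∀ p ∈ T, x < p.1) : G T c k x = 0 :=
  Finset.sum_eq_zero fun p hp => by rw [tp_of_lt (hx p hp)]; ring

lemma G_contAt (T : Finset (ℝ × ℕ)) (c : ℝ × ℕ → ℝ) (k : ℕ) {x : ℝ}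
    (h : ∀ p ∈ T, p.2 = k → p.1 ≠ x) : ContinuousAt (G T c k) x := by
  apply tendsto_finset_sum
  intro p hp
  by_cases hpx : p.1 = x
  · rcases Nat.lt_trichotomy p.2 k with hlt | heqk | hgt
    · have hds : (p.2.descFactorial k : ℝ) = 0 := by
        rw [Nat.descFactorial_eq_zero_iff_lt.2 hlt]; simp
      simp only [hds, mul_zero, zero_mul]
      exact tendsto_const_nhds
    · exact absurd hpx (h p hp heqk)
    · exact (continuousAt_const.mul ((tp_cont p.1 (p.2 - k) (by omega)).continuousAt))
  · exact continuousAt_const.mul (tp_contAt_ne _ (Ne.symm hpx))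

lemma anti_base (g g' : ℝ → ℝ) (a b : ℝ) (hab : a ≤ b)
    (hcont : ∀ x ∈ Icc a b, ContinuousAt g x)
    (hder : ∀ x, a < x → x < b → HasDerivAt g (g' x) x)
    (hle : ∀ x, a < x → x < b → g' x ≤ 0) : g b ≤ g a := by
  have hanti : AntitoneOn g (Icc a b) := by
    apply antitoneOn_of_deriv_nonpos (convex_Icc a b)
    · exact fun x hx => (hcont x hx).continuousWithinAt
    · intro x hx
      rw [interior_Icc] at hx
      exact (hder x hx.1 hx.2).differentiableAt.differentiableWithinAt
    · intro x hx
      rw [interior_Icc] at hx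
      rw [(hder x hx.1 hx.2).deriv]
      exact hle x hx.1 hx.2
  exact hanti (left_mem_Icc.2 hab) (right_mem_Icc.2 hab) hab

lemma anti_glue : ∀ (N : ℕ) (S : Finset ℝ), S.card ≤ N → ∀ (g g' : ℝ → ℝ) (a b : ℝ), a ≤ b →
    (∀ x ∈ Icc a b, ContinuousAt g x) →
    (∀ x, a < x → x < b → x ∉ S → HasDerivAt g (g' x) x) →
    (∀ x, a < x → x < b → x ∉ S → g' x ≤ 0) → g b ≤ g a := by
  intro N
  induction N with
  | zero =>
    intro S hS g g' a b hab hcont hder hle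
    have hSe : S = ∅ := Finset.card_eq_zero.1 (Nat.le_zero.1 hS)
    subst hSe
    exact anti_base g g' a b hab hcont (fun x h1 h2 => hder x h1 h2 (Finset.notMem_empty x))
      (fun x h1 h2 => hle x h1 h2 (Finset.notMem_empty x))
  | succ N ih =>
    intro S hS g g' a b hab hcont hder hle
    by_cases hex : ∃ κ ∈ S, a < κ ∧ κ < b
    · obtain ⟨κ, hκS, hκ1, hκ2⟩ := hex
      have hcard : (S.erase κ).card ≤ N := by
        have := Finset.card_erase_of_mem hκS
        omega
      have hmem : ∀ x, x ∉ S.erase κ → x ≠ κ → x ∉ S := by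
        intro x hx hne hxS
        exact hx (Finset.mem_erase.2 ⟨hne, hxS⟩)
      have h1 : g κ ≤ g a := by
        apply ih (S.erase κ) hcard g g' a κ hκ1.le
        · exact fun x hx => hcont x ⟨hx.1, le_trans hx.2 hκ2.le⟩
        · exact fun x hx1 hx2 hxS => hder x hx1 (hx2.trans hκ2) (hmem x hxS (ne_of_lt hx2))
        · exact fun x hx1 hx2 hxS => hle x hx1 (hx2.trans hκ2) (hmem x hxS (ne_of_lt hx2))
      have h2 : g b ≤ g κ := by
        apply ih (S.erase κ) hcard g g' κ b hκ2.le
        · exact fun x hx => hcont x ⟨le_trans hκ1.le hx.1, hx.2⟩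
        · exact fun x hx1 hx2 hxS => hder x (hκ1.trans hx1) hx2 (hmem x hxS (ne_of_gt hx1))
        · exact fun x hx1 hx2 hxS => hle x (hκ1.trans hx1) hx2 (hmem x hxS (ne_of_gt hx1))
      linarith
    · exact anti_base g g' a b hab hcont
        (fun x h1 h2 => hder x h1 h2 (fun hxS => hex ⟨x, hxS, h1, h2⟩))
        (fun x h1 h2 => hle x h1 h2 (fun hxS => hex ⟨x, hxS, h1, h2⟩))

lemma slope_pos (g g' : ℝ → ℝ) (K : Finset ℝ) {a b : ℝ} (hab : a < b)
    (hcont : ∀ x ∈ Icc a b, ContinuousAt g x)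
    (hder : ∀ x, a < x → x < b → x ∉ K → HasDerivAt g (g' x) x)
    (hlt : g a < g b) : ∃ ξ, (a < ξ ∧ ξ < b) ∧ ξ ∉ K ∧ 0 < g' ξ := by
  by_contra hc
  push_neg at hc
  have := anti_glue K.card K le_rfl g g' a b hab.le hcont hder
    (fun x h1 h2 h3 => hc x ⟨h1, h2⟩ h3)
  linarith




open scoped Classical

def Ecnt (E : Finset ℝ) (x M : ℝ) : ℕ := (E.filter (fun t => x < t ∧ t < M)).card

lemma Ecnt_mono (E : Finset ℝ) {x x' M : ℝ} (h : x ≤ x') : Ecnt E x' M ≤ Ecnt E x M := by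
  apply Finset.card_le_card
  intro t ht
  rw [Finset.mem_filter] at *
  exact ⟨ht.1, lt_of_le_of_lt h ht.2.1, ht.2.2⟩

lemma Ecnt_lt (E : Finset ℝ) {x r M : ℝ} (t : ℝ) (ht : t ∈ E) (h1 : x < t) (h2 : t < r)
    (hrM : r ≤ M) : Ecnt E r M + 1 ≤ Ecnt E x M := by
  have hsub : insert t (E.filter (fun u => r < u ∧ u < M)) ⊆ E.filter (fun u => x < u ∧ u < M) := by
    intro u hu
    rcases Finset.mem_insert.1 hu with h | h
    · subst h
      exact Finset.mem_filter.2 ⟨ht, h1, lt_of_lt_of_le h2 hrM⟩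
    · rw [Finset.mem_filter] at *
      exact ⟨h.1, lt_trans (lt_trans h1 h2) h.2.1, h.2.2⟩
  have hnm : t ∉ E.filter (fun u => r < u ∧ u < M) := by
    rw [Finset.mem_filter]
    rintro ⟨-, h, -⟩
    linarith
  calc Ecnt E r M + 1 = (insert t (E.filter (fun u => r < u ∧ u < M))).card :=
        (Finset.card_insert_of_notMem hnm).symm
    _ ≤ _ := Finset.card_le_card hsub

lemma walk_aux (g g' : ℝ → ℝ) (K E : Finset ℝ) (M : ℝ)
    (hMK : ∀ κ ∈ K, κ < M) (hgM : g M = 0)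
    (slope : ∀ a b, a < b → a ∉ K → b ∉ K → (∀ t ∈ E, ¬(a < t ∧ t < b)) → g a ≠ g b →
       ∃ ξ, (a < ξ ∧ ξ < b) ∧ ξ ∉ K ∧ (g b - g a) * g' ξ > 0) :
    ∀ (rest : List ℝ) (x : ℝ), x ∉ K → x < M → g x ≠ 0 →
      (∀ r ∈ rest, r ∉ K ∧ r < M ∧ g r ≠ 0) →
      List.Chain' (· < ·) (x :: rest) →
      List.Chain' (fun a b => g a * g b < 0) (x :: rest) →
      ∃ ys : List ℝ,
        (∀ z ∈ ys, (x < z ∧ z < M) ∧ z ∉ K ∧ g' z ≠ 0) ∧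
        List.Chain' (· < ·) ys ∧
        List.Chain' (fun a b => g' a * g' b < 0) ys ∧
        rest.length + 1 ≤ ys.length + 2 * Ecnt E x M ∧
        (rest.length + 2 ≤ ys.length + 2 * Ecnt E x M ∨
          ∃ y tl, ys = y :: tl ∧ g' y * g x < 0) := by
  intro rest
  induction rest with
  | nil =>
    intro x hxK hxM hgx _ _ _
    have hMnotK : M ∉ K := fun h => lt_irrefl M (hMK M h)
    by_cases habs : ∃ t ∈ E, x < t ∧ t < M
    · obtain ⟨t, htE, ht⟩ := habs
      have h1 : 1 ≤ Ecnt E x M :=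
        Finset.card_pos.2 ⟨t, Finset.mem_filter.2 ⟨htE, ht⟩⟩
      exact ⟨[], by simp, List.IsChain.nil, List.IsChain.nil, by omega, Or.inl (by simp; omega)⟩
    · have hnt : ∀ t ∈ E, ¬(x < t ∧ t < M) := fun t ht hc => habs ⟨t, ht, hc⟩
      have hgne : g x ≠ g M := by rw [hgM]; exact hgx
      obtain ⟨ξ, hξ1, hξK, hξp⟩ := slope x M hxM hxK hMnotK hnt hgne
      rw [hgM] at hξp
      have h0 : g' ξ * g x < 0 := by
        rcases mul_pos_iff.1 hξp with ⟨h1, h2⟩ | ⟨h1, h2⟩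
        · exact mul_neg_of_pos_of_neg h2 (by linarith)
        · exact mul_neg_of_neg_of_pos h2 (by linarith)
      have hξne : g' ξ ≠ 0 := by
        intro h; rw [h] at h0; simp at h0
      refine ⟨[ξ], ?_, List.isChain_singleton ξ, List.isChain_singleton ξ, by simp,
        Or.inr ⟨ξ, [], rfl, h0⟩⟩
      intro z hz
      simp only [List.mem_singleton] at hz
      subst hz
      exact ⟨⟨hξ1.1, hξ1.2⟩, hξK, hξne⟩
  | cons r rest' ih =>
    intro x hxK hxM hgx hall hchain halt
    obtain ⟨hrK, hrM, hgr⟩ := hall r (List.mem_cons_self)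
    have hxr : x < r := (List.isChain_cons_cons.1 hchain).1
    have hgxr : g x * g r < 0 := (List.isChain_cons_cons.1 halt).1
    obtain ⟨ys, hysmem, hysord, hysalt, hweak, hdicho⟩ :=
      ih r hrK hrM hgr (fun r' hr' => hall r' (List.mem_cons_of_mem _ hr'))
        (List.isChain_cons_cons.1 hchain).2 (List.isChain_cons_cons.1 halt).2
    have hCC : Ecnt E r M ≤ Ecnt E x M := Ecnt_mono E hxr.le
    by_cases habs : ∃ t ∈ E, x < t ∧ t < r
    · obtain ⟨t, htE, ht1, ht2⟩ := habs
      have hC1 : Ecnt E r M + 1 ≤ Ecnt E x M := Ecnt_lt E t htE ht1 ht2 hrM.le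
      refine ⟨ys, ?_, hysord, hysalt, ?_, Or.inl ?_⟩
      · intro z hz
        obtain ⟨⟨h1, h2⟩, h3⟩ := hysmem z hz
        exact ⟨⟨lt_trans hxr h1, h2⟩, h3⟩
      · simp only [List.length_cons]; omega
      · simp only [List.length_cons]; omega
    · have hnt : ∀ t ∈ E, ¬(x < t ∧ t < r) := fun t ht hc => habs ⟨t, ht, hc⟩
      have hgne : g x ≠ g r := by
        intro h; rw [← h] at hgxr
        nlinarith [sq_nonneg (g x)]
      obtain ⟨ξ, ⟨hξ1, hξ2⟩, hξK, hξp⟩ := slope x r hxr hxK hrK hnt hgne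
      have hsξ : g' ξ * g x < 0 := by
        rcases mul_neg_iff.1 hgxr with ⟨hx1, hr1⟩ | ⟨hx1, hr1⟩
        · rcases mul_pos_iff.1 hξp with ⟨h1, h2⟩ | ⟨h1, h2⟩
          · linarith
          · exact mul_neg_of_neg_of_pos h2 hx1
        · rcases mul_pos_iff.1 hξp with ⟨h1, h2⟩ | ⟨h1, h2⟩
          · exact mul_neg_of_pos_of_neg h2 hx1
          · linarith
      have hξne : g' ξ ≠ 0 := by intro h; rw [h] at hsξ; simp at hsξ
      rcases ys with _ | ⟨y, tl⟩
      · -- ys = []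
        simp only [List.length_nil] at hweak
        refine ⟨[ξ], ?_, List.isChain_singleton ξ, List.isChain_singleton ξ, ?_,
          Or.inr ⟨ξ, [], rfl, hsξ⟩⟩
        · intro z hz
          simp only [List.mem_singleton] at hz
          subst hz
          exact ⟨⟨hξ1, lt_trans hξ2 hrM⟩, hξK, hξne⟩
        · simp only [List.length_cons, List.length_singleton]; omega
      · have hymem := hysmem y (List.mem_cons_self)
        have hyne : g' y ≠ 0 := hymem.2.2
        by_cases hy : g' y * g x < 0
        · -- keep ys ; child dichotomy must be the strong clause
          have hstrong : rest'.length + 2 ≤ (y::tl).length + 2 * Ecnt E r M := by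
            rcases hdicho with h | ⟨y', tl', heq, hhead⟩
            · exact h
            · exfalso
              rw [List.cons.injEq] at heq
              rw [← heq.1] at hhead
              rcases mul_neg_iff.1 hy with ⟨a1, a2⟩ | ⟨a1, a2⟩ <;>
                rcases mul_neg_iff.1 hhead with ⟨b1, b2⟩ | ⟨b1, b2⟩ <;>
                rcases mul_neg_iff.1 hgxr with ⟨c1, c2⟩ | ⟨c1, c2⟩ <;> linarith
          refine ⟨y::tl, ?_, hysord, hysalt, ?_, Or.inr ⟨y, tl, rfl, hy⟩⟩
          · intro z hz
            obtain ⟨⟨h1, h2⟩, h3⟩ := hysmem z hz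
            exact ⟨⟨lt_trans hxr h1, h2⟩, h3⟩
          · simp only [List.length_cons] at *; omega
        · -- prepend ξ
          have hy' : 0 < g' y * g x := by
            rcases lt_trichotomy (g' y * g x) 0 with h|h|h
            · exact absurd h hy
            · rcases mul_eq_zero.1 h with h|h
              · exact absurd h hyne
              · exact absurd h hgx
            · exact h
          have haltnew : g' ξ * g' y < 0 := by
            rcases mul_neg_iff.1 hsξ with ⟨a1, a2⟩ | ⟨a1, a2⟩ <;>
              rcases mul_pos_iff.1 hy' with ⟨b1, b2⟩ | ⟨b1, b2⟩
            · linarith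
            · exact mul_neg_of_pos_of_neg a1 b1
            · exact mul_neg_of_neg_of_pos a1 b1
            · linarith
          have hry : r < y := (hysmem y (List.mem_cons_self)).1.1
          refine ⟨ξ :: y :: tl, ?_, ?_, ?_, ?_, Or.inr ⟨ξ, y :: tl, rfl, hsξ⟩⟩
          · intro z hz
            rcases List.mem_cons.1 hz with h | h
            · subst h
              exact ⟨⟨hξ1, lt_trans hξ2 hrM⟩, hξK, hξne⟩
            · obtain ⟨⟨h1, h2⟩, h3⟩ := hysmem z h
              exact ⟨⟨lt_trans hxr h1, h2⟩, h3⟩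
          · exact List.isChain_cons_cons.2 ⟨lt_trans hξ2 hry, hysord⟩
          · exact List.isChain_cons_cons.2 ⟨haltnew, hysalt⟩
          · simp only [List.length_cons] at *; omega

lemma walk (g g' : ℝ → ℝ) (K E : Finset ℝ) (m M : ℝ)
    (hmK : ∀ κ ∈ K, m < κ) (hMK : ∀ κ ∈ K, κ < M)
    (hgm : g m = 0) (hgM : g M = 0)
    (slope : ∀ a b, a < b → a ∉ K → b ∉ K → (∀ t ∈ E, ¬(a < t ∧ t < b)) → g a ≠ g b →
       ∃ ξ, (a < ξ ∧ ξ < b) ∧ ξ ∉ K ∧ (g b - g a) * g' ξ > 0)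
    (hEsub : ∀ t ∈ E, t ∈ K)
    (xs : List ℝ) (hne : xs ≠ [])
    (hmem : ∀ z ∈ xs, (m < z ∧ z < M) ∧ z ∉ K ∧ g z ≠ 0)
    (hord : List.Chain' (· < ·) xs)
    (halt : List.Chain' (fun a b => g a * g b < 0) xs) :
    ∃ ys : List ℝ,
      (∀ z ∈ ys, (m < z ∧ z < M) ∧ z ∉ K ∧ g' z ≠ 0) ∧
      List.Chain' (· < ·) ys ∧
      List.Chain' (fun a b => g' a * g' b < 0) ys ∧
      xs.length + 1 ≤ ys.length + 2 * E.card := by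
  rcases xs with _ | ⟨x₀, rest⟩
  · exact absurd rfl hne
  obtain ⟨⟨hmx₀, hx₀M⟩, hx₀K, hgx₀⟩ := hmem x₀ (List.mem_cons_self)
  obtain ⟨ys, hysmem, hysord, hysalt, hweak, hdicho⟩ :=
    walk_aux g g' K E M hMK hgM slope rest x₀ hx₀K hx₀M hgx₀
      (fun r hr => ⟨(hmem r (List.mem_cons_of_mem _ hr)).2.1,
        (hmem r (List.mem_cons_of_mem _ hr)).1.2, (hmem r (List.mem_cons_of_mem _ hr)).2.2⟩)
      hord halt
  have hCE : Ecnt E x₀ M ≤ E.card := Finset.card_le_card (Finset.filter_subset _ _)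
  have hmK' : m ∉ K := fun h => lt_irrefl m (hmK m h)
  have hrelax : ∀ z ∈ ys, (m < z ∧ z < M) ∧ z ∉ K ∧ g' z ≠ 0 := by
    intro z hz
    obtain ⟨⟨h1, h2⟩, h3⟩ := hysmem z hz
    exact ⟨⟨lt_trans hmx₀ h1, h2⟩, h3⟩
  by_cases habs : ∃ t ∈ E, m < t ∧ t < x₀
  · obtain ⟨t, htE, ht1, ht2⟩ := habs
    have hC1 : Ecnt E x₀ M + 1 ≤ E.card := by
      have hsub : insert t (E.filter (fun u => x₀ < u ∧ u < M)) ⊆ E := by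
        intro u hu
        rcases Finset.mem_insert.1 hu with h | h
        · subst h; exact htE
        · exact Finset.filter_subset _ _ h
      have hnm : t ∉ E.filter (fun u => x₀ < u ∧ u < M) := by
        rw [Finset.mem_filter]
        rintro ⟨-, h, -⟩
        linarith
      calc Ecnt E x₀ M + 1 = (insert t (E.filter (fun u => x₀ < u ∧ u < M))).card :=
            (Finset.card_insert_of_notMem hnm).symm
        _ ≤ _ := Finset.card_le_card hsub
    exact ⟨ys, hrelax, hysord, hysalt, by simp only [List.length_cons] at *; omega⟩
  · have hnt : ∀ t ∈ E, ¬(m < t ∧ t < x₀) := fun t ht hc => habs ⟨t, ht, hc⟩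
    have hgne : g m ≠ g x₀ := by rw [hgm]; exact fun h => hgx₀ h.symm
    obtain ⟨ξ, ⟨hξ1, hξ2⟩, hξK, hξp⟩ := slope m x₀ hmx₀ hmK' hx₀K hnt hgne
    rw [hgm] at hξp
    have hsξ : 0 < g' ξ * g x₀ := by
      rcases mul_pos_iff.1 hξp with ⟨h1, h2⟩ | ⟨h1, h2⟩
      · exact mul_pos h2 (by linarith)
      · exact mul_pos_of_neg_of_neg h2 (by linarith)
    have hξne : g' ξ ≠ 0 := by intro h; rw [h] at hsξ; simp at hsξ
    rcases hdicho with hstrong | ⟨y, tl, heq, hhead⟩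
    · exact ⟨ys, hrelax, hysord, hysalt, by simp only [List.length_cons] at *; omega⟩
    · subst heq
      have haltnew : g' ξ * g' y < 0 := by
        rcases mul_pos_iff.1 hsξ with ⟨a1, a2⟩ | ⟨a1, a2⟩ <;>
          rcases mul_neg_iff.1 hhead with ⟨b1, b2⟩ | ⟨b1, b2⟩
        · linarith
        · exact mul_neg_of_pos_of_neg a1 b1
        · exact mul_neg_of_neg_of_pos a1 b1
        · linarith
      have hx₀y : x₀ < y := (hysmem y (List.mem_cons_self)).1.1
      refine ⟨ξ :: y :: tl, ?_, ?_, ?_, ?_⟩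
      · intro z hz
        rcases List.mem_cons.1 hz with h | h
        · subst h
          exact ⟨⟨hξ1, lt_trans hξ2 hx₀M⟩, hξK, hξne⟩
        · exact hrelax z h
      · exact List.isChain_cons_cons.2 ⟨lt_trans hξ2 hx₀y, hysord⟩
      · exact List.isChain_cons_cons.2 ⟨haltnew, hysalt⟩
      · simp only [List.length_cons] at *; omega



lemma main_core (T : Finset (ℝ × ℕ)) (c : ℝ × ℕ → ℝ) (n : ℕ)
    (hc : ∀ p ∈ T, c p ≠ 0)
    (hzero : ∀ x : ℝ, F T c 0 x = 0)
    (hp1 : ((-1:ℝ), n) ∈ T) (hp2 : ((0:ℝ), n) ∈ T)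
    (hc1 : c ((-1:ℝ), n) = 1) (hc2 : c ((0:ℝ), n) = -1)
    (hsn : ∀ p ∈ T, p.2 ≤ n)
    (htop : ∀ p ∈ T, p.2 = n → p = ((-1:ℝ), n) ∨ p = ((0:ℝ), n)) :
    n ≤ 2 * (T.filter (fun p => p.2 < n)).card := by
  have hKne : (T.image Prod.fst).Nonempty := ⟨-1, Finset.mem_image_of_mem _ hp1⟩
  set K := T.image Prod.fst with hK
  set m := K.min' hKne - 1 with hm
  set M := K.max' hKne + 1 with hM
  have hmK : ∀ κ ∈ K, m < κ := by
    intro κ hκ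
    have := K.min'_le κ hκ
    rw [hm]; linarith
  have hMK : ∀ κ ∈ K, κ < M := by
    intro κ hκ
    have := K.le_max' κ hκ
    rw [hM]; linarith
  have hKmem : ∀ p ∈ T, p.1 ∈ K := fun p hp => Finset.mem_image_of_mem _ hp
  have hGm : ∀ k, G T c k m = 0 := fun k =>
    G_zero_left T c k (fun p hp => hmK p.1 (hKmem p hp))
  have hGM : ∀ k, G T c k M = 0 := by
    intro k
    rw [G_eq_F T c k (fun p hp => (hMK p.1 (hKmem p hp)).le)]
    exact F_zero T c hzero k M
  set E : ℕ → Finset ℝ := fun k => (T.filter (fun p => p.2 = k)).image Prod.fst with hE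
  have hEK : ∀ k, ∀ t ∈ E k, t ∈ K := by
    intro k t ht
    obtain ⟨p, hp, hpt⟩ := Finset.mem_image.1 ht
    exact hpt ▸ hKmem p (Finset.mem_filter.1 hp).1
  -- slope property at each level
  have hslope : ∀ k, ∀ a b : ℝ, a < b → a ∉ K → b ∉ K →
      (∀ t ∈ E k, ¬(a < t ∧ t < b)) → G T c k a ≠ G T c k b →
      ∃ ξ, (a < ξ ∧ ξ < b) ∧ ξ ∉ K ∧ (G T c k b - G T c k a) * G T c (k+1) ξ > 0 := by
    intro k a b hab haK hbK hnoE hne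
    have hcont : ∀ x ∈ Icc a b, ContinuousAt (G T c k) x := by
      intro x hx
      apply G_contAt
      intro p hp hpk hpx
      have hxE : x ∈ E k := by
        rw [← hpx]
        exact Finset.mem_image_of_mem _ (Finset.mem_filter.2 ⟨hp, hpk⟩)
      have hxK : x ∈ K := hEK k x hxE
      rcases eq_or_lt_of_le hx.1 with h | h
      · exact haK (h ▸ hxK)
      · rcases eq_or_lt_of_le hx.2 with h' | h'
        · exact hbK (h' ▸ hxK)
        · exact hnoE x hxE ⟨h, h'⟩
    have hder : ∀ x, a < x → x < b → x ∉ K → HasDerivAt (G T c k) (G T c (k+1) x) x :=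
      fun x _ _ hxK => G_hasDerivAt T c k (fun p hp hpx => hxK (hpx ▸ hKmem p hp))
    rcases hne.lt_or_gt with h | h
    · obtain ⟨ξ, h1, h2, h3⟩ := slope_pos (G T c k) (G T c (k+1)) K hab hcont hder h
      exact ⟨ξ, h1, h2, mul_pos (by linarith) h3⟩
    · obtain ⟨ξ, h1, h2, h3⟩ := slope_pos (fun z => -(G T c k z)) (fun z => -(G T c (k+1) z)) K hab
        (fun x hx => (hcont x hx).neg) (fun x hx1 hx2 hx3 => (hder x hx1 hx2 hx3).neg)
        (by show -(G T c k a) < -(G T c k b); linarith)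
      exact ⟨ξ, h1, h2, mul_pos_of_neg_of_neg (by linarith) (by linarith)⟩
  -- seed
  have hseed : ∀ k, k ≤ n → ∃ x : ℝ, ((m < x ∧ x < M) ∧ x ∉ K ∧ G T c k x ≠ 0) := by
    intro k hk
    have hal : ((-1:ℝ), n) ∈ T.filter (fun p => k ≤ p.2) := Finset.mem_filter.2 ⟨hp1, hk⟩
    set A := (T.filter (fun p => k ≤ p.2)).image Prod.fst with hA
    have hAne : A.Nonempty := ⟨-1, Finset.mem_image_of_mem _ hal⟩
    set τ := A.min' hAne with hτ
    have hτA : τ ∈ A := A.min'_mem hAne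
    have hAK : ∀ t ∈ A, t ∈ K := by
      intro t ht
      obtain ⟨p, hp, hpt⟩ := Finset.mem_image.1 ht
      exact hpt ▸ hKmem p (Finset.mem_filter.1 hp).1
    obtain ⟨σ, hτσ, hσM, hsep⟩ : ∃ σ, τ < σ ∧ σ ≤ M ∧ (∀ t ∈ A, t ≠ τ → σ ≤ t) := by
      by_cases hBne : (A.filter (fun t => τ < t)).Nonempty
      · refine ⟨(A.filter (fun t => τ < t)).min' hBne, ?_, ?_, ?_⟩
        · exact (Finset.mem_filter.1 ((A.filter (fun t => τ < t)).min'_mem hBne)).2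
        · have h1 : (A.filter (fun t => τ < t)).min' hBne ∈ A :=
            (Finset.mem_filter.1 ((A.filter (fun t => τ < t)).min'_mem hBne)).1
          have := K.le_max' _ (hAK _ h1)
          rw [hM]; linarith
        · intro t ht htne
          apply Finset.min'_le
          exact Finset.mem_filter.2 ⟨ht, lt_of_le_of_ne (A.min'_le t ht) (Ne.symm htne)⟩
      · refine ⟨τ + 1, by linarith, ?_, ?_⟩
        · have := K.le_max' τ (hAK τ hτA)
          rw [hM]; linarith
        · intro t ht htne
          exfalso
          exact hBne ⟨t, Finset.mem_filter.2 ⟨ht, lt_of_le_of_ne (A.min'_le t ht) (Ne.symm htne)⟩⟩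
    obtain ⟨q, hqf, hqτ⟩ := Finset.mem_image.1 hτA
    obtain ⟨hqT, hqk⟩ := Finset.mem_filter.1 hqf
    set Q : Polynomial ℝ := ∑ p ∈ T.filter (fun p => p.1 = τ ∧ k ≤ p.2),
        Polynomial.C (c p * (p.2.descFactorial k : ℝ)) * Polynomial.X ^ (p.2 - k) with hQ
    have hqmem : q ∈ T.filter (fun p => p.1 = τ ∧ k ≤ p.2) := Finset.mem_filter.2 ⟨hqT, hqτ, hqk⟩
    have hQne : Q ≠ 0 := by
      intro hQ0
      have hcoeff : Q.coeff (q.2 - k) = c q * (q.2.descFactorial k : ℝ) := by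
        rw [hQ, Polynomial.finset_sum_coeff]
        rw [Finset.sum_eq_single q]
        · rw [Polynomial.coeff_C_mul, Polynomial.coeff_X_pow, if_pos rfl, mul_one]
        · intro p hpf hpq
          obtain ⟨hpT, hpτ, hpk⟩ := Finset.mem_filter.1 hpf
          rw [Polynomial.coeff_C_mul, Polynomial.coeff_X_pow, if_neg, mul_zero]
          intro hEq
          apply hpq
          have hps : p.2 = q.2 := by omega
          exact Prod.ext_iff.2 ⟨hpτ.trans hqτ.symm, hps⟩
        · intro hq'
          exact absurd hqmem hq'
      rw [hQ0, Polynomial.coeff_zero] at hcoeff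
      have hds : (q.2.descFactorial k : ℝ) ≠ 0 := by
        have h' : q.2.descFactorial k ≠ 0 := by
          rw [Ne, Nat.descFactorial_eq_zero_iff_lt]
          omega
        exact_mod_cast h'
      exact (mul_ne_zero (hc q hqT) hds) hcoeff.symm
    have hfin : ((fun x : ℝ => x - τ) ⁻¹' {u : ℝ | Q.IsRoot u}).Finite :=
      Set.Finite.preimage (fun u _ v _ h => by linarith) (Polynomial.finite_setOf_isRoot hQne)
    obtain ⟨x, hx⟩ := ((Set.Ioo_infinite hτσ).diff (hfin.union K.finite_toSet)).nonempty
    obtain ⟨hxI, hxnot⟩ := hx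
    have hxroot : ¬ Q.IsRoot (x - τ) := fun h => hxnot (Or.inl h)
    have hxK : x ∉ K := fun h => hxnot (Or.inr h)
    refine ⟨x, ⟨?_, ?_⟩, hxK, ?_⟩
    · have h1 := K.min'_le τ (hAK τ hτA)
      have h2 := hxI.1
      rw [hm]; linarith
    · have := hxI.2; linarith
    · have hGx : G T c k x = Q.eval (x - τ) := by
        rw [hQ, Polynomial.eval_finset_sum]
        rw [show G T c k x = ∑ p ∈ T, c p * (p.2.descFactorial k : ℝ) * tp p.1 (p.2 - k) x from rfl]
        rw [← Finset.sum_filter_add_sum_filter_not T (fun p => p.1 = τ ∧ k ≤ p.2)]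
        have h2 : ∑ p ∈ T.filter (fun p => ¬(p.1 = τ ∧ k ≤ p.2)),
            c p * (p.2.descFactorial k : ℝ) * tp p.1 (p.2 - k) x = 0 := by
          apply Finset.sum_eq_zero
          intro p hp
          obtain ⟨hpT, hpn⟩ := Finset.mem_filter.1 hp
          by_cases hpk : k ≤ p.2
          · have hpτ : p.1 ≠ τ := fun h => hpn ⟨h, hpk⟩
            have hpA : p.1 ∈ A := Finset.mem_image_of_mem _ (Finset.mem_filter.2 ⟨hpT, hpk⟩)
            have := hsep p.1 hpA hpτ
            rw [tp_of_lt (lt_of_lt_of_le hxI.2 this)]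
            ring
          · have hds0 : p.2.descFactorial k = 0 := Nat.descFactorial_eq_zero_iff_lt.2 (by omega)
            rw [hds0]
            push_cast; ring
        rw [h2, add_zero]
        apply Finset.sum_congr rfl
        intro p hp
        obtain ⟨hpT, hpτ, hpk⟩ := Finset.mem_filter.1 hp
        rw [Polynomial.eval_mul, Polynomial.eval_pow, Polynomial.eval_C, Polynomial.eval_X]
        rw [hpτ, tp_of_le (le_of_lt hxI.1)]
      rw [hGx]
      exact fun h => hxroot h
  -- the chain over levels
  have hmain : ∀ k, k ≤ n → ∃ ys : List ℝ,
      (∀ z ∈ ys, (m < z ∧ z < M) ∧ z ∉ K ∧ G T c k z ≠ 0) ∧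
      List.Chain' (· < ·) ys ∧ List.Chain' (fun a b => G T c k a * G T c k b < 0) ys ∧
      ys ≠ [] ∧ k + 1 ≤ ys.length + 2 * (T.filter (fun p => p.2 < k)).card := by
    intro k
    induction k with
    | zero =>
      intro _
      obtain ⟨x, hx⟩ := hseed 0 (Nat.zero_le n)
      refine ⟨[x], ?_, List.isChain_singleton x, List.isChain_singleton x, by simp, by simp⟩
      intro z hz
      simp only [List.mem_singleton] at hz
      subst hz
      exact hx
    | succ k ih =>
      intro hk1
      obtain ⟨ys, hmem, hord, haltc, hne, hcount⟩ := ih (by omega)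
      obtain ⟨zs, hzmem, hzord, hzalt, hzcount⟩ :=
        walk (G T c k) (G T c (k+1)) K (E k) m M hmK hMK (hGm k) (hGM k) (hslope k)
          (hEK k) ys hne hmem hord haltc
      have hcard : (E k).card ≤ (T.filter (fun p => p.2 = k)).card := Finset.card_image_le
      have hWsucc : (T.filter (fun p => p.2 < k+1)).card =
          (T.filter (fun p => p.2 < k)).card + (T.filter (fun p => p.2 = k)).card := by
        rw [← Finset.card_union_of_disjoint]
        · congr 1
          ext p
          simp only [Finset.mem_filter, Finset.mem_union]
          constructor
          · rintro ⟨h1, h2⟩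
            by_cases h : p.2 < k
            · exact Or.inl ⟨h1, h⟩
            · exact Or.inr ⟨h1, by omega⟩
          · rintro (⟨h1, h2⟩ | ⟨h1, h2⟩)
            · exact ⟨h1, by omega⟩
            · exact ⟨h1, by omega⟩
        · rw [Finset.disjoint_left]
          intro p h1 h2
          simp only [Finset.mem_filter] at h1 h2
          omega
      by_cases hzs : zs = []
      · subst hzs
        simp only [List.length_nil] at hzcount
        obtain ⟨x, hx⟩ := hseed (k+1) hk1
        refine ⟨[x], ?_, List.isChain_singleton x, List.isChain_singleton x, by simp, ?_⟩
        · intro z hz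
          simp only [List.mem_singleton] at hz
          subst hz
          exact hx
        · simp only [List.length_singleton]
          omega
      · refine ⟨zs, hzmem, hzord, hzalt, hzs, ?_⟩
        omega
  -- nonnegativity of the top level
  have hGn : ∀ x, 0 ≤ G T c n x := by
    intro x
    have hvanish : ∀ p ∈ T, p ∉ ({((-1:ℝ), n), ((0:ℝ), n)} : Finset (ℝ × ℕ)) →
        c p * (p.2.descFactorial n : ℝ) * tp p.1 (p.2 - n) x = 0 := by
      intro p hpT hpnot
      have hlt : p.2 < n := by
        rcases Nat.lt_or_ge p.2 n with h | h
        · exact h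
        · exfalso
          have hpn : p.2 = n := le_antisymm (hsn p hpT) h
          rcases htop p hpT hpn with h' | h' <;>
            · apply hpnot
              simp [h']
      have hds0 : p.2.descFactorial n = 0 := Nat.descFactorial_eq_zero_iff_lt.2 hlt
      rw [hds0]
      push_cast; ring
    have hsub : ({((-1:ℝ), n), ((0:ℝ), n)} : Finset (ℝ × ℕ)) ⊆ T := by
      intro p hp
      rcases Finset.mem_insert.1 hp with h | h
      · subst h; exact hp1
      · rw [Finset.mem_singleton] at h; subst h; exact hp2
    have hGsum : G T c n x = ∑ p ∈ ({((-1:ℝ), n), ((0:ℝ), n)} : Finset (ℝ × ℕ)),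
        c p * (p.2.descFactorial n : ℝ) * tp p.1 (p.2 - n) x := by
      rw [show G T c n x = ∑ p ∈ T, c p * (p.2.descFactorial n : ℝ) * tp p.1 (p.2 - n) x from rfl]
      exact (Finset.sum_subset hsub hvanish).symm
    have hpairne : ((-1:ℝ), n) ≠ ((0:ℝ), n) := by
      intro h
      have := congrArg Prod.fst h
      norm_num at this
    rw [hGsum, Finset.sum_pair hpairne]
    simp only [hc1, hc2]
    have hfac : (0:ℝ) < (n.factorial : ℝ) := by exact_mod_cast n.factorial_pos
    simp only [Nat.sub_self, Nat.descFactorial_self]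
    by_cases h1 : (-1:ℝ) ≤ x <;> by_cases h2 : (0:ℝ) ≤ x
    · rw [tp_of_le h1, tp_of_le h2]
      simp
    · rw [tp_of_le h1, tp_of_lt (by linarith)]
      simp only [pow_zero, mul_one, mul_zero]
      linarith
    · exfalso; apply h1; linarith
    · rw [tp_of_lt (by linarith), tp_of_lt (by linarith)]
      simp
  -- finish
  obtain ⟨ys, hmem, hord, haltc, hne, hcount⟩ := hmain n le_rfl
  have hlen : ys.length ≤ 1 := by
    rcases ys with _ | ⟨a, _ | ⟨b, t⟩⟩
    · simp
    · simp
    · exfalso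
      have hab := (List.isChain_cons_cons.1 haltc).1
      have ha := hGn a
      have hb := hGn b
      nlinarith
  omega

end SLB

open Polynomial in
/-- **Theorem (second lower bound).** Let `d ≥ 1` and let
`H₂(x) = (x+1)^{d+1} - x^{d+1}`, a polynomial of degree `d`.  If
`H₂(x) = ∑_{i=1}^l β_i (x + y_i)^{e_i}` with `e_i ≤ d` for every `i`, then
`l > (d-1)/2`, i.e. `2l > d-1`. -/
theorem second_lower_bound (d l : ℕ) (hd : 1 ≤ d)
    (y β : Fin l → ℝ) (e : Fin l → ℕ)
    (he : ∀ i, e i ≤ d)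
    (heq : (X + C (1 : ℝ)) ^ (d + 1) - X ^ (d + 1)
         = ∑ i, C (β i) * (X + C (y i)) ^ (e i)) :
    d - 1 < 2 * l := by
  classical
  set n := d + 1 with hn
  have heval : ∀ x : ℝ, (x + 1)^n - x^n = ∑ i, β i * (x + y i)^(e i) := by
    intro x
    have h := congrArg (Polynomial.eval x) heq
    simpa [Polynomial.eval_finset_sum] using h
  set key : Fin l → ℝ × ℕ := fun i => ((-(y i) : ℝ), e i) with hkey
  set Cc : ℝ × ℕ → ℝ := fun p => ∑ i, (if key i = p then β i else 0) with hCc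
  set c : ℝ × ℕ → ℝ := fun p =>
    (if p = ((-1:ℝ), n) then 1 else 0) + (if p = ((0:ℝ), n) then -1 else 0) - Cc p with hc
  set T : Finset (ℝ × ℕ) :=
    ((Finset.univ.image key).filter (fun p => c p ≠ 0)) ∪ {((-1:ℝ), n), ((0:ℝ), n)} with hT
  have hpne : ((-1:ℝ), n) ≠ ((0:ℝ), n) := by
    intro h
    have := congrArg Prod.fst h
    norm_num at this
  have hkeyne : ∀ (i : Fin l) (p : ℝ × ℕ), p = ((-1:ℝ), n) ∨ p = ((0:ℝ), n) → key i ≠ p := by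
    intro i p hp hkp
    have hei := he i
    rcases hp with h | h <;>
    · subst h
      have h2 := congrArg Prod.snd hkp
      simp only [hkey] at h2
      omega
  have hCcbig : ∀ p : ℝ × ℕ, p = ((-1:ℝ), n) ∨ p = ((0:ℝ), n) → Cc p = 0 := by
    intro p hp
    simp only [hCc]
    apply Finset.sum_eq_zero
    intro i _
    rw [if_neg (hkeyne i p hp)]
  have hcp1 : c ((-1:ℝ), n) = 1 := by
    simp only [hc]
    rw [hCcbig _ (Or.inl rfl)]
    simp [hpne]
  have hcp2 : c ((0:ℝ), n) = -1 := by
    simp only [hc]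
    rw [hCcbig _ (Or.inr rfl)]
    simp [Ne.symm hpne]
  have hcT : ∀ p ∈ T, c p ≠ 0 := by
    intro p hp
    rw [hT] at hp
    rcases Finset.mem_union.1 hp with h | h
    · exact (Finset.mem_filter.1 h).2
    · rcases Finset.mem_insert.1 h with h | h
      · rw [h, hcp1]; norm_num
      · rw [Finset.mem_singleton] at h
        rw [h, hcp2]; norm_num
  have himg_snd : ∀ p : ℝ × ℕ, p ∈ Finset.univ.image key → p.2 ≤ d := by
    intro p hp
    obtain ⟨i, _, hip⟩ := Finset.mem_image.1 hp
    have : (key i).2 = e i := rfl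
    rw [← hip, this]
    exact he i
  have himg_ne : ∀ p : ℝ × ℕ, p ∈ Finset.univ.image key →
      p ≠ ((-1:ℝ), n) ∧ p ≠ ((0:ℝ), n) := by
    intro p hp
    have h2 := himg_snd p hp
    constructor <;> intro h <;> (subst h; simp only [] at h2; omega)
  have hsn : ∀ p ∈ T, p.2 ≤ n := by
    intro p hp
    rw [hT] at hp
    rcases Finset.mem_union.1 hp with h | h
    · have := himg_snd p (Finset.filter_subset _ _ h)
      omega
    · rcases Finset.mem_insert.1 h with h | h
      · subst h; simp
      · rw [Finset.mem_singleton] at h; subst h; simp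
  have htop : ∀ p ∈ T, p.2 = n → p = ((-1:ℝ), n) ∨ p = ((0:ℝ), n) := by
    intro p hp hpn
    rw [hT] at hp
    rcases Finset.mem_union.1 hp with h | h
    · exfalso
      have := himg_snd p (Finset.filter_subset _ _ h)
      omega
    · rcases Finset.mem_insert.1 h with h | h
      · exact Or.inl h
      · exact Or.inr (Finset.mem_singleton.1 h)
  have hp1T : ((-1:ℝ), n) ∈ T := by
    rw [hT]
    exact Finset.mem_union_right _ (Finset.mem_insert_self _ _)
  have hp2T : ((0:ℝ), n) ∈ T := by
    rw [hT]
    exact Finset.mem_union_right _ (by simp)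
  have hzero : ∀ x : ℝ, SLB.F T c 0 x = 0 := by
    intro x
    have hF : SLB.F T c 0 x = ∑ p ∈ T, c p * (x - p.1)^p.2 := by
      apply Finset.sum_congr rfl
      intro p _
      simp
    rw [hF, hT]
    have hdisj : Disjoint ((Finset.univ.image key).filter (fun p => c p ≠ 0))
        ({((-1:ℝ), n), ((0:ℝ), n)} : Finset (ℝ × ℕ)) := by
      rw [Finset.disjoint_right]
      intro p hp hp2
      have h2 := himg_ne p (Finset.filter_subset _ _ hp2)
      rcases Finset.mem_insert.1 hp with h | h
      · exact h2.1 h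
      · exact h2.2 (Finset.mem_singleton.1 h)
    rw [Finset.sum_union hdisj, Finset.sum_pair hpne, hcp1, hcp2]
    have hcimg : ∀ p ∈ Finset.univ.image key, c p = - Cc p := by
      intro p hp
      have h2 := himg_ne p hp
      simp only [hc]
      rw [if_neg h2.1, if_neg h2.2]
      ring
    have hsum1 : ∑ p ∈ (Finset.univ.image key).filter (fun p => c p ≠ 0), c p * (x - p.1)^p.2
        = ∑ p ∈ Finset.univ.image key, c p * (x - p.1)^p.2 := by
      apply Finset.sum_subset (Finset.filter_subset _ _)
      intro p hp hpn
      have hcp : c p = 0 := by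
        by_contra hcp
        exact hpn (Finset.mem_filter.2 ⟨hp, hcp⟩)
      rw [hcp]; ring
    rw [hsum1]
    have hsum2 : ∑ p ∈ Finset.univ.image key, c p * (x - p.1)^p.2
        = - ∑ i, β i * (x + y i)^(e i) := by
      have e1 : ∑ p ∈ Finset.univ.image key, c p * (x - p.1)^p.2
          = ∑ p ∈ Finset.univ.image key, -(Cc p * (x - p.1)^p.2) :=
        Finset.sum_congr rfl (fun p hp => by rw [hcimg p hp]; ring)
      rw [e1, Finset.sum_neg_distrib]
      congr 1
      simp only [hCc]
      have e2 : ∑ p ∈ Finset.univ.image key, (∑ i, if key i = p then β i else 0) * (x - p.1)^p.2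
          = ∑ p ∈ Finset.univ.image key, ∑ i, (if key i = p then β i * (x - p.1)^p.2 else 0) := by
        apply Finset.sum_congr rfl
        intro p _
        rw [Finset.sum_mul]
        apply Finset.sum_congr rfl
        intro i _
        rw [ite_mul, zero_mul]
      rw [e2, Finset.sum_comm]
      apply Finset.sum_congr rfl
      intro i _
      rw [Finset.sum_ite_eq (Finset.univ.image key) (key i) (fun p => β i * (x - p.1)^p.2)]
      rw [if_pos (Finset.mem_image_of_mem key (Finset.mem_univ i))]
      have h1 : (key i).1 = -(y i) := rfl
      have h2 : (key i).2 = e i := rfl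
      rw [h1, h2]
      ring_nf
    rw [hsum2]
    have h3 := heval x
    have e3 : (x - ((-1:ℝ), n).1) = x + 1 := by norm_num
    have e4 : (x - ((0:ℝ), n).1) = x := by norm_num
    rw [e3, e4]
    simp only []
    linarith [h3]
  have hcore := SLB.main_core T c n hcT hzero hp1T hp2T hcp1 hcp2 hsn htop
  have hfil : (T.filter (fun p => p.2 < n)).card ≤ l := by
    have hsub : T.filter (fun p => p.2 < n) ⊆ Finset.univ.image key := by
      intro p hp
      obtain ⟨hpT, hpn2⟩ := Finset.mem_filter.1 hp
      rw [hT] at hpT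
      rcases Finset.mem_union.1 hpT with h | h
      · exact Finset.filter_subset _ _ h
      · exfalso
        rcases Finset.mem_insert.1 h with h | h
        · subst h; simp at hpn2
        · rw [Finset.mem_singleton] at h; subst h; simp at hpn2
    calc (T.filter (fun p => p.2 < n)).card ≤ (Finset.univ.image key).card :=
          Finset.card_le_card hsub
      _ ≤ (Finset.univ : Finset (Fin l)).card := Finset.card_image_le
      _ = l := by simp
  omega
end
end

section
/- Every real polynomial f of degree d can be expressed as f(x) = Σ_{i=1}^l β_i (x+y_i)^{e_i} for some real constants β_i, y_i and natural-number exponents e_i ≤ d, with l ≤ ⌈(d+1)/2⌉. -/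
open Polynomial

private lemma aux_sum (d : ℕ) : ∀ f : Polynomial ℝ, f.degree ≤ d →
    ∃ l ≤ (d + 2) / 2, ∃ (β y : Fin l → ℝ) (e : Fin l → ℕ),
      (∀ i, e i ≤ d) ∧ f = ∑ i, C (β i) * (X + C (y i)) ^ (e i) := by
  induction d using Nat.strong_induction_on with
  | _ d IH =>
  intro f hf
  by_cases h0 : f.coeff d = 0
  · match d with
    | 0 =>
      have hf0 : f = 0 := by
        have h := Polynomial.eq_C_of_degree_le_zero hf
        rw [h, h0, map_zero]
      exact ⟨0, by norm_num, ![], ![], ![], by simp, by simp [hf0]⟩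
    | (k+1) =>
      have hf' : f.degree ≤ k := by
        rw [Polynomial.degree_le_iff_coeff_zero] at hf ⊢
        intro m hm
        have hm' : k < m := by exact_mod_cast hm
        rcases eq_or_lt_of_le (show k + 1 ≤ m by omega) with h | h
        · rw [← h]; exact h0
        · exact hf m (by exact_mod_cast h)
      obtain ⟨l, hl, β, y, e, he, hsum⟩ := IH k (by omega) f hf'
      exact ⟨l, by omega, β, y, e, fun i => le_trans (he i) (by omega), hsum⟩
  · rcases (show d = 0 ∨ 1 ≤ d by omega) with rfl | hd1
    · refine ⟨1, by norm_num, ![f.coeff 0], ![0], ![0], by simp, ?_⟩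
      simpa [Fin.sum_univ_one] using Polynomial.eq_C_of_degree_le_zero hf
    · set a := f.coeff d with ha
      set y₀ : ℝ := f.coeff (d - 1) / (d * a) with hy₀
      set g : Polynomial ℝ := f - C a * (X + C y₀) ^ d with hg
      have hcoeff : ∀ m : ℕ, d - 1 ≤ m → g.coeff m = 0 := by
        intro m hm
        rw [hg, Polynomial.coeff_sub, Polynomial.coeff_C_mul,
          Polynomial.coeff_X_add_C_pow]
        rcases lt_trichotomy m d with h | h | h
        · have hmd : m = d - 1 := by omega
          subst hmd
          have hch : d.choose (d - 1) = d := by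
            rw [← Nat.choose_symm (Nat.sub_le d 1)]
            have : d - (d - 1) = 1 := by omega
            rw [this, Nat.choose_one_right]
          have hd1' : d - (d - 1) = 1 := by omega
          rw [hch, hd1', pow_one, hy₀]
          have hdne : (d : ℝ) ≠ 0 := Nat.cast_ne_zero.mpr (by omega)
          field_simp
          ring
        · subst h
          simp [← ha]
        · have h1 : f.coeff m = 0 :=
            Polynomial.coeff_eq_zero_of_degree_lt
              (lt_of_le_of_lt hf (by exact_mod_cast h))
          have h2 : d.choose m = 0 := Nat.choose_eq_zero_of_lt h
          rw [h1, h2]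
          simp
      rcases eq_or_lt_of_le hd1 with hd | hd2
      · -- d = 1 : g = 0
        have hg0 : g = 0 := by
          ext m
          simpa using hcoeff m (by omega)
        rw [hg] at hg0
        refine ⟨1, by omega, ![a], ![y₀], ![d], by simp, ?_⟩
        simp only [Fin.sum_univ_one, Matrix.cons_val_fin_one]
        exact sub_eq_zero.mp hg0
      · -- d ≥ 2
        have hgdeg : g.degree ≤ ((d - 2 : ℕ) : WithBot ℕ) := by
          rw [Polynomial.degree_le_iff_coeff_zero]
          intro m hm
          have hm' : d - 2 < m := by exact_mod_cast hm
          exact hcoeff m (by omega)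
        obtain ⟨l, hl, β, y, e, he, hsum⟩ := IH (d - 2) (by omega) g hgdeg
        refine ⟨l + 1, by omega, Fin.cons a β, Fin.cons y₀ y, Fin.cons d e,
          ?_, ?_⟩
        · intro i
          refine Fin.cases ?_ ?_ i
          · simp
          · intro i; simpa using le_trans (he i) (by omega)
        · rw [Fin.sum_univ_succ]
          simp only [Fin.cons_zero, Fin.cons_succ]
          rw [← hsum, hg]
          ring

open Polynomial in
/-- **Proposition (upper bound).** Every real polynomial `f` of degree `d`
can be expressed as `f(x) = ∑_{i=1}^l β_i (x + y_i)^{e_i}` with exponents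
`e_i ≤ d` and `l ≤ ⌈(d+1)/2⌉` terms.  (In natural-number arithmetic,
`⌈(d+1)/2⌉ = (d+2)/2`.) -/
theorem sum_of_powers_upper_bound (d : ℕ) (f : Polynomial ℝ)
    (hf : f.degree = d) :
    ∃ l ≤ (d + 2) / 2, ∃ (β y : Fin l → ℝ) (e : Fin l → ℕ),
      (∀ i, e i ≤ d) ∧ f = ∑ i, C (β i) * (X + C (y i)) ^ (e i) := by
  exact aux_sum d f (le_of_eq hf)
end
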